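/- arXiv:1502.04782 — 8 statements merged into one kernel-verified Lean document; each statement's English description precedes it below -/
import Mathlib

section
/- Every finite lattice with at most seven elements is dismantlable. -/
/-!
Every element of a finite lattice is the join of the join-irreducible elements below it, so
`n ≤ 2 ^ |J|` for the set `J` of join-irreducibles, and dually `n ≤ 2 ^ |M|` for the
meet-irreducibles. An element `z` can be deleted from a lattice, leaving a sublattice, exactly
when it is join- and meet-irreducible in the weak sense where `⊥` and `⊤` count as
irreducible. If no element of a lattice with `n ≥ 2` elements is deletable, then `J`, `M`,
`{⊥}` and `{⊤}` are pairwise disjoint, so `|J| + |M| + 2 ≤ n`; together with the two bounds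
this forces `n ≥ 8`. Hence a lattice with at most seven elements, and each of its sublattices,
can be dismantled one element at a time.
-/

/-- A finite lattice `L` with `n` elements is *dismantlable* if there is a chain
`L₁ ⊆ L₂ ⊆ ... ⊆ Lₙ = L` of sublattices of `L` with `|Lᵢ| = i` for `i = 1, ..., n`. -/
def Dismantlable (L : Type*) [Lattice L] [Finite L] : Prop :=
  ∃ c : ℕ → Set L,
    (∀ i, 1 ≤ i → i ≤ Nat.card L → IsSublattice (c i) ∧ Nat.card (c i) = i) ∧
    (∀ i, 1 ≤ i → i < Nat.card L → c i ⊆ c (i + 1)) ∧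
    c (Nat.card L) = Set.univ

/-- `x 0, y 0, x 1, y 1, ..., x (n-1), y (n-1)` form a *crown of order `2n`* (for `n ≥ 3`)
in a poset: the `2n` elements are pairwise distinct, and the only comparability relations
among them are `x i ≤ y i` and `x (i+1) ≤ y i` (indices mod `n`). -/
def IsCrown {P : Type*} [PartialOrder P] {n : ℕ} (x y : Fin n → P) : Prop :=
  3 ≤ n ∧ Function.Injective x ∧ Function.Injective y ∧
  (∀ i j, x i ≠ y j) ∧
  (∀ i j, x i ≤ x j → i = j) ∧
  (∀ i j, y i ≤ y j → i = j) ∧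
  (∀ i j, ¬ y i ≤ x j) ∧
  (∀ i j, x i ≤ y j ↔ (i = j ∨ (i : ℕ) = ((j : ℕ) + 1) % n))

open Set

section Irreducible

variable {α : Type*} [Lattice α]

lemma le_of_forall_supIrred_le [OrderBot α] [WellFoundedLT α] {a b : α}
    (h : ∀ j, SupIrred j → j ≤ a → j ≤ b) : a ≤ b := by
  obtain ⟨s, rfl, hs⟩ := exists_supIrred_decomposition a
  exact Finset.sup_le fun j hj => h j (hs hj) (Finset.le_sup (f := id) hj)

lemma card_le_two_pow_ncard_supIrred [Finite α] :
    Nat.card α ≤ 2 ^ {a : α | SupIrred a}.ncard := by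
  cases isEmpty_or_nonempty α
  · simp
  have := Fintype.ofFinite α
  let := Fintype.toOrderBot α
  set I := {a : α | SupIrred a}
  let below : α → Set α := fun a => {j | SupIrred j ∧ j ≤ a}
  have below_injective : Function.Injective below := by
    have key : ∀ a b, below a = below b → a ≤ b := fun a b hab =>
      le_of_forall_supIrred_le fun j hj hja => (show j ∈ below b from hab ▸ ⟨hj, hja⟩).2
    exact fun a b hab => le_antisymm (key a b hab) (key b a hab.symm)
  calc Nat.card α = (below '' univ).ncard := by
        rw [ncard_image_of_injective _ below_injective, ncard_univ]
    _ ≤ (𝒫 I).ncard := ncard_le_ncard (image_subset_iff.2 fun a _ j hj => hj.1)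
    _ = 2 ^ I.ncard := ncard_powerset I

lemma card_le_two_pow_ncard_infIrred [Finite α] :
    Nat.card α ≤ 2 ^ {a : α | InfIrred a}.ncard :=
  card_le_two_pow_ncard_supIrred (α := αᵒᵈ)

lemma supClosed_compl_singleton {z : α} (hz : IsMin z ∨ SupIrred z) :
    SupClosed ({z}ᶜ : Set α) := by
  intro a ha b hb hab
  rcases hz with hmin | hirr
  · exact ha (le_antisymm (hab ▸ le_sup_left) (hmin (hab ▸ le_sup_left)))
  · exact (hirr.2 hab).elim ha hb

lemma infClosed_compl_singleton {z : α} (hz : IsMax z ∨ InfIrred z) :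
    InfClosed ({z}ᶜ : Set α) := by
  intro a ha b hb hab
  rcases hz with hmax | hirr
  · exact ha (le_antisymm (hmax (hab ▸ inf_le_left)) (hab ▸ inf_le_left))
  · exact (hirr.2 hab).elim ha hb

lemma exists_isSublattice_compl_singleton [Finite α] [Nonempty α] (h : Nat.card α ≤ 7) :
    ∃ z : α, IsSublattice ({z}ᶜ : Set α) := by
  by_contra! hnone
  have not_deletable (z : α) (hJ : IsMin z ∨ SupIrred z) (hM : IsMax z ∨ InfIrred z) : False :=
    hnone z ⟨supClosed_compl_singleton hJ, infClosed_compl_singleton hM⟩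
  have := Fintype.ofFinite α
  let := Fintype.toBoundedOrder α
  set J := {a : α | SupIrred a}
  set M := {a : α | InfIrred a}
  have hJM : Disjoint J M := disjoint_left.2 fun z hJ hM => not_deletable z (.inr hJ) (.inr hM)
  have hbot_top : ⊥ ≠ (⊤ : α) := fun h =>
    not_deletable ⊥ (.inl isMin_bot) (.inl (h ▸ isMax_top))
  have hends : Disjoint (J ∪ M) {⊥, ⊤} := by
    refine disjoint_left.2 fun z hz hz' => ?_
    rcases hz' with rfl | rfl
    · exact hz.elim not_supIrred_bot fun hM => not_deletable ⊥ (.inl isMin_bot) (.inr hM)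
    · exact hz.elim (fun hJ => not_deletable ⊤ (.inr hJ) (.inl isMax_top)) not_infIrred_top
  have hcount : J.ncard + M.ncard + 2 ≤ Nat.card α := by
    rw [← ncard_union_eq hJM, ← ncard_pair hbot_top, ← ncard_union_eq hends]
    exact ncard_le_card _
  have hJcard := card_le_two_pow_ncard_supIrred (α := α)
  have hMcard := card_le_two_pow_ncard_infIrred (α := α)
  have : J.ncard ≤ 5 := by omega
  have : M.ncard ≤ 5 := by omega
  interval_cases J.ncard <;> interval_cases M.ncard <;> omega

end Irreducible

lemma IsSublattice.exists_isSublattice_diff_singleton {α : Type*} [Lattice α] [Finite α]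
    {S : Set α} (hS : IsSublattice S) (hne : S.Nonempty) (h : S.ncard ≤ 7) :
    ∃ z ∈ S, IsSublattice (S \ {z}) := by
  let T : Sublattice α := ⟨S, hS.supClosed, hS.infClosed⟩
  have : Nonempty T := hne.to_subtype
  obtain ⟨z, hz⟩ := exists_isSublattice_compl_singleton (α := T)
    ((Nat.card_coe_set_eq S).trans_le h)
  refine ⟨z, z.2, ?_⟩
  have := hz.image T.subtype
  rwa [Sublattice.coe_subtype, image_val_compl, image_singleton] at this

theorem Dismantlable.of_forall_exists_isSublattice_diff_singleton (L : Type*) [Lattice L]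
    [Finite L]
    (h : ∀ S : Set L, IsSublattice S → S.Nonempty → ∃ z ∈ S, IsSublattice (S \ {z})) :
    Dismantlable L := by
  cases isEmpty_or_nonempty L
  · have hn : Nat.card L = 0 := Nat.card_of_isEmpty
    exact ⟨fun _ => univ, fun i _ _ => by omega, fun i _ _ => by omega, rfl⟩
  choose! z hzS hz using h
  set n := Nat.card L
  let peel : Set L → Set L := fun S => S \ {z S}
  have peel_iterate (j : ℕ) (hj : j ≤ n) :
      IsSublattice (peel^[j] univ) ∧ (peel^[j] univ).ncard = n - j := by
    induction j with
    | zero => exact ⟨isSublattice_univ, ncard_univ L⟩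
    | succ j ih =>
      obtain ⟨hS, hcard⟩ := ih (by omega)
      have hne : (peel^[j] univ).Nonempty := nonempty_of_ncard_ne_zero (by omega)
      rw [Function.iterate_succ_apply']
      refine ⟨hz _ hS hne, ?_⟩
      rw [ncard_sdiff_singleton_of_mem (hzS _ hS hne), hcard]
      omega
  refine ⟨fun i => peel^[n - i] univ, fun i _ hi => ?_, fun i _ hi => ?_, by simp [n]⟩
  · obtain ⟨hS, hcard⟩ := peel_iterate (n - i) (by omega)
    refine ⟨hS, ?_⟩
    rw [Nat.card_coe_set_eq, hcard]
    omega
  · show peel^[n - i] univ ⊆ peel^[n - (i + 1)] univ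
    rw [show n - i = n - (i + 1) + 1 by omega, Function.iterate_succ_apply']
    exact sdiff_subset

/-- Every finite lattice with at most seven elements is dismantlable. -/
theorem stmt0 (L : Type*) [Lattice L] [Finite L] (h : Nat.card L ≤ 7) :
    Dismantlable L :=
  Dismantlable.of_forall_exists_isSublattice_diff_singleton L fun _ hS hne =>
    hS.exists_isSublattice_diff_singleton hne ((ncard_le_card _).trans h)
end

section
/- Every sublattice of a finite dismantlable lattice is dismantlable. -/
open Set

inductive IsDismantlable {L : Type*} [Lattice L] : Set L → Prop
  | empty : IsDismantlable ∅
  | extend {a : L} {A : Set L} :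
      IsDismantlable A → IsSublattice (insert a A) → IsDismantlable (insert a A)

namespace IsDismantlable

variable {L M : Type*} [Lattice L] [Lattice M]

theorem preimage {F : Type*} [FunLike F M L] [LatticeHomClass F M L] (f : F)
    (hf : Function.Injective f) {A : Set L} (hA : IsDismantlable A) :
    IsDismantlable (f ⁻¹' A) := by
  induction hA with
  | empty => exact empty
  | @extend a A _ hsub ih =>
    by_cases ha : a ∈ range f
    · obtain ⟨b, rfl⟩ := ha
      have hpre : f ⁻¹' insert (f b) A = insert b (f ⁻¹' A) := by
        ext x; simp [hf.eq_iff]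
      rw [hpre]
      exact ih.extend (hpre ▸ hsub.preimage f)
    · have hpre : f ⁻¹' insert a A = f ⁻¹' A := by
        ext x; simp only [mem_preimage, mem_insert_iff, or_iff_right_iff_imp]
        exact fun hx => absurd ⟨x, hx⟩ ha
      rwa [hpre]

theorem of_chain [Finite L] {c : ℕ → Set L} {n : ℕ}
    (hc : ∀ i, 1 ≤ i → i ≤ n → IsSublattice (c i) ∧ (c i).ncard = i)
    (hmono : ∀ i, 1 ≤ i → i < n → c i ⊆ c (i + 1)) {i : ℕ} (hi : 1 ≤ i) (hin : i ≤ n) :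
    IsDismantlable (c i) := by
  induction i, hi using Nat.le_induction with
  | base =>
    obtain ⟨hsub, hcard⟩ := hc 1 le_rfl hin
    obtain ⟨a, ha⟩ := ncard_eq_one.1 hcard
    rw [ha, ← insert_empty_eq] at hsub ⊢
    exact empty.extend hsub
  | succ i hi ih =>
    obtain ⟨hsub, hcard⟩ := hc (i + 1) (by omega) hin
    obtain ⟨a, -, hins⟩ := (exists_eq_insert_iff_ncard (t := c (i + 1))).2
      ⟨hmono i hi (by omega), by rw [hcard, (hc i hi (by omega)).2]⟩
    rw [← hins] at hsub ⊢
    exact (ih (by omega)).extend hsub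

theorem exists_chain [Finite L] {A : Set L} (hA : IsDismantlable A) :
    ∃ c : ℕ → Set L,
      (∀ i, 1 ≤ i → i ≤ A.ncard → IsSublattice (c i) ∧ (c i).ncard = i) ∧
      (∀ i, 1 ≤ i → i < A.ncard → c i ⊆ c (i + 1)) ∧
      c A.ncard = A := by
  induction hA with
  | empty =>
    refine ⟨fun _ => ∅, fun i hi h0 => absurd h0 ?_, fun i hi h0 => absurd h0 ?_, rfl⟩ <;>
      simp only [ncard_empty] <;> omega
  | @extend a A _ hsub ih =>
    by_cases ha : a ∈ A
    · rwa [insert_eq_of_mem ha]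
    obtain ⟨c, hc, hmono, htop⟩ := ih
    rw [ncard_insert_of_notMem ha]
    refine ⟨fun i => if i ≤ A.ncard then c i else insert a A, ?_, ?_, ?_⟩
    · intro i hi hin
      dsimp only
      split_ifs with h
      · exact hc i hi h
      · exact ⟨hsub, by rw [ncard_insert_of_notMem ha]; omega⟩
    · intro i hi hin
      dsimp only
      rw [if_pos (by omega)]
      split_ifs with h
      · exact hmono i hi (by omega)
      · obtain rfl : i = A.ncard := by omega
        rw [htop]
        exact subset_insert a A
    · simp

end IsDismantlable

theorem dismantlable_iff_isDismantlable_univ {L : Type*} [Lattice L] [Finite L] :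
    Dismantlable L ↔ IsDismantlable (univ : Set L) := by
  simp only [Dismantlable, Nat.card_coe_set_eq]
  rw [← ncard_univ]
  constructor
  · rintro ⟨c, hc, hmono, htop⟩
    rcases (univ : Set L).eq_empty_or_nonempty with h | h
    · exact h ▸ IsDismantlable.empty
    · exact htop ▸ IsDismantlable.of_chain hc hmono h.ncard_pos le_rfl
  · exact IsDismantlable.exists_chain

/-- Every sublattice of a finite dismantlable lattice is dismantlable. -/
theorem stmt1 {L : Type*} [Lattice L] [Finite L] (hL : Dismantlable L)
    (S : Sublattice L) : Dismantlable S := by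
  rw [dismantlable_iff_isDismantlable_univ] at hL ⊢
  simpa using hL.preimage S.subtype Subtype.val_injective
end

section
/- If L is a finite dismantlable lattice and f : L → M is a surjective lattice homomorphism onto a lattice M, then M is dismantlable. -/
/-!
Reading the chain of a dismantling from the bottom up, a finite lattice is dismantlable iff it
is exhausted by an increasing sequence of sublattices that starts with at most one element and
gains at most one element per step. Images of sublattices under a lattice homomorphism are
sublattices, so the image of such a sequence under a surjective homomorphism is again one.
Conversely, from a sequence with steps of size at most one, a chain with steps of size exactly
one is recovered by keeping, for each `j`, the first term with at least `j` elements.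
-/

open Set

structure IsSublatticeExhaustion {α : Type*} [Lattice α] (s : ℕ → Set α) : Prop where
  isSublattice : ∀ i, IsSublattice (s i)
  subsingleton_zero : (s 0).Subsingleton
  subset_succ : ∀ i, s i ⊆ s (i + 1)
  subsingleton_succ_sdiff : ∀ i, (s (i + 1) \ s i).Subsingleton
  exists_eq_univ : ∃ n, s n = univ

namespace IsSublatticeExhaustion

variable {α β : Type*} [Lattice α] [Lattice β] {s : ℕ → Set α}

theorem image (hs : IsSublatticeExhaustion s) (f : LatticeHom α β)
    (hf : Function.Surjective f) : IsSublatticeExhaustion (fun i => f '' s i) where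
  isSublattice i := (hs.isSublattice i).image f
  subsingleton_zero := hs.subsingleton_zero.image f
  subset_succ i := image_mono (hs.subset_succ i)
  subsingleton_succ_sdiff i := by
    refine ((hs.subsingleton_succ_sdiff i).image f).anti ?_
    rintro _ ⟨⟨x, hx, rfl⟩, hfx⟩
    exact ⟨x, ⟨hx, fun hx' => hfx ⟨x, hx', rfl⟩⟩, rfl⟩
  exists_eq_univ := by
    obtain ⟨n, hn⟩ := hs.exists_eq_univ
    exact ⟨n, by rw [hn, image_univ, hf.range_eq]⟩

theorem ncard_succ_le [Finite α] (hs : IsSublatticeExhaustion s) (i : ℕ) :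
    (s (i + 1)).ncard ≤ (s i).ncard + 1 := by
  have h := le_ncard_sdiff (s i) (s (i + 1))
  have h1 := ncard_le_one_iff_subsingleton.mpr (hs.subsingleton_succ_sdiff i)
  omega

end IsSublatticeExhaustion

/-- A discrete intermediate value theorem. -/
theorem Nat.apply_sInf_setOf_le_apply_eq {g : ℕ → ℕ} {j : ℕ} (h0 : g 0 ≤ j)
    (hstep : ∀ i, g (i + 1) ≤ g i + 1) (hj : ∃ i, j ≤ g i) :
    g (sInf {i | j ≤ g i}) = j := by
  have hmem : j ≤ g (sInf {i | j ≤ g i}) := Nat.sInf_mem hj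
  rcases hi : sInf {i | j ≤ g i} with _ | k
  · rw [hi] at hmem
    omega
  · have hk : ¬ j ≤ g k := Nat.notMem_of_lt_sInf (s := {i | j ≤ g i}) (by omega)
    rw [hi] at hmem
    have := hstep k
    omega

theorem Dismantlable.exists_isSublatticeExhaustion {L : Type*} [Lattice L] [Finite L]
    (hL : Dismantlable L) : ∃ s : ℕ → Set L, IsSublatticeExhaustion s := by
  obtain ⟨c, hc, hsucc, huniv⟩ := hL
  set n := Nat.card L
  have hncard (i : ℕ) (h1 : 1 ≤ i) (hn : i ≤ n) : (c i).ncard = i := by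
    rw [← Nat.card_coe_set_eq, (hc i h1 hn).2]
  set s : ℕ → Set L := fun i => if i + 1 ≤ n then c (i + 1) else univ
  have hs_of_le {i : ℕ} (h : i + 1 ≤ n) : s i = c (i + 1) := if_pos h
  have hs_succ_of_not_le {i : ℕ} (h : ¬ i + 2 ≤ n) : s (i + 1) = univ := if_neg h
  have hs_of_not_le {i : ℕ} (h : ¬ i + 2 ≤ n) : s i = univ := by
    by_cases h' : i + 1 ≤ n
    · rw [hs_of_le h', show i + 1 = n by omega, huniv]
    · exact if_neg h'
  refine ⟨s, fun i => ?_, ?_, fun i => ?_, fun i => ?_, n, if_neg (by omega)⟩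
  · by_cases h : i + 1 ≤ n
    · exact hs_of_le h ▸ (hc _ le_add_self h).1
    · exact hs_of_not_le (i := i) (by omega) ▸ isSublattice_univ
  · rw [← ncard_le_one_iff_subsingleton]
    by_cases h : 1 ≤ n
    · rw [hs_of_le h, hncard 1 le_rfl h]
    · rw [hs_of_not_le (by omega), ncard_univ]
      omega
  · by_cases h : i + 2 ≤ n
    · rw [hs_of_le (i := i) (by omega), hs_of_le h]
      exact hsucc (i + 1) le_add_self h
    · exact hs_succ_of_not_le h ▸ subset_univ _
  · by_cases h : i + 2 ≤ n
    · rw [hs_of_le (i := i) (by omega), hs_of_le h, ← ncard_le_one_iff_subsingleton,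
        ncard_sdiff (hsucc (i + 1) le_add_self h), hncard _ le_add_self h,
        hncard _ le_add_self (by omega)]
      omega
    · rw [hs_of_not_le h, hs_succ_of_not_le h, Set.sdiff_self]
      exact subsingleton_empty

theorem Dismantlable.of_isSublatticeExhaustion {L : Type*} [Lattice L] [Finite L]
    {s : ℕ → Set L} (hs : IsSublatticeExhaustion s) : Dismantlable L := by
  have hj : ∀ j ≤ Nat.card L, ∃ i, j ≤ (s i).ncard := fun j hjL => by
    obtain ⟨n, hn⟩ := hs.exists_eq_univ
    exact ⟨n, by rwa [hn, ncard_univ]⟩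
  have hcard (j : ℕ) (h1 : 1 ≤ j) (hjL : j ≤ Nat.card L) :
      (s (sInf {i | j ≤ (s i).ncard})).ncard = j :=
    Nat.apply_sInf_setOf_le_apply_eq
      ((ncard_le_one_iff_subsingleton.mpr hs.subsingleton_zero).trans h1) hs.ncard_succ_le
      (hj j hjL)
  refine ⟨fun j => s (sInf {i | j ≤ (s i).ncard}), fun j h1 hjL => ?_, fun j h1 hjL => ?_, ?_⟩
  · exact ⟨hs.isSublattice _, by rw [Nat.card_coe_set_eq, hcard j h1 hjL]⟩
  · refine monotone_nat_of_le_succ hs.subset_succ (Nat.sInf_le ?_)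
    exact Nat.le_of_succ_le (Nat.sInf_mem (s := {i | j + 1 ≤ (s i).ncard}) (hj (j + 1) hjL))
  · refine eq_of_subset_of_ncard_le (subset_univ _) ?_
    rw [ncard_univ]
    exact Nat.sInf_mem (hj _ le_rfl)

theorem dismantlable_iff_exists_isSublatticeExhaustion {L : Type*} [Lattice L] [Finite L] :
    Dismantlable L ↔ ∃ s : ℕ → Set L, IsSublatticeExhaustion s :=
  ⟨Dismantlable.exists_isSublatticeExhaustion, fun ⟨_, hs⟩ => .of_isSublatticeExhaustion hs⟩

/-- The image of a finite dismantlable lattice under a surjective lattice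
homomorphism is dismantlable. -/
theorem stmt2 {L M : Type*} [Lattice L] [Finite L] [Lattice M] [Finite M]
    (hL : Dismantlable L) (f : LatticeHom L M) (hf : Function.Surjective f) :
    Dismantlable M := by
  rw [dismantlable_iff_exists_isSublatticeExhaustion] at hL ⊢
  obtain ⟨s, hs⟩ := hL
  exact ⟨_, hs.image f hf⟩
end

section
/- If a finite dismantlable lattice is not a chain (i.e., it contains two incomparable elements), then it contains at least two incomparable doubly irreducible elements. -/
universe u
variable {L : Type u} [Lattice L] [Finite L]

omit [Finite L] in
lemma sup'_lt_of_ji {a : L} (hJI : ∀ b c : L, b < a → c < a → b ⊔ c ≠ a)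
    {s : Finset L} (hs : s.Nonempty) (h : ∀ b ∈ s, b < a) : s.sup' hs id < a := by
  induction hs using Finset.Nonempty.cons_induction with
  | singleton b => simpa using h b (by simp)
  | cons b s hb hs IH =>
    have hb' : b < a := h b (by simp)
    have hs' : s.sup' hs id < a := IH (fun c hc => h c (by simp [hc]))
    rw [Finset.sup'_cons]
    rcases lt_or_eq_of_le (sup_le hb'.le hs'.le) with h1 | h1
    · exact h1
    · exact absurd h1 (hJI _ _ hb' hs')

omit [Finite L] in
lemma lt_inf'_of_mi {a : L} (hMI : ∀ b c : L, a < b → a < c → b ⊓ c ≠ a)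
    {s : Finset L} (hs : s.Nonempty) (h : ∀ b ∈ s, a < b) : a < s.inf' hs id := by
  induction hs using Finset.Nonempty.cons_induction with
  | singleton b => simpa using h b (by simp)
  | cons b s hb hs IH =>
    have hb' : a < b := h b (by simp)
    have hs' : a < s.inf' hs id := IH (fun c hc => h c (by simp [hc]))
    rw [Finset.inf'_cons]
    rcases lt_or_eq_of_le (le_inf hb'.le hs'.le) with h1 | h1
    · exact h1
    · exact absurd h1.symm (hMI _ _ hb' hs')

lemma exists_max_below {a : L} (hJI : ∀ b c : L, b < a → c < a → b ⊔ c ≠ a)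
    {b0 : L} (hb0 : b0 < a) : ∃ u, u < a ∧ ∀ b, b < a → b ≤ u := by
  classical
  have : Fintype L := Fintype.ofFinite L
  let s := Finset.univ.filter (· < a)
  have hs : s.Nonempty := ⟨b0, by simp [s, hb0]⟩
  exact ⟨s.sup' hs id, sup'_lt_of_ji hJI hs (by simp [s]),
    fun b hb => Finset.le_sup' (f := id) (by simp [s, hb])⟩

lemma exists_min_above {a : L} (hMI : ∀ b c : L, a < b → a < c → b ⊓ c ≠ a)
    {b0 : L} (hb0 : a < b0) : ∃ v, a < v ∧ ∀ b, a < b → v ≤ b := by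
  classical
  have : Fintype L := Fintype.ofFinite L
  let s := Finset.univ.filter (a < ·)
  have hs : s.Nonempty := ⟨b0, by simp [s, hb0]⟩
  exact ⟨s.inf' hs id, lt_inf'_of_mi hMI hs (by simp [s]),
    fun b hb => Finset.inf'_le (f := id) (by simp [s, hb])⟩


def DblIrr {L : Type u} [Lattice L] (x : L) : Prop :=
  (∀ a b : L, a < x → b < x → a ⊔ b ≠ x) ∧ (∀ a b : L, x < a → x < b → a ⊓ b ≠ x)

lemma main_aux (n : ℕ) : ∀ {L : Type u} [Lattice L] [Finite L], Nat.card L = n →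
    Dismantlable L → (∃ a b : L, ¬ a ≤ b ∧ ¬ b ≤ a) →
    ∃ x y : L, ¬ x ≤ y ∧ ¬ y ≤ x ∧ DblIrr x ∧ DblIrr y := by
  induction n using Nat.strong_induction_on with
  | _ n IH =>
  intro L _ _ hn hL h
  classical
  obtain ⟨c, hc1, hc2, hc3⟩ := hL
  rw [hn] at hc1 hc2 hc3
  obtain ⟨p₀, q₀, hpq, hqp⟩ := h
  have hn2 : 2 ≤ n := by
    rw [← hn]
    exact Finite.one_lt_card_iff_nontrivial.mpr ⟨⟨p₀, q₀, fun e => hpq (e ▸ le_refl _)⟩⟩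
  -- chain monotonicity
  have hmono : ∀ j i, 1 ≤ i → i ≤ j → j ≤ n → c i ⊆ c j := by
    intro j
    induction j with
    | zero => intro i h1 hij _; omega
    | succ j IHj =>
      intro i h1 hij hjn
      rcases eq_or_lt_of_le hij with rfl | hlt
      · exact subset_rfl
      · exact (IHj i h1 (by omega) (by omega)).trans (hc2 j (by omega) (by omega))
  obtain ⟨hs_sub, hs_card⟩ := hc1 (n - 1) (by omega) (by omega)
  set s : Set L := c (n - 1) with hs_def
  -- the missing element a
  have hcomp : sᶜ.ncard = 1 := by
    have h1 : s.ncard = n - 1 := by rw [← Nat.card_coe_set_eq]; exact hs_card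
    have h2 := Set.ncard_add_ncard_compl s
    omega
  obtain ⟨a, ha⟩ := Set.ncard_eq_one.mp hcomp
  have haS : a ∉ s := by
    have : a ∈ sᶜ := by rw [ha]; rfl
    exact this
  have hmem : ∀ x : L, x ≠ a → x ∈ s := by
    intro x hx
    by_contra h'
    have : x ∈ ({a} : Set L) := by rw [← ha]; exact h'
    exact hx this
  -- a is doubly irreducible
  have haJI : ∀ b c' : L, b < a → c' < a → b ⊔ c' ≠ a := by
    intro b c' hb hc' he
    have := hs_sub.supClosed (hmem b hb.ne) (hmem c' hc'.ne)
    rw [he] at this; exact haS this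
  have haMI : ∀ b c' : L, a < b → a < c' → b ⊓ c' ≠ a := by
    intro b c' hb hc' he
    have := hs_sub.infClosed (hmem b hb.ne') (hmem c' hc'.ne')
    rw [he] at this; exact haS this
  -- lattice structure on the subtype
  letI : Lattice ↥s := Subtype.lattice
    (fun x y hx hy => hs_sub.supClosed hx hy) (fun x y hx hy => hs_sub.infClosed hx hy)
  have coe_sup : ∀ p q : ↥s, ((p ⊔ q : ↥s) : L) = ↑p ⊔ ↑q := fun p q => rfl
  have coe_inf : ∀ p q : ↥s, ((p ⊓ q : ↥s) : L) = ↑p ⊓ ↑q := fun p q => rfl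
  by_cases hchain : ∃ p q : ↥s, ¬ p ≤ q ∧ ¬ q ≤ p
  · -- the sublattice is not a chain: recurse
    have hcard_s : Nat.card ↥s = n - 1 := hs_card
    have hdism : Dismantlable ↥s := by
      refine ⟨fun i => {p : ↥s | ↑p ∈ c i}, ?_, ?_, ?_⟩
      · intro i h1 hi
        rw [hcard_s] at hi
        obtain ⟨hsub, hcard⟩ := hc1 i h1 (by omega)
        constructor
        · constructor
          · intro p hp q hq
            show ((p ⊔ q : ↥s) : L) ∈ c i
            rw [coe_sup]; exact hsub.supClosed hp hq
          · intro p hp q hq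
            show ((p ⊓ q : ↥s) : L) ∈ c i
            rw [coe_inf]; exact hsub.infClosed hp hq
        · have hsubS : c i ⊆ s := hmono (n - 1) i h1 hi (by omega)
          have e : {p : ↥s | ↑p ∈ c i} ≃ ↥(c i) :=
            { toFun := fun p => ⟨↑p.1, p.2⟩
              invFun := fun x => ⟨⟨↑x, hsubS x.2⟩, x.2⟩
              left_inv := fun p => rfl
              right_inv := fun x => rfl }
          rw [Nat.card_congr e]; exact hcard
      · intro i h1 hi
        rw [hcard_s] at hi
        intro p hp
        exact hc2 i h1 (by omega) hp
      · rw [hcard_s]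
        ext p
        simpa using p.2
    obtain ⟨x, y, hxy, hyx, ⟨hxJ, hxM⟩, ⟨hyJ, hyM⟩⟩ :=
      IH (n - 1) (by omega) hcard_s hdism hchain
    -- key transfer lemmas
    have key_ji : ∀ z : ↥s, (∀ p q : ↥s, p < z → q < z → p ⊔ q ≠ z) →
        ¬ (∀ b c0 : L, b < ↑z → c0 < ↑z → b ⊔ c0 ≠ (z : L)) →
        a < ↑z ∧ ∀ b, a < b → (z : L) ≤ b := by
      intro z hzJ hfail
      push_neg at hfail
      obtain ⟨b, c0, hb, hc0, hbc⟩ := hfail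
      -- one of b, c0 is a
      have hone : ∃ w, w ≠ a ∧ w < (z : L) ∧ a ⊔ w = (z : L) := by
        by_cases hba : b = a
        · subst hba
          refine ⟨c0, ?_, hc0, hbc⟩
          intro he; subst he
          rw [sup_idem] at hbc
          exact haS (hbc ▸ z.2)
        · by_cases hca : c0 = a
          · subst hca
            exact ⟨b, hba, hb, by rwa [sup_comm]⟩
          · exfalso
            have hp : (⟨b, hmem b hba⟩ : ↥s) < z := Subtype.coe_lt_coe.mp hb
            have hq : (⟨c0, hmem c0 hca⟩ : ↥s) < z := Subtype.coe_lt_coe.mp hc0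
            exact hzJ _ _ hp hq (Subtype.ext (by rw [coe_sup]; exact hbc))
      obtain ⟨w, hwa, hwz, hwe⟩ := hone
      have haz : a < (z : L) := by
        rcases lt_or_eq_of_le (le_sup_left.trans hwe.le) with h' | h'
        · exact h'
        · exact absurd h' (fun e => haS (e ▸ z.2))
      obtain ⟨v, hav, hvmin⟩ := exists_min_above haMI haz
      have hvz : v ≤ (z : L) := hvmin _ haz
      have hve : v ⊔ w = (z : L) :=
        le_antisymm (sup_le hvz hwz.le) (by rw [← hwe]; exact sup_le_sup_right hav.le w)
      have hv_eq : v = (z : L) := by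
        by_contra hne
        have hvlt : v < (z : L) := lt_of_le_of_ne hvz hne
        have hp : (⟨v, hmem v hav.ne'⟩ : ↥s) < z := Subtype.coe_lt_coe.mp hvlt
        have hq : (⟨w, hmem w hwa⟩ : ↥s) < z := Subtype.coe_lt_coe.mp hwz
        exact hzJ _ _ hp hq (Subtype.ext (by rw [coe_sup]; exact hve))
      exact ⟨haz, fun b hab => hv_eq ▸ hvmin b hab⟩
    have key_mi : ∀ z : ↥s, (∀ p q : ↥s, z < p → z < q → p ⊓ q ≠ z) →
        ¬ (∀ b c0 : L, (z : L) < b → (z : L) < c0 → b ⊓ c0 ≠ (z : L)) →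
        (z : L) < a ∧ ∀ b, b < a → b ≤ (z : L) := by
      intro z hzM hfail
      push_neg at hfail
      obtain ⟨b, c0, hb, hc0, hbc⟩ := hfail
      have hone : ∃ w, w ≠ a ∧ (z : L) < w ∧ a ⊓ w = (z : L) := by
        by_cases hba : b = a
        · subst hba
          refine ⟨c0, ?_, hc0, hbc⟩
          intro he; subst he
          rw [inf_idem] at hbc
          exact haS (hbc ▸ z.2)
        · by_cases hca : c0 = a
          · subst hca
            exact ⟨b, hba, hb, by rwa [inf_comm]⟩
          · exfalso
            have hp : z < (⟨b, hmem b hba⟩ : ↥s) := Subtype.coe_lt_coe.mp hb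
            have hq : z < (⟨c0, hmem c0 hca⟩ : ↥s) := Subtype.coe_lt_coe.mp hc0
            exact hzM _ _ hp hq (Subtype.ext (by rw [coe_inf]; exact hbc))
      obtain ⟨w, hwa, hwz, hwe⟩ := hone
      have haz : (z : L) < a := by
        have hle : (z : L) ≤ a := hwe ▸ inf_le_left
        rcases lt_or_eq_of_le hle with h' | h'
        · exact h'
        · exact absurd h' (fun e => haS (e ▸ z.2))
      obtain ⟨u, hua, humax⟩ := exists_max_below haJI haz
      have huz : (z : L) ≤ u := humax _ haz
      have hue : u ⊓ w = (z : L) :=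
        le_antisymm (by rw [← hwe]; exact inf_le_inf_right w hua.le) (le_inf huz hwz.le)
      have hu_eq : u = (z : L) := by
        by_contra hne
        have hult : (z : L) < u := lt_of_le_of_ne huz (Ne.symm hne)
        have hp : z < (⟨u, hmem u hua.ne⟩ : ↥s) := Subtype.coe_lt_coe.mp hult
        have hq : z < (⟨w, hmem w hwa⟩ : ↥s) := Subtype.coe_lt_coe.mp hwz
        exact hzM _ _ hp hq (Subtype.ext (by rw [coe_inf]; exact hue))
      exact ⟨haz, fun b hab => hu_eq ▸ humax b hab⟩
    -- case analysis on whether x, y stay doubly irreducible in L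
    have hxy' : ¬ (x : L) ≤ (y : L) := fun h' => hxy (Subtype.coe_le_coe.mp h')
    have hyx' : ¬ (y : L) ≤ (x : L) := fun h' => hyx (Subtype.coe_le_coe.mp h')
    by_cases hxg : DblIrr (x : L)
    · by_cases hyg : DblIrr (y : L)
      · exact ⟨x, y, hxy', hyx', hxg, hyg⟩
      · -- y fails; output (a, x)
        rw [DblIrr, not_and_or] at hyg
        have hax : ¬ a ≤ (x : L) ∧ ¬ (x : L) ≤ a := by
          rcases hyg with hf | hf
          · obtain ⟨hay, hymin⟩ := key_ji y hyJ hf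
            constructor
            · intro h'
              rcases lt_or_eq_of_le h' with h' | h'
              · exact hyx' (hymin _ h')
              · exact haS (h' ▸ x.2)
            · intro h'
              exact hxy' (h'.trans hay.le)
          · obtain ⟨hya, hymax⟩ := key_mi y hyM hf
            constructor
            · intro h'
              exact hyx' (hya.le.trans h')
            · intro h'
              rcases lt_or_eq_of_le h' with h' | h'
              · exact hxy' (hymax _ h')
              · exact haS (h' ▸ x.2)
        exact ⟨a, x, hax.1, hax.2, ⟨haJI, haMI⟩, hxg⟩
    · -- x fails; output (a, y); need y to be good
      rw [DblIrr, not_and_or] at hxg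
      have hay : ¬ a ≤ (y : L) ∧ ¬ (y : L) ≤ a := by
        rcases hxg with hf | hf
        · obtain ⟨hax, hxmin⟩ := key_ji x hxJ hf
          constructor
          · intro h'
            rcases lt_or_eq_of_le h' with h' | h'
            · exact hxy' (hxmin _ h')
            · exact haS (h' ▸ y.2)
          · intro h'
            exact hyx' (h'.trans hax.le)
        · obtain ⟨hxa, hxmax⟩ := key_mi x hxM hf
          constructor
          · intro h'
            exact hxy' (hxa.le.trans h')
          · intro h'
            rcases lt_or_eq_of_le h' with h' | h'
            · exact hyx' (hxmax _ h')
            · exact haS (h' ▸ y.2)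
      have hyg : DblIrr (y : L) := by
        constructor
        · intro b c0 hb hc0 he
          have hf : ¬ (∀ b c0 : L, b < ↑y → c0 < ↑y → b ⊔ c0 ≠ (y : L)) := by
            push_neg; exact ⟨b, c0, hb, hc0, he⟩
          obtain ⟨hay', _⟩ := key_ji y hyJ hf
          exact hay.1 hay'.le
        · intro b c0 hb hc0 he
          have hf : ¬ (∀ b c0 : L, (y : L) < b → (y : L) < c0 → b ⊓ c0 ≠ (y : L)) := by
            push_neg; exact ⟨b, c0, hb, hc0, he⟩
          obtain ⟨hya', _⟩ := key_mi y hyM hf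
          exact hay.2 hya'.le
      exact ⟨a, y, hay.1, hay.2, ⟨haJI, haMI⟩, hyg⟩
  · -- the sublattice is a chain
    have hch : ∀ p q : L, p ∈ s → q ∈ s → p ≤ q ∨ q ≤ p := by
      intro p q hp hq
      by_contra hco
      push_neg at hco
      exact hchain ⟨⟨p, hp⟩, ⟨q, hq⟩,
        fun h' => hco.1 (Subtype.coe_le_coe.mpr h'),
        fun h' => hco.2 (Subtype.coe_le_coe.mpr h')⟩
    -- one of p₀, q₀ is a; the other, b, is in s and incomparable with a
    have hone : ∃ b, b ∈ s ∧ ¬ a ≤ b ∧ ¬ b ≤ a := by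
      by_cases hp : p₀ = a
      · subst hp
        exact ⟨q₀, hmem q₀ (fun e => hqp (le_of_eq e)), hpq, hqp⟩
      · by_cases hq : q₀ = a
        · subst hq
          exact ⟨p₀, hmem p₀ hp, hqp, hpq⟩
        · exact absurd (hch p₀ q₀ (hmem p₀ hp) (hmem q₀ hq)) (by tauto)
    obtain ⟨b, hbs, hab, hba⟩ := hone
    refine ⟨a, b, hab, hba, ⟨haJI, haMI⟩, ?_, ?_⟩
    · intro u w hu hw he
      by_cases hua : u = a
      · exact hab (hua ▸ hu.le)
      · by_cases hwa : w = a
        · exact hab (hwa ▸ hw.le)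
        · rcases hch u w (hmem u hua) (hmem w hwa) with h' | h'
          · rw [sup_eq_right.mpr h'] at he; exact hw.ne he
          · rw [sup_eq_left.mpr h'] at he; exact hu.ne he
    · intro u w hu hw he
      by_cases hua : u = a
      · exact hba (hua ▸ hu.le)
      · by_cases hwa : w = a
        · exact hba (hwa ▸ hw.le)
        · rcases hch u w (hmem u hua) (hmem w hwa) with h' | h'
          · rw [inf_eq_left.mpr h'] at he; exact hu.ne' he
          · rw [inf_eq_right.mpr h'] at he; exact hw.ne' he

/-- If a finite dismantlable lattice is not a chain, then it contains at least two
incomparable doubly irreducible elements. -/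
theorem stmt3 {L : Type*} [Lattice L] [Finite L] (hL : Dismantlable L)
    (h : ∃ a b : L, ¬ a ≤ b ∧ ¬ b ≤ a) :
    ∃ x y : L, ¬ x ≤ y ∧ ¬ y ≤ x ∧
      (∀ a b : L, a < x → b < x → a ⊔ b ≠ x) ∧
      (∀ a b : L, x < a → x < b → a ⊓ b ≠ x) ∧
      (∀ a b : L, a < y → b < y → a ⊔ b ≠ y) ∧
      (∀ a b : L, y < a → y < b → a ⊓ b ≠ y) := by
  obtain ⟨x, y, hxy, hyx, ⟨hxJ, hxM⟩, ⟨hyJ, hyM⟩⟩ := main_aux (Nat.card L) rfl hL h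
  exact ⟨x, y, hxy, hyx, hxJ, hxM, hyJ, hyM⟩
end

section
/- A finite modular lattice is dismantlable if and only if it contains no sublattice isomorphic to the boolean lattice 2³ (the lattice of subsets of a three-element set). -/
open Set
set_option linter.unusedSectionVars false
set_option maxHeartbeats 4000000


section ChainTheory

/-- Maximal chains (by covers) from `x` to `y`, tracked by length. -/
inductive MC {M : Type*} [PartialOrder M] : M → M → ℕ → Prop
  | refl (x : M) : MC x x 0
  | cons {x y z : M} {n : ℕ} (h : x ⋖ y) (t : MC y z n) : MC x z (n + 1)

variable {M : Type*} [Lattice M] [Finite M] [IsModularLattice M]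

theorem MC.le {x y : M} {n : ℕ} (h : MC x y n) : x ≤ y := by
  induction h with
  | refl => exact le_rfl
  | cons h t ih => exact h.le.trans ih

theorem MC.concat {x y z : M} {n m : ℕ} (h : MC x y n) (h' : MC y z m) :
    MC x z (n + m) := by
  induction h with
  | refl => simpa using h'
  | cons hc t ih => rw [Nat.add_right_comm]; exact MC.cons hc (ih h')

theorem mc_exists : ∀ (x y : M), x ≤ y → ∃ n, MC x y n := by
  have hwf := (Finite.to_wellFoundedGT (α := M)).wf
  intro x
  induction x using hwf.induction with
  | _ x ih =>
    intro y hxy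
    rcases eq_or_lt_of_le hxy with rfl | hlt
    · exact ⟨0, MC.refl x⟩
    · obtain ⟨u, hu, humin⟩ := (Finite.to_wellFoundedLT (α := M)).wf.has_min
        {z | x < z ∧ z ≤ y} ⟨y, hlt, le_rfl⟩
      have hcov : x ⋖ u := by
        refine ⟨hu.1, fun w hw hw2 => ?_⟩
        exact humin w ⟨hw, hw2.le.trans hu.2⟩ hw2
      obtain ⟨n, hn⟩ := ih u hu.1 y hu.2
      exact ⟨n + 1, by simpa [Nat.add_comm] using MC.cons hcov hn⟩

theorem mc_unique : ∀ (n : ℕ) {x y : M} {m : ℕ}, MC x y n → MC x y m → m = n := by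
  intro n
  induction n with
  | zero =>
    intro x y m h1 h2
    cases h1
    cases h2 with
    | refl => rfl
    | cons hc t => exact absurd (hc.lt.trans_le t.le) (lt_irrefl _)
  | succ n ih =>
    intro x y m h1 h2
    cases h1 with
    | cons hc1 t1 =>
      rename_i z
      cases h2 with
      | refl => exact absurd (hc1.lt.trans_le t1.le) (lt_irrefl _)
      | cons hc2 t2 =>
        rename_i w m'
        by_cases hzw : z = w
        · subst hzw
          rw [ih t1 t2]
        · have hinf : z ⊓ w = x := by
            have hle : x ≤ z ⊓ w := le_inf hc1.lt.le hc2.lt.le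
            rcases hle.lt_or_eq with h | h
            · exfalso
              have h1 : z ⊓ w < z := by
                rcases (inf_le_left : z ⊓ w ≤ z).lt_or_eq with h' | h'
                · exact h'
                · exfalso
                  have hzw2 : z < w :=
                    lt_of_le_of_ne (by rw [← h']; exact inf_le_right) hzw
                  exact hc2.2 hc1.lt hzw2
              exact hc1.2 h h1
            · exact h.symm
          have hcz : z ⋖ z ⊔ w := covBy_sup_of_inf_covBy_right (hinf ▸ hc2)
          have hcw : w ⋖ z ⊔ w := covBy_sup_of_inf_covBy_left (hinf ▸ hc1)
          obtain ⟨k, hk⟩ := mc_exists (z ⊔ w) y (sup_le t1.le t2.le)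
          have hk1 : k + 1 = n := ih t1 (MC.cons hcz hk)
          have hwn : MC w y n := hk1 ▸ MC.cons hcw hk
          rw [ih hwn t2]

/-- Transport a maximal chain in `[x ⊓ y, x]` to one in `[y, x ⊔ y]` by joining with `y`. -/
theorem mc_sup_transport {x y : M} :
    ∀ {c d : M} {n : ℕ}, MC c d n → x ⊓ y ≤ c → d ≤ x → MC (c ⊔ y) (d ⊔ y) n := by
  intro c d n h
  induction h with
  | refl => intro _ _; exact MC.refl _
  | cons hc t ih =>
    rename_i c c' d' n'
    intro h1 h2
    have h1' : x ⊓ y ≤ c' := h1.trans hc.lt.le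
    have hd' : c' ≤ x := t.le.trans h2
    have key : (c ⊔ y) ⊓ c' = c := by
      rw [sup_inf_assoc_of_le y hc.lt.le]
      have h3 : y ⊓ c' ≤ c := le_trans (inf_le_inf_left y hd') (by rwa [inf_comm])
      exact sup_eq_left.mpr h3
    have hcov2 : (c ⊔ y) ⋖ (c ⊔ y) ⊔ c' :=
      covBy_sup_of_inf_covBy_right (a := c ⊔ y) (b := c') (by rw [key]; exact hc)
    have he : (c ⊔ y) ⊔ c' = c' ⊔ y := by
      rw [sup_right_comm, sup_eq_right.mpr hc.lt.le]
    exact MC.cons (he ▸ hcov2) (ih h1' h2)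

end ChainTheory

section HeightTheory
variable {M : Type*} [Lattice M] [Finite M] [IsModularLattice M]

theorem exists_height [Nonempty M] :
    ∃ h : M → ℕ, (∀ x y : M, x ⋖ y → h y = h x + 1) ∧
      (∀ x y : M, x < y → h x < h y) ∧
      (∀ x y : M, h x + h y = h (x ⊔ y) + h (x ⊓ y)) := by
  have hbot : ∃ b0 : M, ∀ x, b0 ≤ x := by
    haveI := Fintype.ofFinite M
    exact ⟨(Finset.univ : Finset M).inf' Finset.univ_nonempty id,
      fun x => Finset.inf'_le id (Finset.mem_univ x)⟩
  obtain ⟨b0, hb0⟩ := hbot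
  have spec : ∀ x : M, MC b0 x ((mc_exists b0 x (hb0 x)).choose) :=
    fun x => (mc_exists b0 x (hb0 x)).choose_spec
  set h : M → ℕ := fun x => (mc_exists b0 x (hb0 x)).choose with hh
  have hadd : ∀ (x y : M) (k : ℕ), MC x y k → h y = h x + k := by
    intro x y k hk
    exact mc_unique (h x + k) ((spec x).concat hk) (spec y)
  refine ⟨h, ?_, ?_, ?_⟩
  · intro x y hc
    exact hadd x y 1 (MC.cons hc (MC.refl y))
  · intro x y hxy
    obtain ⟨k, hk⟩ := mc_exists x y hxy.le
    have hk0 : k ≠ 0 := by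
      intro h0
      subst h0
      cases hk
      exact lt_irrefl _ hxy
    have := hadd x y k hk
    omega
  · intro x y
    obtain ⟨k, hk⟩ := mc_exists (x ⊓ y) x inf_le_left
    have h1 : h x = h (x ⊓ y) + k := hadd _ _ _ hk
    have htr : MC ((x ⊓ y) ⊔ y) (x ⊔ y) k := mc_sup_transport hk le_rfl le_rfl
    rw [sup_eq_right.mpr inf_le_right] at htr
    have h2 : h (x ⊔ y) = h y + k := hadd _ _ _ htr
    omega

end HeightTheory


section Cube
variable {M : Type*} [Lattice M] [IsModularLattice M]

theorem bfree_no_dual_triple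
    (hB : ¬ ∃ f : LatticeHom (Set (Fin 3)) M, Function.Injective f)
    (z0 z1 z2 t : M)
    (h0 : z0 ⊔ (z1 ⊓ z2) = t) (h1 : z1 ⊔ (z0 ⊓ z2) = t) (h2 : z2 ⊔ (z0 ⊓ z1) = t)
    (l0 : z0 < t) (l1 : z1 < t) (l2 : z2 < t) : False := by
  classical
  apply hB
  have hu01 : z0 ⊔ z1 = t := by
    refine le_antisymm (sup_le l0.le l1.le) ?_
    rw [← h1]
    exact sup_le le_sup_right (inf_le_left.trans le_sup_left)
  have hu02 : z0 ⊔ z2 = t := by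
    refine le_antisymm (sup_le l0.le l2.le) ?_
    rw [← h2]
    exact sup_le le_sup_right (inf_le_left.trans le_sup_left)
  have hu12 : z1 ⊔ z2 = t := by
    refine le_antisymm (sup_le l1.le l2.le) ?_
    rw [← h2]
    exact sup_le le_sup_right (inf_le_of_right_le le_sup_left)
  have hx0 : z0 ⊔ (z1 ⊓ z2) = t := h0
  have hx1 : z1 ⊔ (z0 ⊓ z2) = t := h1
  have hx2 : z2 ⊔ (z0 ⊓ z1) = t := h2
  have hm0 : (z0 ⊓ z1) ⊔ (z0 ⊓ z2) = z0 := by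
    have hmod := sup_inf_assoc_of_le (x := z0 ⊓ z1) z2 (inf_le_left : z0 ⊓ z1 ≤ z0)
    rw [sup_comm (z0 ⊓ z1) z2, h2, inf_comm z2 z0] at hmod
    rw [← hmod, inf_comm t z0, inf_eq_left.mpr l0.le]
  have hm1 : (z0 ⊓ z1) ⊔ (z1 ⊓ z2) = z1 := by
    have hmod := sup_inf_assoc_of_le (x := z0 ⊓ z1) z2 (inf_le_right : z0 ⊓ z1 ≤ z1)
    rw [sup_comm (z0 ⊓ z1) z2, h2, inf_comm z2 z1] at hmod
    rw [← hmod, inf_comm t z1, inf_eq_left.mpr l1.le]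
  have hm2 : (z0 ⊓ z2) ⊔ (z1 ⊓ z2) = z2 := by
    have hmod := sup_inf_assoc_of_le (x := z0 ⊓ z2) z1 (inf_le_right : z0 ⊓ z2 ≤ z2)
    rw [sup_comm (z0 ⊓ z2) z1, h1] at hmod
    rw [← hmod, inf_comm t z2, inf_eq_left.mpr l2.le]
  have se_0_0 : t ⊔ t = t := by apply le_antisymm <;> simp [le_inf_iff, sup_le_iff, l0.le, l1.le, l2.le, inf_le_of_left_le, inf_le_of_right_le, le_sup_left, le_sup_right, le_sup_of_le_left, le_sup_of_le_right, inf_le_left, inf_le_right]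
  have ie_0_0 : t ⊓ t = t := by apply le_antisymm <;> simp [le_inf_iff, sup_le_iff, l0.le, l1.le, l2.le, inf_le_of_left_le, inf_le_of_right_le, le_sup_left, le_sup_right, le_sup_of_le_left, le_sup_of_le_right, inf_le_left, inf_le_right]
  have se_0_1 : t ⊔ z0 = t := by apply le_antisymm <;> simp [le_inf_iff, sup_le_iff, l0.le, l1.le, l2.le, inf_le_of_left_le, inf_le_of_right_le, le_sup_left, le_sup_right, le_sup_of_le_left, le_sup_of_le_right, inf_le_left, inf_le_right]
  have ie_0_1 : t ⊓ z0 = z0 := by apply le_antisymm <;> simp [le_inf_iff, sup_le_iff, l0.le, l1.le, l2.le, inf_le_of_left_le, inf_le_of_right_le, le_sup_left, le_sup_right, le_sup_of_le_left, le_sup_of_le_right, inf_le_left, inf_le_right]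
  have se_0_2 : t ⊔ z1 = t := by apply le_antisymm <;> simp [le_inf_iff, sup_le_iff, l0.le, l1.le, l2.le, inf_le_of_left_le, inf_le_of_right_le, le_sup_left, le_sup_right, le_sup_of_le_left, le_sup_of_le_right, inf_le_left, inf_le_right]
  have ie_0_2 : t ⊓ z1 = z1 := by apply le_antisymm <;> simp [le_inf_iff, sup_le_iff, l0.le, l1.le, l2.le, inf_le_of_left_le, inf_le_of_right_le, le_sup_left, le_sup_right, le_sup_of_le_left, le_sup_of_le_right, inf_le_left, inf_le_right]
  have se_0_4 : t ⊔ z2 = t := by apply le_antisymm <;> simp [le_inf_iff, sup_le_iff, l0.le, l1.le, l2.le, inf_le_of_left_le, inf_le_of_right_le, le_sup_left, le_sup_right, le_sup_of_le_left, le_sup_of_le_right, inf_le_left, inf_le_right]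
  have ie_0_4 : t ⊓ z2 = z2 := by apply le_antisymm <;> simp [le_inf_iff, sup_le_iff, l0.le, l1.le, l2.le, inf_le_of_left_le, inf_le_of_right_le, le_sup_left, le_sup_right, le_sup_of_le_left, le_sup_of_le_right, inf_le_left, inf_le_right]
  have se_0_3 : t ⊔ (z0 ⊓ z1) = t := by apply le_antisymm <;> simp [le_inf_iff, sup_le_iff, l0.le, l1.le, l2.le, inf_le_of_left_le, inf_le_of_right_le, le_sup_left, le_sup_right, le_sup_of_le_left, le_sup_of_le_right, inf_le_left, inf_le_right]
  have ie_0_3 : t ⊓ (z0 ⊓ z1) = z0 ⊓ z1 := by apply le_antisymm <;> simp [le_inf_iff, sup_le_iff, l0.le, l1.le, l2.le, inf_le_of_left_le, inf_le_of_right_le, le_sup_left, le_sup_right, le_sup_of_le_left, le_sup_of_le_right, inf_le_left, inf_le_right]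
  have se_0_5 : t ⊔ (z0 ⊓ z2) = t := by apply le_antisymm <;> simp [le_inf_iff, sup_le_iff, l0.le, l1.le, l2.le, inf_le_of_left_le, inf_le_of_right_le, le_sup_left, le_sup_right, le_sup_of_le_left, le_sup_of_le_right, inf_le_left, inf_le_right]
  have ie_0_5 : t ⊓ (z0 ⊓ z2) = z0 ⊓ z2 := by apply le_antisymm <;> simp [le_inf_iff, sup_le_iff, l0.le, l1.le, l2.le, inf_le_of_left_le, inf_le_of_right_le, le_sup_left, le_sup_right, le_sup_of_le_left, le_sup_of_le_right, inf_le_left, inf_le_right]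
  have se_0_6 : t ⊔ (z1 ⊓ z2) = t := by apply le_antisymm <;> simp [le_inf_iff, sup_le_iff, l0.le, l1.le, l2.le, inf_le_of_left_le, inf_le_of_right_le, le_sup_left, le_sup_right, le_sup_of_le_left, le_sup_of_le_right, inf_le_left, inf_le_right]
  have ie_0_6 : t ⊓ (z1 ⊓ z2) = z1 ⊓ z2 := by apply le_antisymm <;> simp [le_inf_iff, sup_le_iff, l0.le, l1.le, l2.le, inf_le_of_left_le, inf_le_of_right_le, le_sup_left, le_sup_right, le_sup_of_le_left, le_sup_of_le_right, inf_le_left, inf_le_right]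
  have se_0_7 : t ⊔ (z0 ⊓ (z1 ⊓ z2)) = t := by apply le_antisymm <;> simp [le_inf_iff, sup_le_iff, l0.le, l1.le, l2.le, inf_le_of_left_le, inf_le_of_right_le, le_sup_left, le_sup_right, le_sup_of_le_left, le_sup_of_le_right, inf_le_left, inf_le_right]
  have ie_0_7 : t ⊓ (z0 ⊓ (z1 ⊓ z2)) = z0 ⊓ (z1 ⊓ z2) := by apply le_antisymm <;> simp [le_inf_iff, sup_le_iff, l0.le, l1.le, l2.le, inf_le_of_left_le, inf_le_of_right_le, le_sup_left, le_sup_right, le_sup_of_le_left, le_sup_of_le_right, inf_le_left, inf_le_right]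
  have se_1_0 : z0 ⊔ t = t := by apply le_antisymm <;> simp [le_inf_iff, sup_le_iff, l0.le, l1.le, l2.le, inf_le_of_left_le, inf_le_of_right_le, le_sup_left, le_sup_right, le_sup_of_le_left, le_sup_of_le_right, inf_le_left, inf_le_right]
  have ie_1_0 : z0 ⊓ t = z0 := by apply le_antisymm <;> simp [le_inf_iff, sup_le_iff, l0.le, l1.le, l2.le, inf_le_of_left_le, inf_le_of_right_le, le_sup_left, le_sup_right, le_sup_of_le_left, le_sup_of_le_right, inf_le_left, inf_le_right]
  have se_1_1 : z0 ⊔ z0 = z0 := by apply le_antisymm <;> simp [le_inf_iff, sup_le_iff, l0.le, l1.le, l2.le, inf_le_of_left_le, inf_le_of_right_le, le_sup_left, le_sup_right, le_sup_of_le_left, le_sup_of_le_right, inf_le_left, inf_le_right]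
  have ie_1_1 : z0 ⊓ z0 = z0 := by apply le_antisymm <;> simp [le_inf_iff, sup_le_iff, l0.le, l1.le, l2.le, inf_le_of_left_le, inf_le_of_right_le, le_sup_left, le_sup_right, le_sup_of_le_left, le_sup_of_le_right, inf_le_left, inf_le_right]
  have se_1_2 : z0 ⊔ z1 = t := hu01
  have ie_1_2 : z0 ⊓ z1 = z0 ⊓ z1 := by apply le_antisymm <;> simp [le_inf_iff, sup_le_iff, l0.le, l1.le, l2.le, inf_le_of_left_le, inf_le_of_right_le, le_sup_left, le_sup_right, le_sup_of_le_left, le_sup_of_le_right, inf_le_left, inf_le_right]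
  have se_1_4 : z0 ⊔ z2 = t := hu02
  have ie_1_4 : z0 ⊓ z2 = z0 ⊓ z2 := by apply le_antisymm <;> simp [le_inf_iff, sup_le_iff, l0.le, l1.le, l2.le, inf_le_of_left_le, inf_le_of_right_le, le_sup_left, le_sup_right, le_sup_of_le_left, le_sup_of_le_right, inf_le_left, inf_le_right]
  have se_1_3 : z0 ⊔ (z0 ⊓ z1) = z0 := by apply le_antisymm <;> simp [le_inf_iff, sup_le_iff, l0.le, l1.le, l2.le, inf_le_of_left_le, inf_le_of_right_le, le_sup_left, le_sup_right, le_sup_of_le_left, le_sup_of_le_right, inf_le_left, inf_le_right]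
  have ie_1_3 : z0 ⊓ (z0 ⊓ z1) = z0 ⊓ z1 := by apply le_antisymm <;> simp [le_inf_iff, sup_le_iff, l0.le, l1.le, l2.le, inf_le_of_left_le, inf_le_of_right_le, le_sup_left, le_sup_right, le_sup_of_le_left, le_sup_of_le_right, inf_le_left, inf_le_right]
  have se_1_5 : z0 ⊔ (z0 ⊓ z2) = z0 := by apply le_antisymm <;> simp [le_inf_iff, sup_le_iff, l0.le, l1.le, l2.le, inf_le_of_left_le, inf_le_of_right_le, le_sup_left, le_sup_right, le_sup_of_le_left, le_sup_of_le_right, inf_le_left, inf_le_right]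
  have ie_1_5 : z0 ⊓ (z0 ⊓ z2) = z0 ⊓ z2 := by apply le_antisymm <;> simp [le_inf_iff, sup_le_iff, l0.le, l1.le, l2.le, inf_le_of_left_le, inf_le_of_right_le, le_sup_left, le_sup_right, le_sup_of_le_left, le_sup_of_le_right, inf_le_left, inf_le_right]
  have se_1_6 : z0 ⊔ (z1 ⊓ z2) = t := hx0
  have ie_1_6 : z0 ⊓ (z1 ⊓ z2) = z0 ⊓ (z1 ⊓ z2) := by apply le_antisymm <;> simp [le_inf_iff, sup_le_iff, l0.le, l1.le, l2.le, inf_le_of_left_le, inf_le_of_right_le, le_sup_left, le_sup_right, le_sup_of_le_left, le_sup_of_le_right, inf_le_left, inf_le_right]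
  have se_1_7 : z0 ⊔ (z0 ⊓ (z1 ⊓ z2)) = z0 := by apply le_antisymm <;> simp [le_inf_iff, sup_le_iff, l0.le, l1.le, l2.le, inf_le_of_left_le, inf_le_of_right_le, le_sup_left, le_sup_right, le_sup_of_le_left, le_sup_of_le_right, inf_le_left, inf_le_right]
  have ie_1_7 : z0 ⊓ (z0 ⊓ (z1 ⊓ z2)) = z0 ⊓ (z1 ⊓ z2) := by apply le_antisymm <;> simp [le_inf_iff, sup_le_iff, l0.le, l1.le, l2.le, inf_le_of_left_le, inf_le_of_right_le, le_sup_left, le_sup_right, le_sup_of_le_left, le_sup_of_le_right, inf_le_left, inf_le_right]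
  have se_2_0 : z1 ⊔ t = t := by apply le_antisymm <;> simp [le_inf_iff, sup_le_iff, l0.le, l1.le, l2.le, inf_le_of_left_le, inf_le_of_right_le, le_sup_left, le_sup_right, le_sup_of_le_left, le_sup_of_le_right, inf_le_left, inf_le_right]
  have ie_2_0 : z1 ⊓ t = z1 := by apply le_antisymm <;> simp [le_inf_iff, sup_le_iff, l0.le, l1.le, l2.le, inf_le_of_left_le, inf_le_of_right_le, le_sup_left, le_sup_right, le_sup_of_le_left, le_sup_of_le_right, inf_le_left, inf_le_right]
  have se_2_1 : z1 ⊔ z0 = t := by rw [sup_comm]; exact hu01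
  have ie_2_1 : z1 ⊓ z0 = z0 ⊓ z1 := by apply le_antisymm <;> simp [le_inf_iff, sup_le_iff, l0.le, l1.le, l2.le, inf_le_of_left_le, inf_le_of_right_le, le_sup_left, le_sup_right, le_sup_of_le_left, le_sup_of_le_right, inf_le_left, inf_le_right]
  have se_2_2 : z1 ⊔ z1 = z1 := by apply le_antisymm <;> simp [le_inf_iff, sup_le_iff, l0.le, l1.le, l2.le, inf_le_of_left_le, inf_le_of_right_le, le_sup_left, le_sup_right, le_sup_of_le_left, le_sup_of_le_right, inf_le_left, inf_le_right]
  have ie_2_2 : z1 ⊓ z1 = z1 := by apply le_antisymm <;> simp [le_inf_iff, sup_le_iff, l0.le, l1.le, l2.le, inf_le_of_left_le, inf_le_of_right_le, le_sup_left, le_sup_right, le_sup_of_le_left, le_sup_of_le_right, inf_le_left, inf_le_right]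
  have se_2_4 : z1 ⊔ z2 = t := hu12
  have ie_2_4 : z1 ⊓ z2 = z1 ⊓ z2 := by apply le_antisymm <;> simp [le_inf_iff, sup_le_iff, l0.le, l1.le, l2.le, inf_le_of_left_le, inf_le_of_right_le, le_sup_left, le_sup_right, le_sup_of_le_left, le_sup_of_le_right, inf_le_left, inf_le_right]
  have se_2_3 : z1 ⊔ (z0 ⊓ z1) = z1 := by apply le_antisymm <;> simp [le_inf_iff, sup_le_iff, l0.le, l1.le, l2.le, inf_le_of_left_le, inf_le_of_right_le, le_sup_left, le_sup_right, le_sup_of_le_left, le_sup_of_le_right, inf_le_left, inf_le_right]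
  have ie_2_3 : z1 ⊓ (z0 ⊓ z1) = z0 ⊓ z1 := by apply le_antisymm <;> simp [le_inf_iff, sup_le_iff, l0.le, l1.le, l2.le, inf_le_of_left_le, inf_le_of_right_le, le_sup_left, le_sup_right, le_sup_of_le_left, le_sup_of_le_right, inf_le_left, inf_le_right]
  have se_2_5 : z1 ⊔ (z0 ⊓ z2) = t := hx1
  have ie_2_5 : z1 ⊓ (z0 ⊓ z2) = z0 ⊓ (z1 ⊓ z2) := by apply le_antisymm <;> simp [le_inf_iff, sup_le_iff, l0.le, l1.le, l2.le, inf_le_of_left_le, inf_le_of_right_le, le_sup_left, le_sup_right, le_sup_of_le_left, le_sup_of_le_right, inf_le_left, inf_le_right]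
  have se_2_6 : z1 ⊔ (z1 ⊓ z2) = z1 := by apply le_antisymm <;> simp [le_inf_iff, sup_le_iff, l0.le, l1.le, l2.le, inf_le_of_left_le, inf_le_of_right_le, le_sup_left, le_sup_right, le_sup_of_le_left, le_sup_of_le_right, inf_le_left, inf_le_right]
  have ie_2_6 : z1 ⊓ (z1 ⊓ z2) = z1 ⊓ z2 := by apply le_antisymm <;> simp [le_inf_iff, sup_le_iff, l0.le, l1.le, l2.le, inf_le_of_left_le, inf_le_of_right_le, le_sup_left, le_sup_right, le_sup_of_le_left, le_sup_of_le_right, inf_le_left, inf_le_right]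
  have se_2_7 : z1 ⊔ (z0 ⊓ (z1 ⊓ z2)) = z1 := by apply le_antisymm <;> simp [le_inf_iff, sup_le_iff, l0.le, l1.le, l2.le, inf_le_of_left_le, inf_le_of_right_le, le_sup_left, le_sup_right, le_sup_of_le_left, le_sup_of_le_right, inf_le_left, inf_le_right]
  have ie_2_7 : z1 ⊓ (z0 ⊓ (z1 ⊓ z2)) = z0 ⊓ (z1 ⊓ z2) := by apply le_antisymm <;> simp [le_inf_iff, sup_le_iff, l0.le, l1.le, l2.le, inf_le_of_left_le, inf_le_of_right_le, le_sup_left, le_sup_right, le_sup_of_le_left, le_sup_of_le_right, inf_le_left, inf_le_right]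
  have se_4_0 : z2 ⊔ t = t := by apply le_antisymm <;> simp [le_inf_iff, sup_le_iff, l0.le, l1.le, l2.le, inf_le_of_left_le, inf_le_of_right_le, le_sup_left, le_sup_right, le_sup_of_le_left, le_sup_of_le_right, inf_le_left, inf_le_right]
  have ie_4_0 : z2 ⊓ t = z2 := by apply le_antisymm <;> simp [le_inf_iff, sup_le_iff, l0.le, l1.le, l2.le, inf_le_of_left_le, inf_le_of_right_le, le_sup_left, le_sup_right, le_sup_of_le_left, le_sup_of_le_right, inf_le_left, inf_le_right]
  have se_4_1 : z2 ⊔ z0 = t := by rw [sup_comm]; exact hu02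
  have ie_4_1 : z2 ⊓ z0 = z0 ⊓ z2 := by apply le_antisymm <;> simp [le_inf_iff, sup_le_iff, l0.le, l1.le, l2.le, inf_le_of_left_le, inf_le_of_right_le, le_sup_left, le_sup_right, le_sup_of_le_left, le_sup_of_le_right, inf_le_left, inf_le_right]
  have se_4_2 : z2 ⊔ z1 = t := by rw [sup_comm]; exact hu12
  have ie_4_2 : z2 ⊓ z1 = z1 ⊓ z2 := by apply le_antisymm <;> simp [le_inf_iff, sup_le_iff, l0.le, l1.le, l2.le, inf_le_of_left_le, inf_le_of_right_le, le_sup_left, le_sup_right, le_sup_of_le_left, le_sup_of_le_right, inf_le_left, inf_le_right]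
  have se_4_4 : z2 ⊔ z2 = z2 := by apply le_antisymm <;> simp [le_inf_iff, sup_le_iff, l0.le, l1.le, l2.le, inf_le_of_left_le, inf_le_of_right_le, le_sup_left, le_sup_right, le_sup_of_le_left, le_sup_of_le_right, inf_le_left, inf_le_right]
  have ie_4_4 : z2 ⊓ z2 = z2 := by apply le_antisymm <;> simp [le_inf_iff, sup_le_iff, l0.le, l1.le, l2.le, inf_le_of_left_le, inf_le_of_right_le, le_sup_left, le_sup_right, le_sup_of_le_left, le_sup_of_le_right, inf_le_left, inf_le_right]
  have se_4_3 : z2 ⊔ (z0 ⊓ z1) = t := hx2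
  have ie_4_3 : z2 ⊓ (z0 ⊓ z1) = z0 ⊓ (z1 ⊓ z2) := by apply le_antisymm <;> simp [le_inf_iff, sup_le_iff, l0.le, l1.le, l2.le, inf_le_of_left_le, inf_le_of_right_le, le_sup_left, le_sup_right, le_sup_of_le_left, le_sup_of_le_right, inf_le_left, inf_le_right]
  have se_4_5 : z2 ⊔ (z0 ⊓ z2) = z2 := by apply le_antisymm <;> simp [le_inf_iff, sup_le_iff, l0.le, l1.le, l2.le, inf_le_of_left_le, inf_le_of_right_le, le_sup_left, le_sup_right, le_sup_of_le_left, le_sup_of_le_right, inf_le_left, inf_le_right]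
  have ie_4_5 : z2 ⊓ (z0 ⊓ z2) = z0 ⊓ z2 := by apply le_antisymm <;> simp [le_inf_iff, sup_le_iff, l0.le, l1.le, l2.le, inf_le_of_left_le, inf_le_of_right_le, le_sup_left, le_sup_right, le_sup_of_le_left, le_sup_of_le_right, inf_le_left, inf_le_right]
  have se_4_6 : z2 ⊔ (z1 ⊓ z2) = z2 := by apply le_antisymm <;> simp [le_inf_iff, sup_le_iff, l0.le, l1.le, l2.le, inf_le_of_left_le, inf_le_of_right_le, le_sup_left, le_sup_right, le_sup_of_le_left, le_sup_of_le_right, inf_le_left, inf_le_right]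
  have ie_4_6 : z2 ⊓ (z1 ⊓ z2) = z1 ⊓ z2 := by apply le_antisymm <;> simp [le_inf_iff, sup_le_iff, l0.le, l1.le, l2.le, inf_le_of_left_le, inf_le_of_right_le, le_sup_left, le_sup_right, le_sup_of_le_left, le_sup_of_le_right, inf_le_left, inf_le_right]
  have se_4_7 : z2 ⊔ (z0 ⊓ (z1 ⊓ z2)) = z2 := by apply le_antisymm <;> simp [le_inf_iff, sup_le_iff, l0.le, l1.le, l2.le, inf_le_of_left_le, inf_le_of_right_le, le_sup_left, le_sup_right, le_sup_of_le_left, le_sup_of_le_right, inf_le_left, inf_le_right]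
  have ie_4_7 : z2 ⊓ (z0 ⊓ (z1 ⊓ z2)) = z0 ⊓ (z1 ⊓ z2) := by apply le_antisymm <;> simp [le_inf_iff, sup_le_iff, l0.le, l1.le, l2.le, inf_le_of_left_le, inf_le_of_right_le, le_sup_left, le_sup_right, le_sup_of_le_left, le_sup_of_le_right, inf_le_left, inf_le_right]
  have se_3_0 : (z0 ⊓ z1) ⊔ t = t := by apply le_antisymm <;> simp [le_inf_iff, sup_le_iff, l0.le, l1.le, l2.le, inf_le_of_left_le, inf_le_of_right_le, le_sup_left, le_sup_right, le_sup_of_le_left, le_sup_of_le_right, inf_le_left, inf_le_right]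
  have ie_3_0 : (z0 ⊓ z1) ⊓ t = z0 ⊓ z1 := by apply le_antisymm <;> simp [le_inf_iff, sup_le_iff, l0.le, l1.le, l2.le, inf_le_of_left_le, inf_le_of_right_le, le_sup_left, le_sup_right, le_sup_of_le_left, le_sup_of_le_right, inf_le_left, inf_le_right]
  have se_3_1 : (z0 ⊓ z1) ⊔ z0 = z0 := by apply le_antisymm <;> simp [le_inf_iff, sup_le_iff, l0.le, l1.le, l2.le, inf_le_of_left_le, inf_le_of_right_le, le_sup_left, le_sup_right, le_sup_of_le_left, le_sup_of_le_right, inf_le_left, inf_le_right]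
  have ie_3_1 : (z0 ⊓ z1) ⊓ z0 = z0 ⊓ z1 := by apply le_antisymm <;> simp [le_inf_iff, sup_le_iff, l0.le, l1.le, l2.le, inf_le_of_left_le, inf_le_of_right_le, le_sup_left, le_sup_right, le_sup_of_le_left, le_sup_of_le_right, inf_le_left, inf_le_right]
  have se_3_2 : (z0 ⊓ z1) ⊔ z1 = z1 := by apply le_antisymm <;> simp [le_inf_iff, sup_le_iff, l0.le, l1.le, l2.le, inf_le_of_left_le, inf_le_of_right_le, le_sup_left, le_sup_right, le_sup_of_le_left, le_sup_of_le_right, inf_le_left, inf_le_right]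
  have ie_3_2 : (z0 ⊓ z1) ⊓ z1 = z0 ⊓ z1 := by apply le_antisymm <;> simp [le_inf_iff, sup_le_iff, l0.le, l1.le, l2.le, inf_le_of_left_le, inf_le_of_right_le, le_sup_left, le_sup_right, le_sup_of_le_left, le_sup_of_le_right, inf_le_left, inf_le_right]
  have se_3_4 : (z0 ⊓ z1) ⊔ z2 = t := by rw [sup_comm]; exact hx2
  have ie_3_4 : (z0 ⊓ z1) ⊓ z2 = z0 ⊓ (z1 ⊓ z2) := by apply le_antisymm <;> simp [le_inf_iff, sup_le_iff, l0.le, l1.le, l2.le, inf_le_of_left_le, inf_le_of_right_le, le_sup_left, le_sup_right, le_sup_of_le_left, le_sup_of_le_right, inf_le_left, inf_le_right]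
  have se_3_3 : (z0 ⊓ z1) ⊔ (z0 ⊓ z1) = z0 ⊓ z1 := by apply le_antisymm <;> simp [le_inf_iff, sup_le_iff, l0.le, l1.le, l2.le, inf_le_of_left_le, inf_le_of_right_le, le_sup_left, le_sup_right, le_sup_of_le_left, le_sup_of_le_right, inf_le_left, inf_le_right]
  have ie_3_3 : (z0 ⊓ z1) ⊓ (z0 ⊓ z1) = z0 ⊓ z1 := by apply le_antisymm <;> simp [le_inf_iff, sup_le_iff, l0.le, l1.le, l2.le, inf_le_of_left_le, inf_le_of_right_le, le_sup_left, le_sup_right, le_sup_of_le_left, le_sup_of_le_right, inf_le_left, inf_le_right]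
  have se_3_5 : (z0 ⊓ z1) ⊔ (z0 ⊓ z2) = z0 := hm0
  have ie_3_5 : (z0 ⊓ z1) ⊓ (z0 ⊓ z2) = z0 ⊓ (z1 ⊓ z2) := by apply le_antisymm <;> simp [le_inf_iff, sup_le_iff, l0.le, l1.le, l2.le, inf_le_of_left_le, inf_le_of_right_le, le_sup_left, le_sup_right, le_sup_of_le_left, le_sup_of_le_right, inf_le_left, inf_le_right]
  have se_3_6 : (z0 ⊓ z1) ⊔ (z1 ⊓ z2) = z1 := hm1
  have ie_3_6 : (z0 ⊓ z1) ⊓ (z1 ⊓ z2) = z0 ⊓ (z1 ⊓ z2) := by apply le_antisymm <;> simp [le_inf_iff, sup_le_iff, l0.le, l1.le, l2.le, inf_le_of_left_le, inf_le_of_right_le, le_sup_left, le_sup_right, le_sup_of_le_left, le_sup_of_le_right, inf_le_left, inf_le_right]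
  have se_3_7 : (z0 ⊓ z1) ⊔ (z0 ⊓ (z1 ⊓ z2)) = z0 ⊓ z1 := by apply le_antisymm <;> simp [le_inf_iff, sup_le_iff, l0.le, l1.le, l2.le, inf_le_of_left_le, inf_le_of_right_le, le_sup_left, le_sup_right, le_sup_of_le_left, le_sup_of_le_right, inf_le_left, inf_le_right]
  have ie_3_7 : (z0 ⊓ z1) ⊓ (z0 ⊓ (z1 ⊓ z2)) = z0 ⊓ (z1 ⊓ z2) := by apply le_antisymm <;> simp [le_inf_iff, sup_le_iff, l0.le, l1.le, l2.le, inf_le_of_left_le, inf_le_of_right_le, le_sup_left, le_sup_right, le_sup_of_le_left, le_sup_of_le_right, inf_le_left, inf_le_right]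
  have se_5_0 : (z0 ⊓ z2) ⊔ t = t := by apply le_antisymm <;> simp [le_inf_iff, sup_le_iff, l0.le, l1.le, l2.le, inf_le_of_left_le, inf_le_of_right_le, le_sup_left, le_sup_right, le_sup_of_le_left, le_sup_of_le_right, inf_le_left, inf_le_right]
  have ie_5_0 : (z0 ⊓ z2) ⊓ t = z0 ⊓ z2 := by apply le_antisymm <;> simp [le_inf_iff, sup_le_iff, l0.le, l1.le, l2.le, inf_le_of_left_le, inf_le_of_right_le, le_sup_left, le_sup_right, le_sup_of_le_left, le_sup_of_le_right, inf_le_left, inf_le_right]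
  have se_5_1 : (z0 ⊓ z2) ⊔ z0 = z0 := by apply le_antisymm <;> simp [le_inf_iff, sup_le_iff, l0.le, l1.le, l2.le, inf_le_of_left_le, inf_le_of_right_le, le_sup_left, le_sup_right, le_sup_of_le_left, le_sup_of_le_right, inf_le_left, inf_le_right]
  have ie_5_1 : (z0 ⊓ z2) ⊓ z0 = z0 ⊓ z2 := by apply le_antisymm <;> simp [le_inf_iff, sup_le_iff, l0.le, l1.le, l2.le, inf_le_of_left_le, inf_le_of_right_le, le_sup_left, le_sup_right, le_sup_of_le_left, le_sup_of_le_right, inf_le_left, inf_le_right]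
  have se_5_2 : (z0 ⊓ z2) ⊔ z1 = t := by rw [sup_comm]; exact hx1
  have ie_5_2 : (z0 ⊓ z2) ⊓ z1 = z0 ⊓ (z1 ⊓ z2) := by apply le_antisymm <;> simp [le_inf_iff, sup_le_iff, l0.le, l1.le, l2.le, inf_le_of_left_le, inf_le_of_right_le, le_sup_left, le_sup_right, le_sup_of_le_left, le_sup_of_le_right, inf_le_left, inf_le_right]
  have se_5_4 : (z0 ⊓ z2) ⊔ z2 = z2 := by apply le_antisymm <;> simp [le_inf_iff, sup_le_iff, l0.le, l1.le, l2.le, inf_le_of_left_le, inf_le_of_right_le, le_sup_left, le_sup_right, le_sup_of_le_left, le_sup_of_le_right, inf_le_left, inf_le_right]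
  have ie_5_4 : (z0 ⊓ z2) ⊓ z2 = z0 ⊓ z2 := by apply le_antisymm <;> simp [le_inf_iff, sup_le_iff, l0.le, l1.le, l2.le, inf_le_of_left_le, inf_le_of_right_le, le_sup_left, le_sup_right, le_sup_of_le_left, le_sup_of_le_right, inf_le_left, inf_le_right]
  have se_5_3 : (z0 ⊓ z2) ⊔ (z0 ⊓ z1) = z0 := by rw [sup_comm]; exact hm0
  have ie_5_3 : (z0 ⊓ z2) ⊓ (z0 ⊓ z1) = z0 ⊓ (z1 ⊓ z2) := by apply le_antisymm <;> simp [le_inf_iff, sup_le_iff, l0.le, l1.le, l2.le, inf_le_of_left_le, inf_le_of_right_le, le_sup_left, le_sup_right, le_sup_of_le_left, le_sup_of_le_right, inf_le_left, inf_le_right]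
  have se_5_5 : (z0 ⊓ z2) ⊔ (z0 ⊓ z2) = z0 ⊓ z2 := by apply le_antisymm <;> simp [le_inf_iff, sup_le_iff, l0.le, l1.le, l2.le, inf_le_of_left_le, inf_le_of_right_le, le_sup_left, le_sup_right, le_sup_of_le_left, le_sup_of_le_right, inf_le_left, inf_le_right]
  have ie_5_5 : (z0 ⊓ z2) ⊓ (z0 ⊓ z2) = z0 ⊓ z2 := by apply le_antisymm <;> simp [le_inf_iff, sup_le_iff, l0.le, l1.le, l2.le, inf_le_of_left_le, inf_le_of_right_le, le_sup_left, le_sup_right, le_sup_of_le_left, le_sup_of_le_right, inf_le_left, inf_le_right]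
  have se_5_6 : (z0 ⊓ z2) ⊔ (z1 ⊓ z2) = z2 := hm2
  have ie_5_6 : (z0 ⊓ z2) ⊓ (z1 ⊓ z2) = z0 ⊓ (z1 ⊓ z2) := by apply le_antisymm <;> simp [le_inf_iff, sup_le_iff, l0.le, l1.le, l2.le, inf_le_of_left_le, inf_le_of_right_le, le_sup_left, le_sup_right, le_sup_of_le_left, le_sup_of_le_right, inf_le_left, inf_le_right]
  have se_5_7 : (z0 ⊓ z2) ⊔ (z0 ⊓ (z1 ⊓ z2)) = z0 ⊓ z2 := by apply le_antisymm <;> simp [le_inf_iff, sup_le_iff, l0.le, l1.le, l2.le, inf_le_of_left_le, inf_le_of_right_le, le_sup_left, le_sup_right, le_sup_of_le_left, le_sup_of_le_right, inf_le_left, inf_le_right]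
  have ie_5_7 : (z0 ⊓ z2) ⊓ (z0 ⊓ (z1 ⊓ z2)) = z0 ⊓ (z1 ⊓ z2) := by apply le_antisymm <;> simp [le_inf_iff, sup_le_iff, l0.le, l1.le, l2.le, inf_le_of_left_le, inf_le_of_right_le, le_sup_left, le_sup_right, le_sup_of_le_left, le_sup_of_le_right, inf_le_left, inf_le_right]
  have se_6_0 : (z1 ⊓ z2) ⊔ t = t := by apply le_antisymm <;> simp [le_inf_iff, sup_le_iff, l0.le, l1.le, l2.le, inf_le_of_left_le, inf_le_of_right_le, le_sup_left, le_sup_right, le_sup_of_le_left, le_sup_of_le_right, inf_le_left, inf_le_right]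
  have ie_6_0 : (z1 ⊓ z2) ⊓ t = z1 ⊓ z2 := by apply le_antisymm <;> simp [le_inf_iff, sup_le_iff, l0.le, l1.le, l2.le, inf_le_of_left_le, inf_le_of_right_le, le_sup_left, le_sup_right, le_sup_of_le_left, le_sup_of_le_right, inf_le_left, inf_le_right]
  have se_6_1 : (z1 ⊓ z2) ⊔ z0 = t := by rw [sup_comm]; exact hx0
  have ie_6_1 : (z1 ⊓ z2) ⊓ z0 = z0 ⊓ (z1 ⊓ z2) := by apply le_antisymm <;> simp [le_inf_iff, sup_le_iff, l0.le, l1.le, l2.le, inf_le_of_left_le, inf_le_of_right_le, le_sup_left, le_sup_right, le_sup_of_le_left, le_sup_of_le_right, inf_le_left, inf_le_right]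
  have se_6_2 : (z1 ⊓ z2) ⊔ z1 = z1 := by apply le_antisymm <;> simp [le_inf_iff, sup_le_iff, l0.le, l1.le, l2.le, inf_le_of_left_le, inf_le_of_right_le, le_sup_left, le_sup_right, le_sup_of_le_left, le_sup_of_le_right, inf_le_left, inf_le_right]
  have ie_6_2 : (z1 ⊓ z2) ⊓ z1 = z1 ⊓ z2 := by apply le_antisymm <;> simp [le_inf_iff, sup_le_iff, l0.le, l1.le, l2.le, inf_le_of_left_le, inf_le_of_right_le, le_sup_left, le_sup_right, le_sup_of_le_left, le_sup_of_le_right, inf_le_left, inf_le_right]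
  have se_6_4 : (z1 ⊓ z2) ⊔ z2 = z2 := by apply le_antisymm <;> simp [le_inf_iff, sup_le_iff, l0.le, l1.le, l2.le, inf_le_of_left_le, inf_le_of_right_le, le_sup_left, le_sup_right, le_sup_of_le_left, le_sup_of_le_right, inf_le_left, inf_le_right]
  have ie_6_4 : (z1 ⊓ z2) ⊓ z2 = z1 ⊓ z2 := by apply le_antisymm <;> simp [le_inf_iff, sup_le_iff, l0.le, l1.le, l2.le, inf_le_of_left_le, inf_le_of_right_le, le_sup_left, le_sup_right, le_sup_of_le_left, le_sup_of_le_right, inf_le_left, inf_le_right]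
  have se_6_3 : (z1 ⊓ z2) ⊔ (z0 ⊓ z1) = z1 := by rw [sup_comm]; exact hm1
  have ie_6_3 : (z1 ⊓ z2) ⊓ (z0 ⊓ z1) = z0 ⊓ (z1 ⊓ z2) := by apply le_antisymm <;> simp [le_inf_iff, sup_le_iff, l0.le, l1.le, l2.le, inf_le_of_left_le, inf_le_of_right_le, le_sup_left, le_sup_right, le_sup_of_le_left, le_sup_of_le_right, inf_le_left, inf_le_right]
  have se_6_5 : (z1 ⊓ z2) ⊔ (z0 ⊓ z2) = z2 := by rw [sup_comm]; exact hm2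
  have ie_6_5 : (z1 ⊓ z2) ⊓ (z0 ⊓ z2) = z0 ⊓ (z1 ⊓ z2) := by apply le_antisymm <;> simp [le_inf_iff, sup_le_iff, l0.le, l1.le, l2.le, inf_le_of_left_le, inf_le_of_right_le, le_sup_left, le_sup_right, le_sup_of_le_left, le_sup_of_le_right, inf_le_left, inf_le_right]
  have se_6_6 : (z1 ⊓ z2) ⊔ (z1 ⊓ z2) = z1 ⊓ z2 := by apply le_antisymm <;> simp [le_inf_iff, sup_le_iff, l0.le, l1.le, l2.le, inf_le_of_left_le, inf_le_of_right_le, le_sup_left, le_sup_right, le_sup_of_le_left, le_sup_of_le_right, inf_le_left, inf_le_right]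
  have ie_6_6 : (z1 ⊓ z2) ⊓ (z1 ⊓ z2) = z1 ⊓ z2 := by apply le_antisymm <;> simp [le_inf_iff, sup_le_iff, l0.le, l1.le, l2.le, inf_le_of_left_le, inf_le_of_right_le, le_sup_left, le_sup_right, le_sup_of_le_left, le_sup_of_le_right, inf_le_left, inf_le_right]
  have se_6_7 : (z1 ⊓ z2) ⊔ (z0 ⊓ (z1 ⊓ z2)) = z1 ⊓ z2 := by apply le_antisymm <;> simp [le_inf_iff, sup_le_iff, l0.le, l1.le, l2.le, inf_le_of_left_le, inf_le_of_right_le, le_sup_left, le_sup_right, le_sup_of_le_left, le_sup_of_le_right, inf_le_left, inf_le_right]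
  have ie_6_7 : (z1 ⊓ z2) ⊓ (z0 ⊓ (z1 ⊓ z2)) = z0 ⊓ (z1 ⊓ z2) := by apply le_antisymm <;> simp [le_inf_iff, sup_le_iff, l0.le, l1.le, l2.le, inf_le_of_left_le, inf_le_of_right_le, le_sup_left, le_sup_right, le_sup_of_le_left, le_sup_of_le_right, inf_le_left, inf_le_right]
  have se_7_0 : (z0 ⊓ (z1 ⊓ z2)) ⊔ t = t := by apply le_antisymm <;> simp [le_inf_iff, sup_le_iff, l0.le, l1.le, l2.le, inf_le_of_left_le, inf_le_of_right_le, le_sup_left, le_sup_right, le_sup_of_le_left, le_sup_of_le_right, inf_le_left, inf_le_right]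
  have ie_7_0 : (z0 ⊓ (z1 ⊓ z2)) ⊓ t = z0 ⊓ (z1 ⊓ z2) := by apply le_antisymm <;> simp [le_inf_iff, sup_le_iff, l0.le, l1.le, l2.le, inf_le_of_left_le, inf_le_of_right_le, le_sup_left, le_sup_right, le_sup_of_le_left, le_sup_of_le_right, inf_le_left, inf_le_right]
  have se_7_1 : (z0 ⊓ (z1 ⊓ z2)) ⊔ z0 = z0 := by apply le_antisymm <;> simp [le_inf_iff, sup_le_iff, l0.le, l1.le, l2.le, inf_le_of_left_le, inf_le_of_right_le, le_sup_left, le_sup_right, le_sup_of_le_left, le_sup_of_le_right, inf_le_left, inf_le_right]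
  have ie_7_1 : (z0 ⊓ (z1 ⊓ z2)) ⊓ z0 = z0 ⊓ (z1 ⊓ z2) := by apply le_antisymm <;> simp [le_inf_iff, sup_le_iff, l0.le, l1.le, l2.le, inf_le_of_left_le, inf_le_of_right_le, le_sup_left, le_sup_right, le_sup_of_le_left, le_sup_of_le_right, inf_le_left, inf_le_right]
  have se_7_2 : (z0 ⊓ (z1 ⊓ z2)) ⊔ z1 = z1 := by apply le_antisymm <;> simp [le_inf_iff, sup_le_iff, l0.le, l1.le, l2.le, inf_le_of_left_le, inf_le_of_right_le, le_sup_left, le_sup_right, le_sup_of_le_left, le_sup_of_le_right, inf_le_left, inf_le_right]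
  have ie_7_2 : (z0 ⊓ (z1 ⊓ z2)) ⊓ z1 = z0 ⊓ (z1 ⊓ z2) := by apply le_antisymm <;> simp [le_inf_iff, sup_le_iff, l0.le, l1.le, l2.le, inf_le_of_left_le, inf_le_of_right_le, le_sup_left, le_sup_right, le_sup_of_le_left, le_sup_of_le_right, inf_le_left, inf_le_right]
  have se_7_4 : (z0 ⊓ (z1 ⊓ z2)) ⊔ z2 = z2 := by apply le_antisymm <;> simp [le_inf_iff, sup_le_iff, l0.le, l1.le, l2.le, inf_le_of_left_le, inf_le_of_right_le, le_sup_left, le_sup_right, le_sup_of_le_left, le_sup_of_le_right, inf_le_left, inf_le_right]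
  have ie_7_4 : (z0 ⊓ (z1 ⊓ z2)) ⊓ z2 = z0 ⊓ (z1 ⊓ z2) := by apply le_antisymm <;> simp [le_inf_iff, sup_le_iff, l0.le, l1.le, l2.le, inf_le_of_left_le, inf_le_of_right_le, le_sup_left, le_sup_right, le_sup_of_le_left, le_sup_of_le_right, inf_le_left, inf_le_right]
  have se_7_3 : (z0 ⊓ (z1 ⊓ z2)) ⊔ (z0 ⊓ z1) = z0 ⊓ z1 := by apply le_antisymm <;> simp [le_inf_iff, sup_le_iff, l0.le, l1.le, l2.le, inf_le_of_left_le, inf_le_of_right_le, le_sup_left, le_sup_right, le_sup_of_le_left, le_sup_of_le_right, inf_le_left, inf_le_right]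
  have ie_7_3 : (z0 ⊓ (z1 ⊓ z2)) ⊓ (z0 ⊓ z1) = z0 ⊓ (z1 ⊓ z2) := by apply le_antisymm <;> simp [le_inf_iff, sup_le_iff, l0.le, l1.le, l2.le, inf_le_of_left_le, inf_le_of_right_le, le_sup_left, le_sup_right, le_sup_of_le_left, le_sup_of_le_right, inf_le_left, inf_le_right]
  have se_7_5 : (z0 ⊓ (z1 ⊓ z2)) ⊔ (z0 ⊓ z2) = z0 ⊓ z2 := by apply le_antisymm <;> simp [le_inf_iff, sup_le_iff, l0.le, l1.le, l2.le, inf_le_of_left_le, inf_le_of_right_le, le_sup_left, le_sup_right, le_sup_of_le_left, le_sup_of_le_right, inf_le_left, inf_le_right]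
  have ie_7_5 : (z0 ⊓ (z1 ⊓ z2)) ⊓ (z0 ⊓ z2) = z0 ⊓ (z1 ⊓ z2) := by apply le_antisymm <;> simp [le_inf_iff, sup_le_iff, l0.le, l1.le, l2.le, inf_le_of_left_le, inf_le_of_right_le, le_sup_left, le_sup_right, le_sup_of_le_left, le_sup_of_le_right, inf_le_left, inf_le_right]
  have se_7_6 : (z0 ⊓ (z1 ⊓ z2)) ⊔ (z1 ⊓ z2) = z1 ⊓ z2 := by apply le_antisymm <;> simp [le_inf_iff, sup_le_iff, l0.le, l1.le, l2.le, inf_le_of_left_le, inf_le_of_right_le, le_sup_left, le_sup_right, le_sup_of_le_left, le_sup_of_le_right, inf_le_left, inf_le_right]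
  have ie_7_6 : (z0 ⊓ (z1 ⊓ z2)) ⊓ (z1 ⊓ z2) = z0 ⊓ (z1 ⊓ z2) := by apply le_antisymm <;> simp [le_inf_iff, sup_le_iff, l0.le, l1.le, l2.le, inf_le_of_left_le, inf_le_of_right_le, le_sup_left, le_sup_right, le_sup_of_le_left, le_sup_of_le_right, inf_le_left, inf_le_right]
  have se_7_7 : (z0 ⊓ (z1 ⊓ z2)) ⊔ (z0 ⊓ (z1 ⊓ z2)) = z0 ⊓ (z1 ⊓ z2) := by apply le_antisymm <;> simp [le_inf_iff, sup_le_iff, l0.le, l1.le, l2.le, inf_le_of_left_le, inf_le_of_right_le, le_sup_left, le_sup_right, le_sup_of_le_left, le_sup_of_le_right, inf_le_left, inf_le_right]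
  have ie_7_7 : (z0 ⊓ (z1 ⊓ z2)) ⊓ (z0 ⊓ (z1 ⊓ z2)) = z0 ⊓ (z1 ⊓ z2) := by apply le_antisymm <;> simp [le_inf_iff, sup_le_iff, l0.le, l1.le, l2.le, inf_le_of_left_le, inf_le_of_right_le, le_sup_left, le_sup_right, le_sup_of_le_left, le_sup_of_le_right, inf_le_left, inf_le_right]
  have nn_0 : t ⊓ (t ⊓ t) = t := by apply le_antisymm <;> simp [le_inf_iff, sup_le_iff, l0.le, l1.le, l2.le, inf_le_of_left_le, inf_le_of_right_le, le_sup_left, le_sup_right, le_sup_of_le_left, le_sup_of_le_right, inf_le_left, inf_le_right]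
  have nn_4 : t ⊓ (t ⊓ z2) = z2 := by apply le_antisymm <;> simp [le_inf_iff, sup_le_iff, l0.le, l1.le, l2.le, inf_le_of_left_le, inf_le_of_right_le, le_sup_left, le_sup_right, le_sup_of_le_left, le_sup_of_le_right, inf_le_left, inf_le_right]
  have nn_2 : t ⊓ (z1 ⊓ t) = z1 := by apply le_antisymm <;> simp [le_inf_iff, sup_le_iff, l0.le, l1.le, l2.le, inf_le_of_left_le, inf_le_of_right_le, le_sup_left, le_sup_right, le_sup_of_le_left, le_sup_of_le_right, inf_le_left, inf_le_right]
  have nn_6 : t ⊓ (z1 ⊓ z2) = z1 ⊓ z2 := by apply le_antisymm <;> simp [le_inf_iff, sup_le_iff, l0.le, l1.le, l2.le, inf_le_of_left_le, inf_le_of_right_le, le_sup_left, le_sup_right, le_sup_of_le_left, le_sup_of_le_right, inf_le_left, inf_le_right]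
  have nn_1 : z0 ⊓ (t ⊓ t) = z0 := by apply le_antisymm <;> simp [le_inf_iff, sup_le_iff, l0.le, l1.le, l2.le, inf_le_of_left_le, inf_le_of_right_le, le_sup_left, le_sup_right, le_sup_of_le_left, le_sup_of_le_right, inf_le_left, inf_le_right]
  have nn_5 : z0 ⊓ (t ⊓ z2) = z0 ⊓ z2 := by apply le_antisymm <;> simp [le_inf_iff, sup_le_iff, l0.le, l1.le, l2.le, inf_le_of_left_le, inf_le_of_right_le, le_sup_left, le_sup_right, le_sup_of_le_left, le_sup_of_le_right, inf_le_left, inf_le_right]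
  have nn_3 : z0 ⊓ (z1 ⊓ t) = z0 ⊓ z1 := by apply le_antisymm <;> simp [le_inf_iff, sup_le_iff, l0.le, l1.le, l2.le, inf_le_of_left_le, inf_le_of_right_le, le_sup_left, le_sup_right, le_sup_of_le_left, le_sup_of_le_right, inf_le_left, inf_le_right]
  have nn_7 : z0 ⊓ (z1 ⊓ z2) = z0 ⊓ (z1 ⊓ z2) := by apply le_antisymm <;> simp [le_inf_iff, sup_le_iff, l0.le, l1.le, l2.le, inf_le_of_left_le, inf_le_of_right_le, le_sup_left, le_sup_right, le_sup_of_le_left, le_sup_of_le_right, inf_le_left, inf_le_right]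
  set G : Set (Fin 3) → M := fun s =>
    (if (0:Fin 3) ∈ s then t else z0) ⊓
      ((if (1:Fin 3) ∈ s then t else z1) ⊓ (if (2:Fin 3) ∈ s then t else z2)) with hG
  have hsup : ∀ s s' : Set (Fin 3), G (s ⊔ s') = G s ⊔ G s' := by
    intro s s'
    by_cases m0 : (0:Fin 3) ∈ s <;> by_cases m1 : (1:Fin 3) ∈ s <;> by_cases m2 : (2:Fin 3) ∈ s <;>
      by_cases n0 : (0:Fin 3) ∈ s' <;> by_cases n1 : (1:Fin 3) ∈ s' <;> by_cases n2 : (2:Fin 3) ∈ s' <;>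
      simp only [hG, Set.sup_eq_union, Set.mem_union, m0, m1, m2, n0, n1, n2, if_true, if_false,
        or_self, or_true, true_or, or_false, false_or, not_false_iff,
        nn_0, nn_4, nn_2, nn_6, nn_1, nn_5, nn_3, nn_7, se_0_0, se_0_1, se_0_2, se_0_4, se_0_3, se_0_5, se_0_6, se_0_7, se_1_0, se_1_1, se_1_2, se_1_4, se_1_3, se_1_5, se_1_6, se_1_7, se_2_0, se_2_1, se_2_2, se_2_4, se_2_3, se_2_5, se_2_6, se_2_7, se_4_0, se_4_1, se_4_2, se_4_4, se_4_3, se_4_5, se_4_6, se_4_7, se_3_0, se_3_1, se_3_2, se_3_4, se_3_3, se_3_5, se_3_6, se_3_7, se_5_0, se_5_1, se_5_2, se_5_4, se_5_3, se_5_5, se_5_6, se_5_7, se_6_0, se_6_1, se_6_2, se_6_4, se_6_3, se_6_5, se_6_6, se_6_7, se_7_0, se_7_1, se_7_2, se_7_4, se_7_3, se_7_5, se_7_6, se_7_7]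
  have hinf : ∀ s s' : Set (Fin 3), G (s ⊓ s') = G s ⊓ G s' := by
    intro s s'
    by_cases m0 : (0:Fin 3) ∈ s <;> by_cases m1 : (1:Fin 3) ∈ s <;> by_cases m2 : (2:Fin 3) ∈ s <;>
      by_cases n0 : (0:Fin 3) ∈ s' <;> by_cases n1 : (1:Fin 3) ∈ s' <;> by_cases n2 : (2:Fin 3) ∈ s' <;>
      simp only [hG, Set.inf_eq_inter, Set.mem_inter_iff, m0, m1, m2, n0, n1, n2, if_true, if_false,
        and_self, and_true, true_and, and_false, false_and, not_false_iff,
        nn_0, nn_4, nn_2, nn_6, nn_1, nn_5, nn_3, nn_7, ie_0_0, ie_0_1, ie_0_2, ie_0_4, ie_0_3, ie_0_5, ie_0_6, ie_0_7, ie_1_0, ie_1_1, ie_1_2, ie_1_4, ie_1_3, ie_1_5, ie_1_6, ie_1_7, ie_2_0, ie_2_1, ie_2_2, ie_2_4, ie_2_3, ie_2_5, ie_2_6, ie_2_7, ie_4_0, ie_4_1, ie_4_2, ie_4_4, ie_4_3, ie_4_5, ie_4_6, ie_4_7, ie_3_0, ie_3_1, ie_3_2, ie_3_4, ie_3_3,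 ie_3_5, ie_3_6, ie_3_7, ie_5_0, ie_5_1, ie_5_2, ie_5_4, ie_5_3, ie_5_5, ie_5_6, ie_5_7, ie_6_0, ie_6_1, ie_6_2, ie_6_4, ie_6_3, ie_6_5, ie_6_6, ie_6_7, ie_7_0, ie_7_1, ie_7_2, ie_7_4, ie_7_3, ie_7_5, ie_7_6, ie_7_7]
  have hmono : ∀ s s' : Set (Fin 3), G s ≤ G s' → s ⊆ s' := by
    intro s s' hle i hi
    by_contra hni
    fin_cases i
    · have low : z1 ⊓ z2 ≤ G s := by
        simp only [hG]
        refine le_inf ?_ (le_inf ?_ ?_)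
        · rw [if_pos (show (0:Fin 3) ∈ s from hi)]; exact inf_le_left.trans l1.le
        · split_ifs
          · exact inf_le_left.trans l1.le
          · exact inf_le_left
        · split_ifs
          · exact inf_le_right.trans l2.le
          · exact inf_le_right
      have high : G s' ≤ z0 := by
        simp only [hG]
        rw [if_neg (show ¬ (0:Fin 3) ∈ s' from hni)]
        exact inf_le_left
      have : t ≤ z0 := by
        rw [← h0]
        exact sup_le le_rfl ((low.trans hle).trans high)
      exact absurd this l0.not_ge
    · have low : z0 ⊓ z2 ≤ G s := by
        simp only [hG]
        refine le_inf ?_ (le_inf ?_ ?_)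
        · split_ifs
          · exact inf_le_left.trans l0.le
          · exact inf_le_left
        · rw [if_pos (show (1:Fin 3) ∈ s from hi)]; exact inf_le_left.trans l0.le
        · split_ifs
          · exact inf_le_right.trans l2.le
          · exact inf_le_right
      have high : G s' ≤ z1 := by
        simp only [hG]
        rw [if_neg (show ¬ (1:Fin 3) ∈ s' from hni)]
        exact inf_le_of_right_le inf_le_left
      have : t ≤ z1 := by
        rw [← h1]
        exact sup_le le_rfl ((low.trans hle).trans high)
      exact absurd this l1.not_ge
    · have low : z0 ⊓ z1 ≤ G s := by
        simp only [hG]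
        refine le_inf ?_ (le_inf ?_ ?_)
        · split_ifs
          · exact inf_le_left.trans l0.le
          · exact inf_le_left
        · split_ifs
          · exact inf_le_right.trans l1.le
          · exact inf_le_right
        · rw [if_pos (show (2:Fin 3) ∈ s from hi)]; exact inf_le_left.trans l0.le
      have high : G s' ≤ z2 := by
        simp only [hG]
        rw [if_neg (show ¬ (2:Fin 3) ∈ s' from hni)]
        exact inf_le_of_right_le inf_le_right
      have : t ≤ z2 := by
        rw [← h2]
        exact sup_le le_rfl ((low.trans hle).trans high)
      exact absurd this l2.not_ge
  have hinj : Function.Injective G := fun s s' h =>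
    Set.Subset.antisymm (hmono s s' h.le) (hmono s' s h.ge)
  exact ⟨{ toFun := G, map_sup' := hsup, map_inf' := hinf }, hinj⟩

end Cube

section Key
variable {M : Type*} [Lattice M] [Finite M] [IsModularLattice M]

theorem exists_doubly_irreducible [Nonempty M]
    (hB : ¬ ∃ f : LatticeHom (Set (Fin 3)) M, Function.Injective f) :
    ∃ p : M, (∀ b c : M, b ⊔ c = p → b = p ∨ c = p) ∧
      (∀ b c : M, b ⊓ c = p → b = p ∨ c = p) := by
  classical
  set J : Set M := {x : M | ∀ b c : M, b ⊔ c = x → b = x ∨ c = x} with hJ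
  have hbot : ∃ b0 : M, ∀ x, b0 ≤ x := by
    haveI := Fintype.ofFinite M
    exact ⟨(Finset.univ : Finset M).inf' Finset.univ_nonempty id,
      fun x => Finset.inf'_le id (Finset.mem_univ x)⟩
  obtain ⟨b0, hb0⟩ := hbot
  have hb0J : b0 ∈ J := by
    intro b c h
    exact Or.inl (le_antisymm (h ▸ le_sup_left) (hb0 b))
  obtain ⟨p, hpJ, hpmax⟩ := (Finite.to_wellFoundedGT (α := M)).wf.has_min J ⟨b0, hb0J⟩
  refine ⟨p, hpJ, ?_⟩
  by_contra hpm
  push_neg at hpm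
  obtain ⟨U, V, hUV, hU, hV⟩ := hpm
  have hpU : p < U := lt_of_le_of_ne (hUV ▸ inf_le_left) (Ne.symm hU)
  have hpV : p < V := lt_of_le_of_ne (hUV ▸ inf_le_right) (Ne.symm hV)
  -- covers of p inside (p, U] and (p, V]
  obtain ⟨u, ⟨hpu, huU⟩, humin⟩ := (Finite.to_wellFoundedLT (α := M)).wf.has_min
    {z | p < z ∧ z ≤ U} ⟨U, hpU, le_rfl⟩
  obtain ⟨v, ⟨hpv, hvV⟩, hvmin⟩ := (Finite.to_wellFoundedLT (α := M)).wf.has_min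
    {z | p < z ∧ z ≤ V} ⟨V, hpV, le_rfl⟩
  have hcovu : p ⋖ u := ⟨hpu, fun w hw hw' => humin w ⟨hw, hw'.le.trans huU⟩ hw'⟩
  have hcovv : p ⋖ v := ⟨hpv, fun w hw hw' => hvmin w ⟨hw, hw'.le.trans hvV⟩ hw'⟩
  have huv : u ⊓ v = p := by
    refine le_antisymm ?_ (le_inf hpu.le hpv.le)
    exact hUV ▸ inf_le_inf huU hvV
  -- for every cover w of p, find a "minimal new" element
  have getmin : ∀ w : M, p ⋖ w → ∃ a : M, a < w ∧ ¬ a ≤ p ∧ (a ⊓ p ⋖ a) ∧ a ⊔ p = w := by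
    intro w hcovw
    have hwnJ : w ∉ J := fun hJw => hpmax w hJw hcovw.lt
    simp only [hJ, Set.mem_setOf_eq] at hwnJ
    push_neg at hwnJ
    obtain ⟨x, y, hxy, hx, hy⟩ := hwnJ
    have hx' : ∃ x', x' < w ∧ ¬ x' ≤ p := by
      by_cases hxp : x ≤ p
      · refine ⟨y, lt_of_le_of_ne (hxy ▸ le_sup_right) hy, fun hyp => ?_⟩
        exact hcovw.lt.not_ge (hxy ▸ sup_le hxp hyp)
      · exact ⟨x, lt_of_le_of_ne (hxy ▸ le_sup_left) hx, hxp⟩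
    obtain ⟨x', hx'w, hx'p⟩ := hx'
    obtain ⟨a, ⟨hax, hap⟩, hamin⟩ := (Finite.to_wellFoundedLT (α := M)).wf.has_min
      {z | z ≤ x' ∧ ¬ z ≤ p} ⟨x', le_rfl, hx'p⟩
    have halt : a < w := hax.trans_lt hx'w
    have hwlt : ∀ z, z < a → z ≤ p := by
      intro z hz
      by_contra hzp
      exact hamin z ⟨hz.le.trans hax, hzp⟩ hz
    have hacov : a ⊓ p ⋖ a := by
      refine ⟨lt_of_le_of_ne inf_le_left (fun h => hap (inf_eq_left.mp h)), ?_⟩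
      intro z hz hz'
      exact hz.not_ge (le_inf hz'.le (hwlt z hz'))
    have haup : a ⊔ p = w := by
      have h1 : p < a ⊔ p := lt_of_le_of_ne le_sup_right (fun h => hap (h ▸ le_sup_left))
      have h2 : a ⊔ p ≤ w := sup_le halt.le hcovw.lt.le
      rcases h2.lt_or_eq with h3 | h3
      · exact absurd h3 (fun h3 => hcovw.2 h1 h3)
      · exact h3
    exact ⟨a, halt, hap, hacov, haup⟩
  obtain ⟨a, halt, hap, hacov, haup⟩ := getmin u hcovu
  obtain ⟨b, hblt, hbp, hbcov, hbup⟩ := getmin v hcovv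
  have hau_le : a ≤ u := halt.le
  have hbv_le : b ≤ v := hblt.le
  -- B₃-freeness forces p ≤ a ⊔ b
  have hpab : p ≤ a ⊔ b := by
    by_contra hnp
    have hvu : (b ⊔ p) ⊓ (a ⊔ p) = p := by rw [hbup, haup, inf_comm, huv]
    refine bfree_no_dual_triple hB (b ⊔ p) (a ⊔ p) (a ⊔ b) (a ⊔ b ⊔ p) ?_ ?_ ?_ ?_ ?_ ?_
    · refine le_antisymm (sup_le (sup_le ?_ ?_) (inf_le_right.trans le_sup_left)) (sup_le (sup_le ?_ ?_) ?_)
      · exact le_sup_of_le_left le_sup_right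
      · exact le_sup_right
      · exact le_sup_of_le_right (le_inf le_sup_left le_sup_left)
      · exact le_sup_of_le_left le_sup_left
      · exact le_sup_of_le_left le_sup_right
    · refine le_antisymm (sup_le (sup_le ?_ ?_) (inf_le_right.trans le_sup_left)) (sup_le (sup_le ?_ ?_) ?_)
      · exact le_sup_of_le_left le_sup_left
      · exact le_sup_right
      · exact le_sup_of_le_left le_sup_left
      · exact le_sup_of_le_right (le_inf le_sup_left le_sup_right)
      · exact le_sup_of_le_left le_sup_right
    · rw [hvu]
    · -- b ⊔ p < a ⊔ b ⊔ p
      refine lt_of_le_of_ne (sup_le (le_sup_of_le_left le_sup_right) le_sup_right) ?_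
      intro h
      have ha_le : a ≤ b ⊔ p := by rw [h]; exact le_sup_of_le_left le_sup_left
      have : a ≤ p := by
        have : a ≤ u ⊓ v := le_inf hau_le (hbup ▸ ha_le)
        rwa [huv] at this
      exact hap this
    · refine lt_of_le_of_ne (sup_le (le_sup_of_le_left le_sup_left) le_sup_right) ?_
      intro h
      have hb_le : b ≤ a ⊔ p := by rw [h]; exact le_sup_of_le_left le_sup_right
      have : b ≤ p := by
        have : b ≤ u ⊓ v := le_inf (haup ▸ hb_le) hbv_le
        rwa [huv] at this
      exact hbp this
    · exact lt_of_le_of_ne le_sup_left (fun h => hnp (h ▸ le_sup_right))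
  -- heights
  obtain ⟨h, hcov, hlt, hval⟩ := exists_height (M := M)
  have e1 : h u = h p + 1 := hcov p u hcovu
  have e2 : h v = h p + 1 := hcov p v hcovv
  have e3 : h u + h v = h (u ⊔ v) + h p := by
    have := hval u v
    rwa [huv] at this
  have hab_t : a ⊔ b = u ⊔ v := by
    refine le_antisymm (sup_le (le_sup_of_le_left hau_le) (le_sup_of_le_right hbv_le)) ?_
    refine sup_le ?_ ?_
    · rw [← haup]; exact sup_le le_sup_left hpab
    · rw [← hbup]; exact sup_le le_sup_right hpab
  have e4 : h a = h (a ⊓ p) + 1 := hcov _ _ hacov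
  have e5 : h b = h (b ⊓ p) + 1 := hcov _ _ hbcov
  have hab_le_p : a ⊓ b ≤ p := by
    have := inf_le_inf hau_le hbv_le
    rwa [huv] at this
  have hinfab : a ⊓ b = (a ⊓ p) ⊓ (b ⊓ p) := by
    refine le_antisymm (le_inf (le_inf inf_le_left hab_le_p) (le_inf inf_le_right hab_le_p)) ?_
    exact le_inf (inf_le_left.trans inf_le_left) (inf_le_right.trans inf_le_left)
  have e6 : h a + h b = h (u ⊔ v) + h ((a ⊓ p) ⊓ (b ⊓ p)) := by
    have := hval a b
    rwa [hab_t, hinfab] at this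
  have e7 : h (a ⊓ p) + h (b ⊓ p) = h ((a ⊓ p) ⊔ (b ⊓ p)) + h ((a ⊓ p) ⊓ (b ⊓ p)) := hval _ _
  have hq_le : (a ⊓ p) ⊔ (b ⊓ p) ≤ p := sup_le inf_le_right inf_le_right
  have hq_ne : (a ⊓ p) ⊔ (b ⊓ p) ≠ p := by
    intro hq
    rcases hpJ _ _ hq with h1 | h1
    · have : p ≤ a := inf_eq_right.mp h1
      have : a = u := by rw [← haup, sup_eq_left.mpr this]
      exact halt.ne this
    · have : p ≤ b := inf_eq_right.mp h1
      have : b = v := by rw [← hbup, sup_eq_left.mpr this]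
      exact hblt.ne this
  have hqlt : h ((a ⊓ p) ⊔ (b ⊓ p)) < h p := hlt _ _ (hq_le.lt_of_ne hq_ne)
  omega

end Key

theorem bfree_dismantlable : ∀ (n : ℕ) (M : Type*) [Lattice M] [Finite M] [IsModularLattice M],
    Nat.card M = n → (¬ ∃ f : LatticeHom (Set (Fin 3)) M, Function.Injective f) →
    Dismantlable M := by
  intro n
  induction n using Nat.strong_induction_on with
  | _ n ih =>
    intro M _ _ _ hcard hB
    by_cases hn1 : n ≤ 1
    · refine ⟨fun _ => Set.univ, ?_, ?_, ?_⟩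
      · intro i hi1 hi2
        rw [hcard] at hi2
        have hin : i = 1 ∧ n = 1 := by omega
        refine ⟨isSublattice_univ, ?_⟩
        rw [Nat.card_coe_set_eq, Set.ncard_univ, hcard, hin.1, hin.2]
      · intro i hi1 hi2
        exact subset_rfl
      · rfl
    · push_neg at hn1
      haveI : Nonempty M := by
        have : 0 < Nat.card M := by omega
        exact (Nat.card_pos_iff.mp this).1
      obtain ⟨p, hj, hm⟩ := exists_doubly_irreducible hB
      have hSsub : IsSublattice ({p}ᶜ : Set M) := by
        constructor
        · intro x hx y hy hmem
          simp only [Set.mem_compl_iff, Set.mem_singleton_iff] at *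
          rcases hj x y hmem with rfl | rfl
          · exact hx rfl
          · exact hy rfl
        · intro x hx y hy hmem
          simp only [Set.mem_compl_iff, Set.mem_singleton_iff] at *
          rcases hm x y hmem with rfl | rfl
          · exact hx rfl
          · exact hy rfl
      set Sub : Sublattice M := Sublattice.ofIsSublattice _ hSsub with hSub
      haveI : IsModularLattice ↥Sub := by
        constructor
        intro x y z h
        rw [← Subtype.coe_le_coe] at h ⊢
        simpa using IsModularLattice.sup_inf_le_assoc_of_le (x := (x : M)) (y : M) h
      have hB' : ¬ ∃ f : LatticeHom (Set (Fin 3)) ↥Sub, Function.Injective f := by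
        rintro ⟨f, hf⟩
        refine hB ⟨Sub.subtype.comp f, fun a b hab => hf ?_⟩
        exact Subtype.coe_injective (by simpa [LatticeHom.comp_apply] using hab)
      have hcoe : Nat.card ↥Sub = ({p}ᶜ : Set M).ncard := by
        rw [← Nat.card_coe_set_eq]
        rfl
      have hcard' : Nat.card ↥Sub = n - 1 := by
        rw [hcoe, Set.compl_eq_univ_diff, Set.ncard_diff (Set.subset_univ _),
          Set.ncard_univ, Set.ncard_singleton, hcard]
      obtain ⟨c', hc1, hc2, hc3⟩ := ih (n - 1) (by omega) ↥Sub hcard' hB'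
      rw [hcard'] at hc1 hc2 hc3
      refine ⟨fun i => if i = n then Set.univ else (⇑Sub.subtype '' c' i), ?_, ?_, ?_⟩
      · intro i hi1 hi2
        rw [hcard] at hi2
        by_cases hin : i = n
        · subst hin
          simp only [if_pos rfl, if_true]
          refine ⟨isSublattice_univ, ?_⟩
          rw [Nat.card_coe_set_eq, Set.ncard_univ, hcard]
        · simp only [if_neg hin]
          obtain ⟨hs, hcd⟩ := hc1 i hi1 (by omega)
          refine ⟨hs.image Sub.subtype, ?_⟩
          rw [Nat.card_coe_set_eq,
            Set.ncard_image_of_injective _ Sub.subtype_injective,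
            ← Nat.card_coe_set_eq, hcd]
      · intro i hi1 hi2
        rw [hcard] at hi2
        simp only [if_neg (show ¬ i = n by omega)]
        by_cases hin : i + 1 = n
        · simp only [if_pos hin, if_true]
          exact Set.subset_univ _
        · simp only [if_neg hin]
          exact Set.image_mono (hc2 i hi1 (by omega))
      · rw [hcard]
        simp only [if_pos rfl, if_true]

theorem card_set_fin3 : Nat.card (Set (Fin 3)) = 8 := by
  rw [Nat.card_congr (Fintype.finsetEquivSet (α := Fin 3)).symm, Nat.card_eq_fintype_card,
    Fintype.card_finset, Fintype.card_fin]
  norm_num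

theorem no_sublattice_compl_singleton (x : Set (Fin 3)) :
    ¬ IsSublattice ({x}ᶜ : Set (Set (Fin 3))) := by
  intro hsub
  have key : ∀ t : Finset (Fin 3), ∃ a b : Finset (Fin 3),
      a ≠ t ∧ b ≠ t ∧ (a ∪ b = t ∨ a ∩ b = t) := by decide
  obtain ⟨t, ht⟩ : ∃ t : Finset (Fin 3), (↑t : Set (Fin 3)) = x :=
    ⟨(Fintype.finsetEquivSet (α := Fin 3)).symm x, by
      rw [← Fintype.finsetEquivSet_apply]
      exact (Fintype.finsetEquivSet (α := Fin 3)).apply_symm_apply x⟩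
  obtain ⟨a, b, ha, hb, hab⟩ := key t
  have ha' : (↑a : Set (Fin 3)) ∈ ({x}ᶜ : Set (Set (Fin 3))) := by
    simp only [Set.mem_compl_iff, Set.mem_singleton_iff]
    exact fun h => ha (Finset.coe_injective (h.trans ht.symm))
  have hb' : (↑b : Set (Fin 3)) ∈ ({x}ᶜ : Set (Set (Fin 3))) := by
    simp only [Set.mem_compl_iff, Set.mem_singleton_iff]
    exact fun h => hb (Finset.coe_injective (h.trans ht.symm))
  rcases hab with h | h
  · have hmem := hsub.1 ha' hb'
    rw [Set.mem_compl_iff, Set.mem_singleton_iff] at hmem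
    exact hmem (by rw [show (↑a ⊔ ↑b : Set (Fin 3)) = ↑(a ∪ b) from (Finset.coe_union a b).symm, h, ht])
  · have hmem := hsub.2 ha' hb'
    rw [Set.mem_compl_iff, Set.mem_singleton_iff] at hmem
    exact hmem (by rw [show (↑a ⊓ ↑b : Set (Fin 3)) = ↑(a ∩ b) from (Finset.coe_inter a b).symm, h, ht])

theorem ivt_aux (g : ℕ → ℕ) :
    ∀ (d a : ℕ), (∀ i, a ≤ i → i < a + d → g (i + 1) ≤ g i + 1) → g a ≤ 7 →
      7 ≤ g (a + d) → ∃ i, a ≤ i ∧ i ≤ a + d ∧ g i = 7 := by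
  intro d
  induction d with
  | zero =>
    intro a _ h1 h2
    rw [Nat.add_zero] at h2
    exact ⟨a, le_rfl, by omega, by omega⟩
  | succ d ihd =>
    intro a hstep hga hgad
    by_cases hga7 : g a = 7
    · exact ⟨a, le_rfl, by omega, hga7⟩
    · have h1 : g (a + 1) ≤ 7 := by
        have := hstep a le_rfl (by omega)
        omega
      have h2 : 7 ≤ g (a + 1 + d) := by
        have : a + 1 + d = a + (d + 1) := by omega
        rw [this]
        exact hgad
      obtain ⟨i, hi1, hi2, hi3⟩ := ihd (a + 1) (fun i h h' => hstep i (by omega) (by omega)) h1 h2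
      exact ⟨i, by omega, by omega, hi3⟩

theorem preimage_ncard_le_one {L : Type*} [Finite L] (f : Set (Fin 3) → L)
    (hf : Function.Injective f) (x : L) : (f ⁻¹' {x}).ncard ≤ 1 := by
  rw [Set.ncard_le_one (Set.toFinite _)]
  intro a ha b hb
  exact hf ((Set.mem_preimage.mp ha).trans (Set.mem_preimage.mp hb).symm)

theorem dismantlable_bfree {L : Type*} [Lattice L] [Finite L] (hd : Dismantlable L) :
    ¬ ∃ f : LatticeHom (Set (Fin 3)) L, Function.Injective f := by
  rintro ⟨f, hf⟩
  obtain ⟨c, h1, h2, h3⟩ := hd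
  have hn8 : 8 ≤ Nat.card L := card_set_fin3 ▸ Nat.card_le_card_of_injective f hf
  set n := Nat.card L with hn
  set g : ℕ → ℕ := fun i => (⇑f ⁻¹' (c i)).ncard with hg
  have hg1 : g 1 ≤ 1 := by
    obtain ⟨hs, hcd⟩ := h1 1 le_rfl (by omega)
    rw [Nat.card_coe_set_eq] at hcd
    obtain ⟨x, hx⟩ := Set.ncard_eq_one.mp hcd
    rw [hg]
    simp only [hx]
    exact preimage_ncard_le_one f hf x
  have hstep : ∀ i, 1 ≤ i → i < n → g (i + 1) ≤ g i + 1 := by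
    intro i hi1 hi2
    have hsub := h2 i hi1 hi2
    obtain ⟨_, hcd1⟩ := h1 i hi1 (by omega)
    obtain ⟨_, hcd2⟩ := h1 (i + 1) (by omega) (by omega)
    rw [Nat.card_coe_set_eq] at hcd1 hcd2
    have hdiff : (c (i + 1) \ c i).ncard = 1 := by
      rw [Set.ncard_diff hsub (Set.toFinite _), hcd1, hcd2]
      omega
    obtain ⟨w, hw⟩ := Set.ncard_eq_one.mp hdiff
    have hsubset : ⇑f ⁻¹' c (i + 1) ⊆ (⇑f ⁻¹' c i) ∪ (⇑f ⁻¹' {w}) := by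
      intro a ha
      by_cases hfa : f a ∈ c i
      · exact Or.inl hfa
      · refine Or.inr ?_
        have : f a ∈ c (i + 1) \ c i := ⟨ha, hfa⟩
        rw [hw] at this
        exact this
    calc g (i + 1) ≤ ((⇑f ⁻¹' c i) ∪ (⇑f ⁻¹' {w})).ncard :=
          Set.ncard_le_ncard hsubset (Set.toFinite _)
      _ ≤ (⇑f ⁻¹' c i).ncard + (⇑f ⁻¹' {w}).ncard := Set.ncard_union_le _ _
      _ ≤ g i + 1 := by
          simp only [hg]
          have := preimage_ncard_le_one f hf w
          omega
  have hgn : g n = 8 := by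
    rw [hg]
    simp only [h3, Set.preimage_univ, Set.ncard_univ, card_set_fin3]
  obtain ⟨i, hi1, hi2, hi3⟩ := ivt_aux g (n - 1) 1
    (fun i h h' => hstep i h (by omega)) (by omega) (by rw [(by omega : 1 + (n - 1) = n)]; omega)
  have hin : i ≤ n := by omega
  have hsubl : IsSublattice (⇑f ⁻¹' c i) := (h1 i hi1 hin).1.preimage f
  -- the preimage misses exactly one element
  have hcompl : ((⇑f ⁻¹' c i)ᶜ).ncard = 1 := by
    have h8 : ((⇑f ⁻¹' c i)ᶜ).ncard = 8 - (⇑f ⁻¹' c i).ncard := by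
      rw [Set.compl_eq_univ_diff, Set.ncard_diff (Set.subset_univ _), Set.ncard_univ,
        card_set_fin3]
    have hi3' : (⇑f ⁻¹' c i).ncard = 7 := hi3
    rw [h8, hi3']
  obtain ⟨x, hx⟩ := Set.ncard_eq_one.mp hcompl
  have : ⇑f ⁻¹' c i = ({x}ᶜ : Set (Set (Fin 3))) := by
    rw [← hx, compl_compl]
  rw [this] at hsubl
  exact no_sublattice_compl_singleton x hsubl


/-- A finite modular lattice is dismantlable if and only if it contains no sublattice
isomorphic to the boolean lattice `2³` (the lattice of subsets of a three-element set). -/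
theorem stmt5 {L : Type*} [Lattice L] [Finite L] [IsModularLattice L] :
    Dismantlable L ↔ ¬ ∃ f : LatticeHom (Set (Fin 3)) L, Function.Injective f := by
  constructor
  · exact dismantlable_bfree
  · exact fun h => bfree_dismantlable (Nat.card L) L rfl h
end

section
/- Let G be a finite group whose lattice of subgroups is dismantlable. Then the order of every element of G is of the form pⁿ or pⁿqᵐ, where p and q are primes and n, m ∈ ℕ. -/
section CrownAux
variable {L : Type*} [Lattice L]

/-- Auxiliary notion: a crown of order 6 whose elements lie in `S`. -/
def Crown3 (S : Set L) (x y : Fin 3 → L) : Prop :=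
  (∀ i, x i ∈ S) ∧ (∀ i, y i ∈ S) ∧
  (∀ i j, x i ≤ x j → i = j) ∧
  (∀ i j, y i ≤ y j → i = j) ∧
  (∀ i j, ¬ y i ≤ x j) ∧
  (∀ i j, x i ≤ y j ↔ (i = j ∨ i = j + 1))

/-- Removing a single element from a sublattice containing a crown leaves a crown. -/
lemma crown3_step {S T : Set L} (hS : IsSublattice S) (z : L)
    (hTz : T ⊆ S ∪ {z}) {x y : Fin 3 → L}
    (hc : Crown3 T x y) : ∃ x' y', Crown3 S x' y' := by
  obtain ⟨hxT, hyT, hxx, hyy, hyx, hxy⟩ := hc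
  have fa : ∀ m : Fin 3, ¬ m + 1 = m := by decide
  have fb : ∀ m : Fin 3, ¬ m = m + 1 := by decide
  have fc : ∀ m k : Fin 3, m = k + 1 → k = m + 1 → False := by decide
  have fd : ∀ m : Fin 3, m = m + 2 + 1 := by decide
  have ff : ∀ m : Fin 3, ¬ m = m + 2 := by decide
  have fg : ∀ m k : Fin 3, m = k + 1 → k = m + 2 := by decide
  have fh : ∀ m k : Fin 3, m = k + 1 → m = k + 2 → False := by decide
  have memS : ∀ w : L, w ∈ T → w ≠ z → w ∈ S := by
    intro w hw hwz
    rcases hTz hw with h | h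
    · exact h
    · exact absurd h hwz
  by_cases hx : ∀ i, x i ∈ S
  · by_cases hy : ∀ i, y i ∈ S
    · exact ⟨x, y, hx, hy, hxx, hyy, hyx, hxy⟩
    · push_neg at hy
      obtain ⟨j, hj⟩ := hy
      have hyz : y j = z := by
        by_contra hne; exact hj (memS _ (hyT j) hne)
      have hyS : ∀ k, k ≠ j → y k ∈ S := by
        intro k hk
        refine memS _ (hyT k) ?_
        rw [← hyz]
        intro hkj
        exact hk (hyy k j (le_of_eq hkj))
      set u := x j ⊔ x (j + 1) with hu
      have huS : u ∈ S := hS.supClosed (hx j) (hx (j + 1))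
      have hujy : u ≤ y j :=
        sup_le ((hxy j j).2 (Or.inl rfl)) ((hxy (j+1) j).2 (Or.inr rfl))
      refine ⟨x, Function.update y j u, hx, ?_, hxx, ?_, ?_, ?_⟩
      · intro i
        by_cases hij : i = j
        · rw [hij, Function.update_self]; exact huS
        · rw [Function.update_of_ne hij]; exact hyS i hij
      · intro i k
        by_cases hij : i = j <;> by_cases hkj : k = j
        · rw [hij, hkj]; intro _; rfl
        · rw [hij, Function.update_self, Function.update_of_ne hkj]
          intro hle
          have h1 : x j ≤ y k := le_trans le_sup_left hle
          have h2 : x (j+1) ≤ y k := le_trans le_sup_right hle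
          rcases (hxy j k).1 h1 with h1' | h1'
          · exact absurd h1'.symm hkj
          · rcases (hxy (j+1) k).1 h2 with h2' | h2'
            · exact absurd (fc j k h1' h2'.symm) (fun f => f)
            · rw [← h2'] at h1'
              exact absurd h1' (fb j)
        · rw [hkj, Function.update_self, Function.update_of_ne hij]
          intro hle
          exact absurd (hyy i j (le_trans hle hujy)) hij
        · rw [Function.update_of_ne hij, Function.update_of_ne hkj]
          exact hyy i k
      · intro i k
        by_cases hij : i = j
        · rw [hij, Function.update_self]
          intro hle
          have h1 : x j ≤ x k := le_trans le_sup_left hle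
          have h2 : x (j+1) ≤ x k := le_trans le_sup_right hle
          have hjk := hxx j k h1
          rw [← hjk] at h2
          exact fa j (hxx (j+1) j h2)
        · rw [Function.update_of_ne hij]
          exact hyx i k
      · intro i k
        by_cases hkj : k = j
        · rw [hkj, Function.update_self]
          constructor
          · intro hle
            exact (hxy i j).1 (le_trans hle hujy)
          · rintro (rfl | h)
            · exact le_sup_left
            · rw [h]; exact le_sup_right
        · rw [Function.update_of_ne hkj]
          exact hxy i k
  · push_neg at hx
    obtain ⟨j, hj⟩ := hx
    have hxz : x j = z := by
      by_contra hne; exact hj (memS _ (hxT j) hne)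
    have hxS : ∀ k, k ≠ j → x k ∈ S := by
      intro k hk
      refine memS _ (hxT k) ?_
      rw [← hxz]
      intro hkj
      exact hk (hxx k j (le_of_eq hkj))
    have hyS : ∀ k, y k ∈ S := by
      intro k
      refine memS _ (hyT k) ?_
      rw [← hxz]
      intro hkj
      exact hyx k j (le_of_eq hkj)
    set v := y j ⊓ y (j + 2) with hv
    have hvS : v ∈ S := hS.infClosed (hyS j) (hyS (j + 2))
    have hxjv : x j ≤ v :=
      le_inf ((hxy j j).2 (Or.inl rfl)) ((hxy j (j+2)).2 (Or.inr (fd j)))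
    refine ⟨Function.update x j v, y, ?_, hyS, ?_, hyy, ?_, ?_⟩
    · intro i
      by_cases hij : i = j
      · rw [hij, Function.update_self]; exact hvS
      · rw [Function.update_of_ne hij]; exact hxS i hij
    · intro i k
      by_cases hij : i = j <;> by_cases hkj : k = j
      · rw [hij, hkj]; intro _; rfl
      · rw [hij, Function.update_self, Function.update_of_ne hkj]
        intro hle
        have h1 : x j ≤ x k := le_trans hxjv hle
        exact absurd (hxx j k h1).symm hkj
      · rw [hkj, Function.update_self, Function.update_of_ne hij]
        intro hle
        have h1 : x i ≤ y j := le_trans hle inf_le_left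
        have h2 : x i ≤ y (j+2) := le_trans hle inf_le_right
        rcases (hxy i j).1 h1 with h1' | h1'
        · exact h1'
        · rcases (hxy i (j+2)).1 h2 with h2' | h2'
          · exact absurd (fh i j h1' h2') (fun f => f)
          · rw [← fd j] at h2'
            exact h2'
      · rw [Function.update_of_ne hij, Function.update_of_ne hkj]
        exact hxx i k
    · intro i k
      by_cases hkj : k = j
      · rw [hkj, Function.update_self]
        intro hle
        have h1 : y i ≤ y j := le_trans hle inf_le_left
        have h2 : y i ≤ y (j+2) := le_trans hle inf_le_right
        have := hyy i j h1
        rw [this] at h2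
        exact ff j (hyy j (j+2) h2)
      · rw [Function.update_of_ne hkj]
        exact hyx i k
    · intro i k
      by_cases hij : i = j
      · rw [hij, Function.update_self]
        constructor
        · intro hle
          exact (hxy j k).1 (le_trans hxjv hle)
        · rintro (rfl | h)
          · exact inf_le_left
          · rw [fg j k h]; exact inf_le_right
      · rw [Function.update_of_ne hij]
        exact hxy i k

/-- A dismantlable lattice contains no crown of order 6. -/
lemma no_crown [Finite L] (h : Dismantlable L) {x y : Fin 3 → L}
    (hc : Crown3 Set.univ x y) : False := by
  obtain ⟨c, h1, h2, h3⟩ := h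
  have : Nonempty L := ⟨x 0⟩
  set N := Nat.card L with hN
  have hN1 : 1 ≤ N := Nat.card_pos
  have key : ∀ i, 1 ≤ i → i ≤ N → (∃ x y, Crown3 (c i) x y) → False := by
    intro i
    induction i using Nat.strong_induction_on with
    | _ i ih =>
      intro hi1 hiN ⟨x, y, hcr⟩
      rcases eq_or_lt_of_le hi1 with h1' | h1'
      · subst h1'
        obtain ⟨hci, hcard⟩ := h1 1 hi1 hiN
        rw [Nat.card_coe_set_eq, Set.ncard_eq_one] at hcard
        obtain ⟨t, ht⟩ := hcard
        obtain ⟨hx, hy, _, _, hyx, _⟩ := hcr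
        have hx0 := hx 0; have hy0 := hy 0
        rw [ht, Set.mem_singleton_iff] at hx0 hy0
        exact hyx 0 0 (le_of_eq (hy0.trans hx0.symm))
      · have hi1' : 1 ≤ i - 1 := by omega
        have hiN' : i - 1 < N := by omega
        have hsub : c (i - 1) ⊆ c (i - 1 + 1) := h2 (i - 1) hi1' hiN'
        have heq : i - 1 + 1 = i := by omega
        rw [heq] at hsub
        obtain ⟨hSi, hScard⟩ := h1 (i-1) hi1' (by omega)
        obtain ⟨_, hTcard⟩ := h1 i hi1 hiN
        have hfin : (c (i-1)).Finite := Set.toFinite _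
        have hd : (c i \ c (i-1)).ncard = 1 := by
          rw [Set.ncard_diff hsub hfin]
          rw [Nat.card_coe_set_eq] at hScard hTcard
          omega
        rw [Set.ncard_eq_one] at hd
        obtain ⟨z, hz⟩ := hd
        have hTz : c i ⊆ c (i-1) ∪ {z} := by
          intro t ht
          by_cases hts : t ∈ c (i-1)
          · exact Or.inl hts
          · right
            have : t ∈ c i \ c (i-1) := ⟨ht, hts⟩
            rw [hz] at this
            exact this
        obtain ⟨x', y', hcr'⟩ := crown3_step hSi z hTz hcr
        exact ih (i-1) (by omega) hi1' (by omega) ⟨x', y', hcr'⟩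
  exact key N hN1 le_rfl ⟨x, y, by rwa [h3]⟩

end CrownAux

section GrpAux
variable {G : Type*} [Group G] [Finite G]

lemma Kcard (a : G) {d : ℕ} (hd : d ∣ orderOf a) :
    Nat.card (Subgroup.zpowers (a ^ (orderOf a / d))) = d := by
  have hn0 : orderOf a ≠ 0 := (orderOf_pos a).ne'
  rw [Nat.card_zpowers, orderOf_pow, Nat.gcd_eq_right (Nat.div_dvd_of_dvd hd),
    Nat.div_div_self hd hn0]

lemma Kmono (a : G) {d e : ℕ} (hde : d ∣ e) (hen : e ∣ orderOf a) :
    Subgroup.zpowers (a ^ (orderOf a / d)) ≤ Subgroup.zpowers (a ^ (orderOf a / e)) := by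
  have he0 : e ≠ 0 := by
    rintro rfl
    simp only [Nat.zero_dvd] at hen
    exact (orderOf_pos a).ne' hen
  rw [Subgroup.zpowers_le]
  have key : a ^ (orderOf a / d) = (a ^ (orderOf a / e)) ^ (e / d) := by
    rw [← pow_mul]
    congr 1
    rw [Nat.div_mul_div_comm hen hde, mul_comm (orderOf a) e,
      Nat.mul_div_mul_left _ _ (Nat.pos_of_ne_zero he0)]
  rw [key]
  exact Subgroup.pow_mem _ (Subgroup.mem_zpowers _) _

lemma Kdvd (a : G) {d e : ℕ} (hdn : d ∣ orderOf a) (hen : e ∣ orderOf a)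
    (hle : Subgroup.zpowers (a ^ (orderOf a / d)) ≤ Subgroup.zpowers (a ^ (orderOf a / e))) :
    d ∣ e := by
  have := Subgroup.card_dvd_of_le hle
  rwa [Kcard a hdn, Kcard a hen] at this

/-- Three distinct primes dividing the order of an element yield a crown of order 6
in the subgroup lattice. -/
lemma crown_of_primes (a : G) {p q r : ℕ} (hp : p.Prime) (hq : q.Prime) (hr : r.Prime)
    (hpq : p ≠ q) (hpr : p ≠ r) (hqr : q ≠ r)
    (hpn : p ∣ orderOf a) (hqn : q ∣ orderOf a) (hrn : r ∣ orderOf a) :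
    ∃ x y : Fin 3 → Subgroup G, Crown3 Set.univ x y := by
  set n := orderOf a with hn
  set D : Fin 3 → ℕ := ![p, q, r] with hD
  have Dprime : ∀ i, (D i).Prime := by
    intro i; fin_cases i <;> simpa [D] using ‹_›
  have Ddvd : ∀ i, D i ∣ n := by
    intro i; fin_cases i <;> simpa [D] using ‹_›
  have injD : ∀ i j, D i = D j → i = j := by
    intro i j h
    fin_cases i <;> fin_cases j <;> simp_all [D]
  have hA : ∀ i j, D i ∣ D j → i = j := fun i j h =>
    injD i j ((Nat.prime_dvd_prime_iff_eq (Dprime i) (Dprime j)).mp h)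
  have hB : ∀ i j : Fin 3, D i ∣ D j * D (j + 1) ↔ (i = j ∨ i = j + 1) := by
    intro i j
    constructor
    · intro h
      rcases (Nat.Prime.dvd_mul (Dprime i)).mp h with h | h
      · exact Or.inl (hA i j h)
      · exact Or.inr (hA i (j+1) h)
    · rintro (rfl | h)
      · exact dvd_mul_right _ _
      · rw [h]; exact dvd_mul_left _ _
  have fa : ∀ m : Fin 3, m + 1 ≠ m := by decide
  have hC : ∀ i j : Fin 3, ¬ D i * D (i + 1) ∣ D j := by
    intro i j h
    have h1 := hA i j (dvd_trans (dvd_mul_right _ _) h)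
    have h2 := hA (i+1) j (dvd_trans (dvd_mul_left _ _) h)
    rw [← h1] at h2
    exact fa i h2
  have hDd : ∀ i j : Fin 3, D i * D (i + 1) ∣ D j * D (j + 1) → i = j := by
    intro i j h
    have h1 := (hB i j).mp (dvd_trans (dvd_mul_right _ _) h)
    have h2 := (hB (i+1) j).mp (dvd_trans (dvd_mul_left _ _) h)
    rcases h1 with h1 | h1
    · exact h1
    · rcases h2 with h2 | h2
      · exfalso
        have fz : ∀ m k : Fin 3, m = k + 1 → m + 1 = k → False := by decide
        exact fz i j h1 h2
      · rw [add_left_inj] at h2; exact h2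
  have Dcop : ∀ i : Fin 3, D i * D (i + 1) ∣ n := by
    intro i
    refine (Nat.Coprime.mul_dvd_of_dvd_of_dvd ?_ (Ddvd i) (Ddvd (i+1)))
    exact (Nat.coprime_primes (Dprime i) (Dprime (i+1))).mpr
      (fun h => fa i (injD (i+1) i h.symm))
  refine ⟨fun i => Subgroup.zpowers (a ^ (n / D i)),
         fun i => Subgroup.zpowers (a ^ (n / (D i * D (i + 1)))),
         fun _ => trivial, fun _ => trivial, ?_, ?_, ?_, ?_⟩
  · intro i j hle
    exact hA i j (Kdvd a (Ddvd i) (Ddvd j) hle)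
  · intro i j hle
    exact hDd i j (Kdvd a (Dcop i) (Dcop j) hle)
  · intro i j hle
    exact hC i j (Kdvd a (Dcop i) (Ddvd j) hle)
  · intro i j
    constructor
    · intro hle
      exact (hB i j).mp (Kdvd a (Ddvd i) (Dcop j) hle)
    · intro h
      exact Kmono a ((hB i j).mpr h) (Dcop j)

end GrpAux

/-- If `G` is a finite group whose subgroup lattice is dismantlable, then the order of
every element of `G` is of the form `p ^ n` or `p ^ n * q ^ m` with `p`, `q` prime. -/
theorem stmt6 {G : Type*} [Group G] [Finite G]
    (h : Dismantlable (Subgroup G)) (a : G) :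
    ∃ p q n m : ℕ, p.Prime ∧ q.Prime ∧
      (orderOf a = p ^ n ∨ orderOf a = p ^ n * q ^ m) := by
  set n := orderOf a with hn
  have hn0 : n ≠ 0 := (orderOf_pos a).ne'
  by_cases h3 : 3 ≤ n.primeFactors.card
  · exfalso
    obtain ⟨t, hts, htc⟩ := Finset.exists_subset_card_eq h3
    obtain ⟨p, q, r, hpq, hpr, hqr, ht⟩ := Finset.card_eq_three.mp htc
    have hmem : ∀ s, s ∈ t → s.Prime ∧ s ∣ n := fun s hs =>
      ⟨Nat.prime_of_mem_primeFactors (hts hs),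
       Nat.dvd_of_mem_primeFactors (hts hs)⟩
    have hp := hmem p (by rw [ht]; simp)
    have hq := hmem q (by rw [ht]; simp)
    have hr := hmem r (by rw [ht]; simp)
    obtain ⟨x, y, hcr⟩ := crown_of_primes a hp.1 hq.1 hr.1 hpq hpr hqr hp.2 hq.2 hr.2
    exact no_crown h hcr
  · push_neg at h3
    interval_cases hc : n.primeFactors.card
    · have hone : n = 1 := by
        rcases Nat.primeFactors_eq_empty.mp (Finset.card_eq_zero.mp hc) with h' | h'
        · exact absurd h' hn0
        · exact h'
      exact ⟨2, 2, 0, 0, Nat.prime_two, Nat.prime_two, Or.inl (by simp [hone])⟩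
    · obtain ⟨p, hps⟩ := Finset.card_eq_one.mp hc
      have hp : p.Prime := Nat.prime_of_mem_primeFactors
        (by rw [hps]; exact Finset.mem_singleton_self p)
      refine ⟨p, p, n.factorization p, 0, hp, hp, Or.inl ?_⟩
      conv_lhs => rw [← Nat.factorization_prod_pow_eq_self hn0]
      rw [Nat.prod_factorization_eq_prod_primeFactors, hps, Finset.prod_singleton]
    · obtain ⟨p, q, hpq, hps⟩ := Finset.card_eq_two.mp hc
      have hp : p.Prime := Nat.prime_of_mem_primeFactors (by rw [hps]; simp)
      have hq : q.Prime := Nat.prime_of_mem_primeFactors (by rw [hps]; simp)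
      refine ⟨p, q, n.factorization p, n.factorization q, hp, hq, Or.inr ?_⟩
      conv_lhs => rw [← Nat.factorization_prod_pow_eq_self hn0]
      rw [Nat.prod_factorization_eq_prod_primeFactors, hps, Finset.prod_pair hpq]
end

section
/- For a natural number n, the subgroup lattice of the alternating group Aₙ is dismantlable if and only if n ≤ 4. -/
/-
For `n ≥ 5`, let `t a` be the 3-cycle `(0 1 (a + 2))` for `a ∈ ℤ/3`. The stabiliser of the point
`a + 2` contains every `t j` except `t a`, so the subgroup generated by some of these 3-cycles
contains `t a` only if `t a` is one of them. Hence the cyclic subgroups `⟨t a⟩` and the subgroups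
`⟨t a, t (a + 1)⟩` form a crown of order 6 in the subgroup lattice. A crown in a lattice survives
the removal of a single element from a sublattice: a lower element `x i` can be replaced by
`y i ⊓ y (i - 1)`, an upper one, dually, by `x i ⊔ x (i + 1)`. Going down a dismantling chain,
the crown would end up inside a one-element sublattice, which is absurd.

For `n ≤ 3` the group `Aₙ` has order 1 or 3, so its subgroup lattice is a chain. For `n = 4`,
`A₄` has no subgroup of order 6 (it would contain the commutator subgroup `V₄`), so every subgroup
other than `1`, `V₄` and `A₄` has prime order and is contained only in itself, `V₄` and `A₄`.
Listing `1`, `V₄`, `A₄` first and the remaining subgroups afterwards, every initial segment is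
a sublattice.
-/

theorem Fin.add_one_ne_self {m : ℕ} [NeZero m] (hm : 2 ≤ m) (i : Fin m) : i + 1 ≠ i := by
  rw [Ne, add_eq_left]
  simp [Fin.ext_iff, Nat.mod_eq_of_lt (show 1 < m by omega)]

theorem Fin.add_one_add_one_ne_self {m : ℕ} [NeZero m] (hm : 3 ≤ m) (i : Fin m) :
    i + 1 + 1 ≠ i := by
  rw [Ne, add_assoc, add_eq_left]
  simp [Fin.ext_iff, Fin.val_add, Nat.mod_eq_of_lt (show 1 < m by omega),
    Nat.mod_eq_of_lt (show 2 < m by omega)]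

theorem Fin.eq_add_one_iff_val_eq {m : ℕ} [NeZero m] (i j : Fin m) :
    i = j + 1 ↔ (i : ℕ) = ((j : ℕ) + 1) % m := by
  rw [Fin.ext_iff, Fin.val_add, Fin.val_one', Nat.add_mod_mod]

theorem IsChain.isSublattice {L : Type*} [Lattice L] {S : Set L} (hS : IsChain (· ≤ ·) S) :
    IsSublattice S where
  supClosed _ ha _ hb := (hS.total ha hb).elim (fun h => (sup_of_le_right h).symm ▸ hb)
    (fun h => (sup_of_le_left h).symm ▸ ha)
  infClosed _ ha _ hb := (hS.total ha hb).elim (fun h => (inf_of_le_left h).symm ▸ ha)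
    (fun h => (inf_of_le_right h).symm ▸ hb)

theorem isChain_bot_insert_top {α : Type*} [PartialOrder α] [BoundedOrder α] (a : α) :
    IsChain (· ≤ ·) ({⊥, a, ⊤} : Set α) := by
  rintro b (rfl | rfl | rfl) c (rfl | rfl | rfl) - <;> simp

theorem isChain_Ici_of_forall_le {α : Type*} [PartialOrder α] [OrderTop α] {a c : α}
    (h : ∀ b, a ≤ b → b = a ∨ b = c ∨ b = ⊤) : IsChain (· ≤ ·) (Set.Ici a) := by
  rintro b hb d hd -
  rcases h b hb with rfl | rfl | rfl <;> rcases h d hd with rfl | rfl | rfl <;> simp_all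

section Dismantlable

variable {L : Type*} [Lattice L] [Finite L]

theorem Dismantlable.of_list (l : List L) (hnd : l.Nodup) (hmem : ∀ a, a ∈ l)
    (hsub : ∀ k, IsSublattice {a | a ∈ l.take k}) : Dismantlable L := by
  classical
  have hcard : Nat.card L = l.length :=
    Nat.card_eq_of_equiv_fin (hnd.getEquivOfForallMemList l hmem).symm
  refine ⟨fun k => {a | a ∈ l.take k}, fun k _ hk => ⟨hsub k, ?_⟩,
    fun k _ _ => List.take_subset_take_left l k.le_succ, ?_⟩
  · dsimp only
    rw [Nat.card_coe_set_eq, ← List.coe_toFinset, Set.ncard_coe_finset,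
      List.toFinset_card_of_nodup (hnd.sublist (List.take_sublist k l)), List.length_take]
    omega
  · ext a
    simp [hcard, hmem]

theorem Dismantlable.of_isChain {S : Set L} (hS : IsChain (· ≤ ·) S)
    (hout : ∀ a ∉ S, IsChain (· ≤ ·) (Set.Iic a) ∧ IsChain (· ≤ ·) (Set.Ici a)) :
    Dismantlable L := by
  classical
  have hsup : ∀ a b, a ⊔ b ∉ S → a ⊔ b = a ∨ a ⊔ b = b := fun a b h =>
    ((hout _ h).1.total (le_sup_left : a ≤ a ⊔ b) le_sup_right).symm.imp
      sup_of_le_left sup_of_le_right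
  have hinf : ∀ a b, a ⊓ b ∉ S → a ⊓ b = a ∨ a ⊓ b = b := fun a b h =>
    ((hout _ h).2.total (inf_le_left : a ⊓ b ≤ a) inf_le_right).imp
      inf_of_le_left inf_of_le_right
  have hsuperset : ∀ T, S ⊆ T → IsSublattice T := fun T hST =>
    { supClosed := fun a ha b hb => by
        by_cases h : a ⊔ b ∈ S
        · exact hST h
        · rcases hsup a b h with h | h <;> rw [h] <;> assumption
      infClosed := fun a ha b hb => by
        by_cases h : a ⊓ b ∈ S
        · exact hST h
        · rcases hinf a b h with h | h <;> rw [h] <;> assumption }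
  -- List `S` first: every initial segment is then contained in the chain `S` or contains `S`.
  obtain ⟨l, hnd, hmem⟩ := Finite.exists_univ_list L
  set lS := l.filter (· ∈ S)
  set lR := l.filter (· ∉ S)
  have hlS : ∀ a, a ∈ lS ↔ a ∈ S := fun a => by simp [lS, hmem]
  have hlR : ∀ a, a ∈ lR ↔ a ∉ S := fun a => by simp [lR, hmem]
  refine Dismantlable.of_list (lS ++ lR) ((hnd.filter _).append (hnd.filter _)
    fun a ha ha' => (hlR a).1 ha' ((hlS a).1 ha)) (fun a => ?_) fun k => ?_
  · by_cases ha : a ∈ S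
    · exact List.mem_append_left _ ((hlS a).2 ha)
    · exact List.mem_append_right _ ((hlR a).2 ha)
  · rcases le_total k lS.length with hk | hk
    · rw [List.take_append_of_le_length hk]
      exact (hS.mono fun a ha => (hlS a).1 (List.mem_of_mem_take ha)).isSublattice
    · refine hsuperset _ fun a ha => ?_
      rw [Set.mem_ofPred_eq, List.take_append, List.take_of_length_le hk]
      exact List.mem_append_left _ ((hlS a).2 ha)

end Dismantlable

namespace IsCrown

variable {P : Type*} [PartialOrder P] {m : ℕ} {x y : Fin m → P}

theorem neZero (hc : IsCrown x y) : NeZero m := ⟨by have := hc.1; omega⟩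

theorem le_iff [NeZero m] (hc : IsCrown x y) (i j : Fin m) : x i ≤ y j ↔ i = j ∨ i = j + 1 := by
  rw [hc.2.2.2.2.2.2.2, Fin.eq_add_one_iff_val_eq]

theorem of_le_iff [NeZero m] (hm : 3 ≤ m) (hxx : ∀ i j, x i ≤ x j → i = j)
    (hyy : ∀ i j, y i ≤ y j → i = j) (hyx : ∀ i j, ¬ y i ≤ x j)
    (hle : ∀ i j, x i ≤ y j ↔ i = j ∨ i = j + 1) : IsCrown x y :=
  ⟨hm, fun i j h => hxx i j h.le, fun i j h => hyy i j h.le, fun i j h => hyx j i h.ge,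
    hxx, hyy, hyx, fun i j => by rw [hle, Fin.eq_add_one_iff_val_eq]⟩

theorem update_lower (hc : IsCrown x y) (i : Fin m) {z : P} (hzy : ∀ j, z ≤ y j ↔ x i ≤ y j)
    (hxz : ∀ j ≠ i, ¬ x j ≤ z) (hzx : ∀ j ≠ i, ¬ z ≤ x j) (hyz : ∀ j, ¬ y j ≤ z) :
    IsCrown (Function.update x i z) y := by
  have := hc.neZero
  have hle := hc.le_iff
  obtain ⟨hm, -, -, -, hxx, hyy, hyx, -⟩ := hc
  refine of_le_iff hm (fun u v huv => ?_) hyy (fun u v => ?_) (fun u v => ?_)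
  · by_cases hu : u = i <;> by_cases hv : v = i
    · rw [hu, hv]
    · rw [hu, Function.update_self, Function.update_of_ne hv] at huv
      exact absurd huv (hzx v hv)
    · rw [hv, Function.update_self, Function.update_of_ne hu] at huv
      exact absurd huv (hxz u hu)
    · rw [Function.update_of_ne hu, Function.update_of_ne hv] at huv
      exact hxx u v huv
  · by_cases hv : v = i
    · rw [hv, Function.update_self]; exact hyz u
    · rw [Function.update_of_ne hv]; exact hyx u v
  · by_cases hu : u = i
    · rw [hu, Function.update_self, hzy, hle]
    · rw [Function.update_of_ne hu, hle]

theorem dual (hc : IsCrown x y) :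
    IsCrown (fun i => OrderDual.toDual (y (-i))) (fun i => OrderDual.toDual (x (-i))) := by
  have := hc.neZero
  have hle := hc.le_iff
  obtain ⟨hm, -, -, -, hxx, hyy, hyx, -⟩ := hc
  refine of_le_iff hm (fun i j h => neg_inj.1 (hyy _ _ h).symm)
    (fun i j h => neg_inj.1 (hxx _ _ h).symm) (fun i j => hyx _ _) (fun i j => ?_)
  change x (-j) ≤ y (-i) ↔ _
  rw [hle, neg_inj]
  exact or_congr eq_comm (by rw [neg_eq_iff_eq_neg, neg_add', neg_neg, eq_sub_iff_add_eq, eq_comm])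

section Lattice

variable {L : Type*} [Lattice L] {x y : Fin m → L} {A : Set L}

theorem exists_update_lower (hc : IsCrown x y) (hA : IsSublattice A) (i : Fin m)
    (hx : ∀ j ≠ i, x j ∈ A) (hy : ∀ j, y j ∈ A) : ∃ x', IsCrown x' y ∧ ∀ j, x' j ∈ A := by
  have := hc.neZero
  have hle := hc.le_iff
  have ⟨hm, _, _, _, hxx, hyy, _, _⟩ := hc
  -- `x i` lies below exactly `y i` and `y (i - 1)`, and so does their meet.
  set z := y i ⊓ y (i - 1)
  have hxz : x i ≤ z :=
    le_inf ((hle i i).2 (Or.inl rfl)) ((hle i _).2 (Or.inr (sub_add_cancel i 1).symm))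
  refine ⟨Function.update x i z, hc.update_lower i (fun j => ⟨hxz.trans, fun h => ?_⟩)
    (fun j hj h => ?_) (fun j hj h => hj (hxx i j (hxz.trans h)).symm) (fun j h => ?_),
    fun j => ?_⟩
  · rcases (hle i j).1 h with rfl | rfl
    · exact inf_le_left
    · exact inf_le_right.trans_eq (congrArg y (add_sub_cancel_right j 1))
  · rcases (hle j i).1 (h.trans inf_le_left) with rfl | rfl
    · exact hj rfl
    rcases (hle _ _).1 (h.trans inf_le_right) with h' | h'
    · exact Fin.add_one_add_one_ne_self hm (i - 1) (by rw [sub_add_cancel, h'])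
    · exact hj (by rw [h', sub_add_cancel])
  · have h1 := hyy j i (h.trans inf_le_left)
    have h2 := hyy j _ (h.trans inf_le_right)
    exact Fin.add_one_ne_self (by omega) (i - 1) (by rw [sub_add_cancel]; exact h1.symm.trans h2)
  · by_cases hj : j = i
    · rw [hj, Function.update_self]; exact hA.infClosed (hy i) (hy _)
    · rw [Function.update_of_ne hj]; exact hx j hj

theorem exists_update_upper (hc : IsCrown x y) (hA : IsSublattice A) (i : Fin m)
    (hx : ∀ j, x j ∈ A) (hy : ∀ j ≠ i, y j ∈ A) : ∃ y', IsCrown x y' ∧ ∀ j, y' j ∈ A := by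
  have := hc.neZero
  obtain ⟨x', hc', hx'⟩ := hc.dual.exists_update_lower hA.dual (-i)
    (fun j hj => hy _ fun h => hj (neg_eq_iff_eq_neg.1 h)) fun j => hx _
  refine ⟨fun j => OrderDual.ofDual (x' (-j)), ?_, fun j => hx' _⟩
  have hc'' := hc'.dual
  simp only [neg_neg] at hc''
  -- `Lᵒᵈᵒᵈ` is `L` only up to unfolding, which `simpa` does not perform.
  exact hc''

theorem exists_of_subset_insert (hc : IsCrown x y) (hA : IsSublattice A) {a : L}
    (hx : ∀ i, x i ∈ insert a A) (hy : ∀ i, y i ∈ insert a A) :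
    ∃ x' y' : Fin m → L, IsCrown x' y' ∧ (∀ i, x' i ∈ A) ∧ ∀ i, y' i ∈ A := by
  have ⟨_, hxinj, hyinj, hxy, _⟩ := hc
  by_cases hxa : ∃ i, x i = a
  · obtain ⟨i, rfl⟩ := hxa
    have hy' : ∀ j, y j ∈ A := fun j => (hy j).resolve_left (hxy i j).symm
    obtain ⟨x', hc', hx'⟩ := hc.exists_update_lower hA i
      (fun j hj => (hx j).resolve_left (hxinj.ne hj)) hy'
    exact ⟨x', y, hc', hx', hy'⟩
  by_cases hya : ∃ i, y i = a
  · obtain ⟨i, rfl⟩ := hya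
    have hx' : ∀ j, x j ∈ A := fun j => (hx j).resolve_left (hxy j i)
    obtain ⟨y', hc', hy'⟩ := hc.exists_update_upper hA i hx'
      (fun j hj => (hy j).resolve_left (hyinj.ne hj))
    exact ⟨x, y', hc', hx', hy'⟩
  simp only [not_exists] at hxa hya
  exact ⟨x, y, hc, fun i => (hx i).resolve_left (hxa i), fun i => (hy i).resolve_left (hya i)⟩

theorem not_dismantlable [Finite L] (hc : IsCrown x y) : ¬ Dismantlable L := by
  rintro ⟨c, hcard, hmono, htop⟩
  have := hc.neZero
  have : Nonempty L := ⟨x 0⟩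
  have hN : 1 ≤ Nat.card L := Nat.card_pos
  obtain ⟨x', _, hc', hx', -⟩ : ∃ x' y' : Fin m → L, IsCrown x' y' ∧ (∀ i, x' i ∈ c 1) ∧
      ∀ i, y' i ∈ c 1 := by
    refine Nat.decreasingInduction' (fun k hkN hk ⟨x', y', hc', hx', hy'⟩ => ?_) hN
      ⟨x, y, hc, fun i => htop ▸ trivial, fun i => htop ▸ trivial⟩
    have hk' : (c k).encard + 1 = (c (k + 1)).encard := by
      rw [← (c k).toFinite.cast_ncard_eq, ← (c (k + 1)).toFinite.cast_ncard_eq,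
        ← Nat.card_coe_set_eq, ← Nat.card_coe_set_eq, (hcard k hk hkN.le).2,
        (hcard (k + 1) (by omega) hkN).2, Nat.cast_succ]
    obtain ⟨a, ha⟩ := (c k).toFinite.eq_insert_of_subset_of_encard_eq_succ
      (hmono k hk hkN) hk'.symm
    exact hc'.exists_of_subset_insert (hcard k hk hkN.le).1 (ha ▸ hx') (ha ▸ hy')
  obtain ⟨a, ha⟩ := Set.ncard_eq_one.1 (Nat.card_coe_set_eq (c 1) ▸ (hcard 1 le_rfl hN).2)
  have h0 : x' 0 = a := by simpa [ha] using hx' 0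
  have h1 : x' (0 + 1) = a := by simpa [ha] using hx' (0 + 1)
  exact Fin.add_one_ne_self (by have := hc'.1; omega) 0 (hc'.2.1 (h1.trans h0.symm))

end Lattice

end IsCrown

namespace Subgroup

variable {G : Type*} [Group G] {ι : Type*} {t : ι → G}

theorem mem_closure_image_iff (hsep : ∀ a, ∃ H : Subgroup G, t a ∉ H ∧ ∀ j ≠ a, t j ∈ H)
    {s : Set ι} {a : ι} : t a ∈ closure (t '' s) ↔ a ∈ s := by
  refine ⟨fun h => ?_, fun h => subset_closure (Set.mem_image_of_mem t h)⟩
  by_contra ha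
  obtain ⟨H, htH, hH⟩ := hsep a
  refine htH ((closure_le H).2 ?_ h)
  rintro _ ⟨j, hj, rfl⟩
  exact hH j (ne_of_mem_of_not_mem hj ha)

theorem closure_image_le_closure_image_iff
    (hsep : ∀ a, ∃ H : Subgroup G, t a ∉ H ∧ ∀ j ≠ a, t j ∈ H) {s s' : Set ι} :
    closure (t '' s) ≤ closure (t '' s') ↔ s ⊆ s' :=
  ⟨fun h _ ha => (mem_closure_image_iff hsep).1 (h (subset_closure (Set.mem_image_of_mem t ha))),
    fun h => closure_mono (Set.image_mono h)⟩

theorem isCrown_closure_image {m : ℕ} [NeZero m] (hm : 3 ≤ m) {t : Fin m → G}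
    (hsep : ∀ a, ∃ H : Subgroup G, t a ∉ H ∧ ∀ j ≠ a, t j ∈ H) :
    IsCrown (fun i => closure (t '' {i})) (fun i => closure (t '' {i, i + 1})) := by
  refine IsCrown.of_le_iff hm ?_ ?_ ?_ ?_ <;>
    simp only [closure_image_le_closure_image_iff hsep, Set.singleton_subset_iff,
      Set.insert_subset_iff, Set.mem_insert_iff, Set.mem_singleton_iff]
  · exact fun i j => id
  · rintro i j ⟨rfl | rfl, h⟩
    · rfl
    · rcases h with h | h
      · exact absurd h (Fin.add_one_add_one_ne_self hm j)
      · exact absurd (add_right_cancel h) (Fin.add_one_ne_self (by omega) j)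
  · exact fun i j h => Fin.add_one_ne_self (by omega) i (h.2.trans h.1.symm)
  · exact fun _ _ => trivial

theorem isChain_Iic_of_prime_card {H : Subgroup G} (hp : (Nat.card H).Prime) :
    IsChain (· ≤ ·) (Set.Iic H) := by
  have : Finite H := Nat.finite_of_card_ne_zero hp.ne_zero
  have hK : ∀ K ≤ H, K = ⊥ ∨ K = H := fun K hK =>
    ((Nat.dvd_prime hp).1 (card_dvd_of_le hK)).imp card_eq_one.1
      fun h => eq_of_le_of_card_ge hK h.ge
  rintro K₁ h₁ K₂ h₂ -
  rcases hK K₁ h₁ with rfl | rfl <;> simp_all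

theorem eq_bot_or_eq_top_of_card_dvd_prime {p : ℕ} (hp : p.Prime) (hG : Nat.card G ∣ p)
    (H : Subgroup G) : H = ⊥ ∨ H = ⊤ := by
  have : Finite G := Nat.finite_of_card_ne_zero (ne_zero_of_dvd_ne_zero hp.ne_zero hG)
  refine ((Nat.dvd_prime hp).1 (H.card_subgroup_dvd_card.trans hG)).imp card_eq_one.1
    fun h => (card_eq_iff_eq_top H).1 (le_antisymm (card_le_card_group H) ?_)
  exact h ▸ Nat.le_of_dvd hp.pos hG

end Subgroup

namespace alternatingGroup

open Equiv Subgroup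

variable {α : Type*} [Fintype α] [DecidableEq α]

/-- The 3-cycles `t a = (u v (w a))` are separated by the stabilisers of the points `w a`. -/
theorem exists_isCrown_subgroup {m : ℕ} (hm : 3 ≤ m) {u v : α} (w : Fin m → α)
    (hw : Function.Injective w) (huv : u ≠ v) (hu : ∀ a, w a ≠ u) (hv : ∀ a, w a ≠ v) :
    ∃ x y : Fin m → Subgroup (alternatingGroup α), IsCrown x y := by
  have : NeZero m := ⟨by omega⟩
  let t : Fin m → alternatingGroup α := fun a =>
    ⟨swap u (w a) * swap u v,
      (Perm.isThreeCycle_swap_mul_swap_same (hu a).symm huv (hv a)).mem_alternatingGroup⟩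
  refine ⟨_, _, Subgroup.isCrown_closure_image hm (t := t) fun a =>
    ⟨MulAction.stabilizer (alternatingGroup α) (w a), ?_, fun j hj => ?_⟩⟩
  · simp [t, MulAction.mem_stabilizer_iff, Subgroup.smul_def, Perm.smul_def,
      swap_apply_of_ne_of_ne (hu a) (hv a), (hu a).symm]
  · simp [t, MulAction.mem_stabilizer_iff, Subgroup.smul_def, Perm.smul_def,
      swap_apply_of_ne_of_ne (hu a) (hv a), swap_apply_of_ne_of_ne (hu a) (hw.ne hj.symm)]

theorem not_dismantlable_subgroup_fin {n : ℕ} (hn : 5 ≤ n) :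
    ¬ Dismantlable (Subgroup (alternatingGroup (Fin n))) := by
  obtain ⟨x, y, hc⟩ := exists_isCrown_subgroup le_rfl
    (u := (⟨0, by omega⟩ : Fin n)) (v := ⟨1, by omega⟩) (fun a : Fin 3 => ⟨a + 2, by omega⟩)
    (fun a b h => Fin.ext (by simpa using h)) (by simp) (by simp) (by simp)
  exact hc.not_dismantlable

theorem dismantlable_subgroup_fin_of_le_three {n : ℕ} (hn : n ≤ 3) :
    Dismantlable (Subgroup (alternatingGroup (Fin n))) := by
  have hcard : Nat.card (alternatingGroup (Fin n)) ∣ 3 := by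
    interval_cases n <;> simp only [Nat.card_eq_fintype_card] <;> decide
  have hbt := eq_bot_or_eq_top_of_card_dvd_prime Nat.prime_three hcard
  refine Dismantlable.of_isChain (S := Set.univ) (fun H _ K _ _ => ?_)
    fun H hH => absurd trivial hH
  rcases hbt H with rfl | rfl <;> simp

theorem card_subgroup_fin_four_ne_six (H : Subgroup (alternatingGroup (Fin 4))) :
    Nat.card H ≠ 6 := by
  intro h6
  have hidx : H.index = 2 := by
    have := H.index_mul_card
    rw [h6, card_of_card_eq_four (by simp)] at this
    omega
  have := normal_of_index_eq_two hidx
  -- The quotient by `H` has order 2, hence is abelian, so `H` contains the commutator subgroup.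
  have hV : kleinFour (Fin 4) ≤ H := by
    rw [kleinFour_eq_commutator (by simp), ← Normal.quotient_commutative_iff_commutator_le]
    have : Fact (Nat.Prime 2) := ⟨Nat.prime_two⟩
    exact (isCyclic_of_prime_card (H.index_eq_card.symm.trans hidx)).isMulCommutative
  have := card_dvd_of_le hV
  rw [kleinFour_card_of_card_eq_four (by simp), h6] at this
  norm_num at this

theorem subgroup_fin_four_cases (H : Subgroup (alternatingGroup (Fin 4))) :
    H = ⊥ ∨ (Nat.card H = 2 ∨ Nat.card H = 3) ∨ H = kleinFour (Fin 4) ∨ H = ⊤ := by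
  have hcard := card_of_card_eq_four (α := Fin 4) (by simp)
  have hdiv : Nat.card H ∈ Nat.divisors 12 :=
    Nat.mem_divisors.2 ⟨hcard ▸ H.card_subgroup_dvd_card, by norm_num⟩
  rw [show Nat.divisors 12 = {1, 2, 3, 4, 6, 12} by decide] at hdiv
  simp only [Finset.mem_insert, Finset.mem_singleton, card_subgroup_fin_four_ne_six H,
    false_or] at hdiv
  rcases hdiv with h | h | h | h | h
  · exact Or.inl (card_eq_one.1 h)
  · exact Or.inr (Or.inl (Or.inl h))
  · exact Or.inr (Or.inl (Or.inr h))
  · obtain ⟨S, hS⟩ := (IsPGroup.of_card (p := 2) (n := 2) h).exists_le_sylow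
    rw [two_sylow_eq_kleinFour_of_card_eq_four (by simp) S] at hS
    exact Or.inr (Or.inr (Or.inl (eq_of_le_of_card_ge hS
      (by rw [h, kleinFour_card_of_card_eq_four (by simp)]))))
  · exact Or.inr (Or.inr (Or.inr ((card_eq_iff_eq_top H).1 (h.trans hcard.symm))))

theorem eq_or_eq_kleinFour_or_eq_top_of_le {H K : Subgroup (alternatingGroup (Fin 4))}
    (hH : Nat.card H = 2 ∨ Nat.card H = 3) (hHK : H ≤ K) :
    K = H ∨ K = kleinFour (Fin 4) ∨ K = ⊤ := by
  have hdvd := card_dvd_of_le hHK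
  rcases subgroup_fin_four_cases K with rfl | hK | rfl | rfl
  · rw [le_bot_iff.1 hHK, card_bot] at hH
    omega
  · refine Or.inl (eq_of_le_of_card_ge hHK ?_).symm
    rcases hH with h | h <;> rcases hK with hK | hK <;> rw [hK, h] at hdvd ⊢ <;>
      omega
  · exact Or.inr (Or.inl rfl)
  · exact Or.inr (Or.inr rfl)

theorem dismantlable_subgroup_fin_four : Dismantlable (Subgroup (alternatingGroup (Fin 4))) := by
  refine Dismantlable.of_isChain (isChain_bot_insert_top (kleinFour (Fin 4))) fun H hH => ?_
  simp only [Set.mem_insert_iff, Set.mem_singleton_iff, not_or] at hH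
  have hcard : Nat.card H = 2 ∨ Nat.card H = 3 := by
    rcases subgroup_fin_four_cases H with h | h | h | h <;> simp_all
  refine ⟨isChain_Iic_of_prime_card (by rcases hcard with h | h <;> rw [h] <;> norm_num),
    isChain_Ici_of_forall_le fun K hK => eq_or_eq_kleinFour_or_eq_top_of_le hcard hK⟩

end alternatingGroup

/-- The subgroup lattice of the alternating group `Aₙ` is dismantlable iff `n ≤ 4`. -/
theorem stmt7 (n : ℕ) :
    Dismantlable (Subgroup (alternatingGroup (Fin n))) ↔ n ≤ 4 := by
  refine ⟨fun h => ?_, fun hn => ?_⟩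
  · by_contra! hn
    exact alternatingGroup.not_dismantlable_subgroup_fin hn h
  · rcases Nat.lt_or_eq_of_le hn with hn | rfl
    · exact alternatingGroup.dismantlable_subgroup_fin_of_le_three (by omega)
    · exact alternatingGroup.dismantlable_subgroup_fin_four
end

section
/- For a natural number n, the subgroup lattice of the symmetric group Sₙ is dismantlable if and only if n ≤ 3. -/
namespace CrownAux

/-- `a` is the cyclic successor of `b` in `Fin m`. -/
def S {m : ℕ} (a b : Fin m) : Prop := (a:ℕ) = (b:ℕ) + 1 ∨ ((b:ℕ) + 1 = m ∧ (a:ℕ) = 0)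

variable {m : ℕ}

lemma S_iff {a b : Fin m} : (a:ℕ) = ((b:ℕ) + 1) % m ↔ S a b := by
  have ha := a.isLt; have hb := b.isLt
  rcases Nat.lt_or_ge ((b:ℕ) + 1) m with h | h
  · rw [Nat.mod_eq_of_lt h]; unfold S; omega
  · have hbm : (b:ℕ) + 1 = m := by omega
    rw [hbm, Nat.mod_self]; unfold S; omega

lemma S_pred_uniq {a b c : Fin m} (h1 : S a b) (h2 : S a c) : b = c := by
  have := a.isLt; have := b.isLt; have := c.isLt
  apply Fin.ext; rcases h1 with h1 | h1 <;> rcases h2 with h2 | h2 <;> omega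

lemma S_succ_uniq {a b c : Fin m} (h1 : S a c) (h2 : S b c) : a = b := by
  have := a.isLt; have := b.isLt; have := c.isLt
  apply Fin.ext; rcases h1 with h1 | h1 <;> rcases h2 with h2 | h2 <;> omega

lemma S_ne {a b : Fin m} (hm : 2 ≤ m) (h : S a b) : a ≠ b := by
  intro he; have := a.isLt; have := b.isLt
  have hv : (a:ℕ) = (b:ℕ) := congrArg Fin.val he
  rcases h with h | h <;> omega

lemma S_asymm {a b : Fin m} (hm : 3 ≤ m) (h1 : S a b) (h2 : S b a) : False := by
  have := a.isLt; have := b.isLt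
  rcases h1 with h1 | h1 <;> rcases h2 with h2 | h2 <;> omega

lemma S_pred_exists (hm : 1 ≤ m) (i : Fin m) : ∃ p : Fin m, S i p := by
  by_cases h : (i:ℕ) = 0
  · exact ⟨⟨m - 1, by omega⟩, Or.inr (by simpa using by omega)⟩
  · exact ⟨⟨(i:ℕ) - 1, by have := i.isLt; omega⟩, Or.inl (by have := i.isLt; simp; omega)⟩

lemma S_succ_exists (hm : 1 ≤ m) (i : Fin m) : ∃ q : Fin m, S q i := by
  by_cases h : (i:ℕ) + 1 = m
  · exact ⟨⟨0, by omega⟩, Or.inr ⟨h, rfl⟩⟩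
  · exact ⟨⟨(i:ℕ) + 1, by have := i.isLt; omega⟩, Or.inl rfl⟩

end CrownAux

open CrownAux

section Crown

variable {L : Type*} [Lattice L]

def CrownIn (s : Set L) : Prop :=
  ∃ (m : ℕ) (x y : Fin m → L), IsCrown x y ∧ (∀ i, x i ∈ s) ∧ (∀ i, y i ∈ s)

/-- disjunctive reformulation of a crown -/
private lemma isCrown_iff {m : ℕ} (x y : Fin m → L) :
    IsCrown x y ↔ (3 ≤ m ∧ Function.Injective x ∧ Function.Injective y ∧
      (∀ i j, x i ≠ y j) ∧
      (∀ i j, x i ≤ x j → i = j) ∧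
      (∀ i j, y i ≤ y j → i = j) ∧
      (∀ i j, ¬ y i ≤ x j) ∧
      (∀ i j : Fin m, x i ≤ y j ↔ (i = j ∨ S i j))) := by
  constructor <;>
  · rintro ⟨h1, h2, h3, h4, h5, h6, h7, h8⟩
    refine ⟨h1, h2, h3, h4, h5, h6, h7, fun i j => ?_⟩
    rw [h8 i j]
    rw [or_congr_right S_iff]

lemma crown_descend {s : Set L} (hs : IsSublattice s) {d : L} (hd : d ∉ s)
    {m : ℕ} {x y : Fin m → L} (hc : IsCrown x y)
    (hx : ∀ i, x i ∈ insert d s) (hy : ∀ i, y i ∈ insert d s) :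
    CrownIn s := by
  rw [isCrown_iff] at hc
  obtain ⟨h3, hxinj, hyinj, hxy, hxx, hyy, hyx, hle⟩ := hc
  by_cases hdx : ∃ i, x i = d
  · obtain ⟨i, hdi⟩ := hdx
    have hys : ∀ j, y j ∈ s := fun j => (hy j).resolve_left
      (fun h => (hxy i j) (hdi.trans h.symm))
    have hxs : ∀ j, j ≠ i → x j ∈ s := fun j hj => (hx j).resolve_left
      (fun h => hj (hxinj (h.trans hdi.symm)))
    obtain ⟨p, hpS⟩ := S_pred_exists (by omega) i
    have hpi : p ≠ i := (S_ne (by omega) hpS).symm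
    have hxyp : x i ≤ y p := (hle i p).mpr (Or.inr hpS)
    have hxyi : x i ≤ y i := (hle i i).mpr (Or.inl rfl)
    set w : L := y i ⊓ y p with hw
    have hws : w ∈ s := hs.infClosed (hys i) (hys p)
    have hxw : x i ≤ w := le_inf hxyi hxyp
    have hxwne : x i ≠ w := fun h => hd (by rw [← hdi, h]; exact hws)
    set x' : Fin m → L := Function.update x i w with hx'def
    have hx'i : x' i = w := Function.update_self i w x
    have hx'ne : ∀ j, j ≠ i → x' j = x j := fun j hj => Function.update_of_ne hj w x
    have hwlex : ∀ j, ¬ w ≤ x j := by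
      intro j hwj
      have hij : i = j := hxx _ _ (le_trans hxw hwj)
      subst hij
      exact hxwne (le_antisymm hxw hwj)
    have hwley : ∀ j, w ≤ y j → (j = i ∨ j = p) := by
      intro j hwj
      rcases (hle i j).mp (le_trans hxw hwj) with h | h
      · exact Or.inl h.symm
      · exact Or.inr (S_pred_uniq h hpS)
    have hxlew : ∀ j, x j ≤ w → j = i := by
      intro j hj
      have h1 : x j ≤ y i := le_trans hj inf_le_left
      have h2 : x j ≤ y p := le_trans hj inf_le_right
      rcases (hle j i).mp h1 with h | h
      · exact h
      · exfalso
        rcases (hle j p).mp h2 with h' | h'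
        · exact S_asymm h3 (h' ▸ h) hpS
        · exact S_ne (by omega) h (S_succ_uniq h' hpS)
    refine ⟨m, x', y, ?_, ?_, hys⟩
    · rw [isCrown_iff]
      refine ⟨h3, ?_, hyinj, ?_, ?_, hyy, ?_, ?_⟩
      · intro a b hab
        by_cases hai : a = i <;> by_cases hbi : b = i
        · rw [hai, hbi]
        · rw [hai, hx'i, hx'ne b hbi] at hab
          exact absurd (hxlew b hab.ge) hbi
        · rw [hbi, hx'i, hx'ne a hai] at hab
          exact absurd (hxlew a hab.le) hai
        · rw [hx'ne a hai, hx'ne b hbi] at hab; exact hxinj hab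
      · intro a j haj
        by_cases hai : a = i
        · rw [hai, hx'i] at haj
          have h1 : y j ≤ y i := by rw [← haj]; exact inf_le_left
          have h2 : y j ≤ y p := by rw [← haj]; exact inf_le_right
          exact hpi ((hyy j p h2).symm.trans (hyy j i h1))
        · rw [hx'ne a hai] at haj; exact hxy a j haj
      · intro a b hab
        by_cases hai : a = i <;> by_cases hbi : b = i
        · rw [hai, hbi]
        · rw [hai, hx'i, hx'ne b hbi] at hab
          exact absurd hab (hwlex b)
        · rw [hbi, hx'i, hx'ne a hai] at hab
          exact (hai (hxlew a hab)).elim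
        · rw [hx'ne a hai, hx'ne b hbi] at hab; exact hxx a b hab
      · intro j b hjb
        by_cases hbi : b = i
        · rw [hbi, hx'i] at hjb
          have h1 : j = i := hyy j i (le_trans hjb inf_le_left)
          have h2 : j = p := hyy j p (le_trans hjb inf_le_right)
          exact hpi (h2.symm.trans h1)
        · rw [hx'ne b hbi] at hjb; exact hyx j b hjb
      · intro a j
        by_cases hai : a = i
        · rw [hai, hx'i]
          constructor
          · intro hwj
            rcases hwley j hwj with h | h
            · exact Or.inl h.symm
            · rw [h]; exact Or.inr hpS
          · rintro (h | h)
            · rw [← h]; exact inf_le_left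
            · rw [S_pred_uniq h hpS]; exact inf_le_right
        · rw [hx'ne a hai]; exact hle a j
    · intro j
      by_cases hji : j = i
      · subst hji; rw [hx'i]; exact hws
      · rw [hx'ne j hji]; exact hxs j hji
  · by_cases hdy : ∃ i, y i = d
    · obtain ⟨i, hdi⟩ := hdy
      have hxs : ∀ j, x j ∈ s := fun j => (hx j).resolve_left
        (fun h => (hxy j i) (h.trans hdi.symm))
      have hys : ∀ j, j ≠ i → y j ∈ s := fun j hj => (hy j).resolve_left
        (fun h => hj (hyinj (h.trans hdi.symm)))
      obtain ⟨q, hqS⟩ := S_succ_exists (by omega) i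
      have hqi : q ≠ i := S_ne (by omega) hqS
      have hxqy : x q ≤ y i := (hle q i).mpr (Or.inr hqS)
      have hxiy : x i ≤ y i := (hle i i).mpr (Or.inl rfl)
      set w : L := x i ⊔ x q with hw
      have hws : w ∈ s := hs.supClosed (hxs i) (hxs q)
      have hwy : w ≤ y i := sup_le hxiy hxqy
      have hwyne : w ≠ y i := fun h => hd (by rw [← hdi, ← h]; exact hws)
      set y' : Fin m → L := Function.update y i w with hy'def
      have hy'i : y' i = w := Function.update_self i w y
      have hy'ne : ∀ j, j ≠ i → y' j = y j := fun j hj => Function.update_of_ne hj w y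
      have hylew : ∀ j, ¬ y j ≤ w := by
        intro j hj
        have hji : j = i := hyy _ _ (le_trans hj hwy)
        rw [hji] at hj
        exact hwyne (le_antisymm hwy hj)
      have hxlew : ∀ j, x j ≤ w → (j = i ∨ j = q) := by
        intro j hj
        rcases (hle j i).mp (le_trans hj hwy) with h | h
        · exact Or.inl h
        · exact Or.inr (S_succ_uniq h hqS)
      refine ⟨m, x, y', ?_, hxs, ?_⟩
      · rw [isCrown_iff]
        refine ⟨h3, hxinj, ?_, ?_, hxx, ?_, ?_, ?_⟩
        · -- y' injective
          intro a b hab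
          by_cases hai : a = i <;> by_cases hbi : b = i
          · rw [hai, hbi]
          · rw [hai, hy'i, hy'ne b hbi] at hab
            exact absurd hab.ge (hylew b)
          · rw [hbi, hy'i, hy'ne a hai] at hab
            exact absurd hab.le (hylew a)
          · rw [hy'ne a hai, hy'ne b hbi] at hab; exact hyinj hab
        · -- x a ≠ y' j
          intro a j haj
          by_cases hji : j = i
          · rw [hji, hy'i] at haj
            have h1 : x i ≤ x a := by rw [haj]; exact le_sup_left
            have h2 : x q ≤ x a := by rw [haj]; exact le_sup_right
            exact hqi ((hxx q a h2).trans (hxx i a h1).symm)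
          · rw [hy'ne j hji] at haj; exact hxy a j haj
        · -- y' antichain
          intro a b hab
          by_cases hai : a = i <;> by_cases hbi : b = i
          · rw [hai, hbi]
          · exfalso
            rw [hai, hy'i, hy'ne b hbi] at hab
            have h1 : x i ≤ y b := le_trans le_sup_left hab
            have h2 : x q ≤ y b := le_trans le_sup_right hab
            rcases (hle i b).mp h1 with h | h
            · exact hbi h.symm
            · rcases (hle q b).mp h2 with h' | h'
              · rw [h'] at hqS; exact S_asymm h3 h hqS
              · exact hqi (S_succ_uniq h' h)
          · rw [hbi, hy'i, hy'ne a hai] at hab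
            exact absurd hab (hylew a)
          · rw [hy'ne a hai, hy'ne b hbi] at hab; exact hyy a b hab
        · -- ¬ y' j ≤ x b
          intro j b hjb
          by_cases hji : j = i
          · rw [hji, hy'i] at hjb
            have h1 : i = b := hxx i b (le_trans le_sup_left hjb)
            have h2 : q = b := hxx q b (le_trans le_sup_right hjb)
            exact hqi (h2.trans h1.symm)
          · rw [hy'ne j hji] at hjb; exact hyx j b hjb
        · -- comparability
          intro a j
          by_cases hji : j = i
          · rw [hji, hy'i]
            constructor
            · intro haw
              exact (hle a i).mp (le_trans haw hwy)
            · rintro (h | h)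
              · rw [h]; exact le_sup_left
              · rw [S_succ_uniq h hqS]; exact le_sup_right
          · rw [hy'ne j hji]; exact hle a j
      · intro j
        by_cases hji : j = i
        · rw [hji, hy'i]; exact hws
        · rw [hy'ne j hji]; exact hys j hji
    · refine ⟨m, x, y, (isCrown_iff x y).mpr ⟨h3, hxinj, hyinj, hxy, hxx, hyy, hyx, hle⟩, ?_, ?_⟩
      · intro j; exact (hx j).resolve_left (fun h => hdx ⟨j, h⟩)
      · intro j; exact (hy j).resolve_left (fun h => hdy ⟨j, h⟩)

lemma crown_descend' {s : Set L} (hs : IsSublattice s) {d : L} (hd : d ∉ s)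
    (hc : CrownIn (insert d s)) : CrownIn s := by
  obtain ⟨m, x, y, h1, h2, h3⟩ := hc
  exact crown_descend hs hd h1 h2 h3

lemma not_crownIn_card_one {s : Set L} (h : Nat.card s = 1) : ¬ CrownIn s := by
  rintro ⟨m, x, y, hc, hxm, hym⟩
  rw [Nat.card_coe_set_eq, Set.ncard_eq_one] at h
  obtain ⟨a, rfl⟩ := h
  have h0 : (0:ℕ) < m := by have := hc.1; omega
  have h1 := hxm ⟨0, h0⟩
  have h2 := hym ⟨0, h0⟩
  rw [Set.mem_singleton_iff] at h1 h2
  exact hc.2.2.2.1 ⟨0, h0⟩ ⟨0, h0⟩ (h1.trans h2.symm)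

lemma not_dismantlable_of_crown [Finite L] (h : CrownIn (Set.univ : Set L)) :
    ¬ Dismantlable L := by
  rintro ⟨c, h1, h2, h3⟩
  have hne : Nonempty L := by
    obtain ⟨m, x, y, hc, -, -⟩ := h
    exact ⟨x ⟨0, by have := hc.1; omega⟩⟩
  have hNpos : 0 < Nat.card L := Nat.card_pos
  have key : ∀ k, 1 ≤ k → k ≤ Nat.card L → ¬ CrownIn (c k) := by
    intro k hk
    induction k, hk using Nat.le_induction with
    | base =>
      intro _ hc
      exact not_crownIn_card_one ((h1 1 le_rfl (by omega)).2) hc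
    | succ k hk ih =>
      intro hkN hc
      have hsub : c k ⊆ c (k + 1) := h2 k hk (by omega)
      obtain ⟨hlat, hcard⟩ := h1 k hk (by omega)
      obtain ⟨hlat', hcard'⟩ := h1 (k + 1) (by omega) hkN
      have hfin : (c (k+1)).Finite := Set.toFinite _
      have hfink : (c k).Finite := Set.toFinite _
      have hne' : ¬ c (k + 1) ⊆ c k := by
        intro hss
        have heq : c k = c (k+1) := Set.Subset.antisymm hsub hss
        rw [← heq] at hcard'
        omega
      obtain ⟨d, hdmem, hdnot⟩ := Set.not_subset.mp hne'
      have hins : c (k + 1) = insert d (c k) := by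
        apply Set.Subset.antisymm
        · intro e he
          by_contra hecon
          simp only [Set.mem_insert_iff, not_or] at hecon
          obtain ⟨hed, hecK⟩ := hecon
          have hsub2 : insert e (insert d (c k)) ⊆ c (k + 1) := by
            intro z hz
            rcases hz with rfl | rfl | hz
            · exact he
            · exact hdmem
            · exact hsub hz
          have hc1 : (insert e (insert d (c k))).ncard = k + 2 := by
            rw [Set.ncard_insert_of_notMem (by simp [hed, hecK]) (hfink.insert d),
                Set.ncard_insert_of_notMem hdnot hfink]
            rw [← Nat.card_coe_set_eq] at *
            omega
          have hle2 := Set.ncard_le_ncard hsub2 hfin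
          rw [hc1, ← Nat.card_coe_set_eq] at hle2
          omega
        · intro z hz
          rcases hz with rfl | hz
          · exact hdmem
          · exact hsub hz
      rw [hins] at hc
      exact ih (by omega) (crown_descend' hlat hdnot hc)
  have hfinal := key (Nat.card L) hNpos le_rfl
  rw [h3] at hfinal
  exact hfinal h

end Crown

open Equiv


def sg {G : Type*} [Group G] [DecidableEq G] (s : Finset G)
    (h1 : (1:G) ∈ s) (hmul : ∀ a ∈ s, ∀ b ∈ s, a*b ∈ s) (hinv : ∀ a ∈ s, a⁻¹ ∈ s) :
    Subgroup G where
  carrier := s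
  one_mem' := h1
  mul_mem' := fun ha hb => hmul _ ha _ hb
  inv_mem' := fun ha => hinv _ ha

theorem mem_sg {G : Type*} [Group G] [DecidableEq G] {s : Finset G} {h1 hmul hinv} {x : G} :
    x ∈ sg s h1 hmul hinv ↔ x ∈ s := Iff.rfl

instance {G : Type*} [Group G] [DecidableEq G] {s : Finset G} {h1 hmul hinv} (x : G) :
    Decidable (x ∈ sg s h1 hmul hinv) := decidable_of_iff _ mem_sg.symm

instance decMemBot {G : Type*} [Group G] [DecidableEq G] (x : G) :
    Decidable (x ∈ (⊥ : Subgroup G)) := decidable_of_iff _ (Subgroup.mem_bot).symm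

instance decMemTop {G : Type*} [Group G] (x : G) :
    Decidable (x ∈ (⊤ : Subgroup G)) := .isTrue (Subgroup.mem_top x)

instance (priority := 2000) myDecLe {G : Type*} [Group G] [Fintype G] (H K : Subgroup G)
    [∀ x, Decidable (x ∈ H)] [∀ x, Decidable (x ∈ K)] : Decidable (H ≤ K) :=
  decidable_of_iff (∀ x, x ∈ H → x ∈ K) ⟨fun h _ hx => h _ hx, fun h x hx => h hx⟩

instance (priority := 2000) myDecEq {G : Type*} [Group G] [Fintype G] (H K : Subgroup G)
    [∀ x, Decidable (x ∈ H)] [∀ x, Decidable (x ∈ K)] : Decidable (H = K) :=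
  decidable_of_iff (∀ x, x ∈ H ↔ x ∈ K) (SetLike.ext_iff).symm

section Generic
variable {L : Type*} [Lattice L]

lemma card_coe_univ : Nat.card ↥(Set.univ : Set L) = Nat.card L :=
  Nat.card_congr (Equiv.Set.univ L)

lemma dismantlable_of_subsingleton [Finite L] [Nonempty L] (h : Subsingleton L) :
    Dismantlable L := by
  have hcard : Nat.card L = 1 := Nat.card_eq_one_iff_unique.mpr ⟨h, ‹_›⟩
  refine ⟨fun _ => Set.univ, ?_, ?_, ?_⟩
  · intro i h1 h2
    rw [hcard] at h2
    have : i = 1 := by omega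
    subst this
    exact ⟨isSublattice_univ, by rw [card_coe_univ, hcard]⟩
  · intro i _ _; exact le_rfl
  · rfl
end Generic

lemma subgroup_subsingleton {G : Type*} [Group G] (h : ∀ g : G, g = 1) :
    Subsingleton (Subgroup G) := by
  constructor
  intro H K
  ext g
  rw [h g]
  exact iff_of_true H.one_mem K.one_mem

/-! ### n = 2 -/
namespace S2
abbrev t : Perm (Fin 2) := swap 0 1

theorem classify (H : Subgroup (Perm (Fin 2))) : H = ⊥ ∨ H = ⊤ := by
  have elems : ∀ g : Perm (Fin 2), g = 1 ∨ g = t := by decide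
  by_cases ht : t ∈ H
  · right
    rw [Subgroup.eq_top_iff']
    intro g
    rcases elems g with rfl | rfl
    · exact H.one_mem
    · exact ht
  · left
    refine le_antisymm ?_ bot_le
    intro g hg
    rcases elems g with rfl | rfl
    · exact Subgroup.mem_bot.mpr rfl
    · exact absurd hg ht

lemma bot_ne_top : (⊥ : Subgroup (Perm (Fin 2))) ≠ ⊤ := by
  intro h
  have : t ∈ (⊥ : Subgroup (Perm (Fin 2))) := h ▸ Subgroup.mem_top t
  rw [Subgroup.mem_bot] at this
  exact absurd this (by decide)

lemma univ_eq : (Set.univ : Set (Subgroup (Perm (Fin 2)))) = {⊥, ⊤} :=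
  (Set.eq_univ_iff_forall.mpr (fun H => by
    rcases classify H with rfl | rfl <;> simp)).symm

lemma card_eq : Nat.card (Subgroup (Perm (Fin 2))) = 2 := by
  rw [← Set.ncard_univ, univ_eq, Set.ncard_pair bot_ne_top]

def cc2 : ℕ → Set (Subgroup (Perm (Fin 2)))
  | 1 => {⊥}
  | _ => Set.univ

theorem dismantlable : Dismantlable (Subgroup (Perm (Fin 2))) := by
  refine ⟨cc2, ?_, ?_, ?_⟩
  · intro i h1 h2
    rw [card_eq] at h2
    interval_cases i
    · exact ⟨isSublattice_singleton, by
        rw [show cc2 1 = {(⊥ : Subgroup (Perm (Fin 2)))} from rfl,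
          Nat.card_coe_set_eq, Set.ncard_singleton]⟩
    · exact ⟨isSublattice_univ, by
        rw [show cc2 2 = (Set.univ : Set (Subgroup (Perm (Fin 2)))) from rfl,
          card_coe_univ, card_eq]⟩
  · intro i h1 h2
    rw [card_eq] at h2
    interval_cases i
    exact fun x _ => Set.mem_univ x
  · rw [card_eq]
    rfl
end S2

/-! ### n = 3 -/
namespace S3
abbrev a : Perm (Fin 3) := swap 0 1
abbrev b : Perm (Fin 3) := swap 0 2
abbrev c : Perm (Fin 3) := swap 1 2
abbrev r : Perm (Fin 3) := a * c
abbrev r2 : Perm (Fin 3) := c * a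

abbrev T1 : Subgroup (Perm (Fin 3)) := sg {1, a} (by decide) (by decide) (by decide)
abbrev T2 : Subgroup (Perm (Fin 3)) := sg {1, b} (by decide) (by decide) (by decide)
abbrev T3 : Subgroup (Perm (Fin 3)) := sg {1, c} (by decide) (by decide) (by decide)
abbrev A3 : Subgroup (Perm (Fin 3)) := sg {1, r, r2} (by decide) (by decide) (by decide)

theorem classify (H : Subgroup (Perm (Fin 3))) :
    H = ⊥ ∨ H = T1 ∨ H = T2 ∨ H = T3 ∨ H = A3 ∨ H = ⊤ := by
  have elems : ∀ g : Perm (Fin 3), g = 1 ∨ g = a ∨ g = b ∨ g = c ∨ g = r ∨ g = r2 := by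
    decide
  -- helper : top from a transposition pair
  have htop : ∀ (u v : Perm (Fin 3)), u ∈ H → v ∈ H →
      ((u = a ∧ v = b) ∨ (u = a ∧ v = c) ∨ (u = b ∧ v = c)) → H = ⊤ := by
    rintro u v hu hv (⟨rfl, rfl⟩ | ⟨rfl, rfl⟩ | ⟨rfl, rfl⟩)
    · -- a, b ∈ H
      have hc : c ∈ H := by
        have := H.mul_mem (H.mul_mem hu hv) hu
        rwa [show a * b * a = c by decide] at this
      have hr : r ∈ H := by
        have := H.mul_mem hv hu
        rwa [show b * a = r by decide] at this
      have hr2 : r2 ∈ H := by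
        have := H.mul_mem hu hv
        rwa [show a * b = r2 by decide] at this
      rw [Subgroup.eq_top_iff']
      intro g
      rcases elems g with rfl | rfl | rfl | rfl | rfl | rfl
      exacts [H.one_mem, hu, hv, hc, hr, hr2]
    · -- a, c ∈ H
      have hb : b ∈ H := by
        have := H.mul_mem (H.mul_mem hu hv) hu
        rwa [show a * c * a = b by decide] at this
      have hr : r ∈ H := H.mul_mem hu hv
      have hr2 : r2 ∈ H := H.mul_mem hv hu
      rw [Subgroup.eq_top_iff']
      intro g
      rcases elems g with rfl | rfl | rfl | rfl | rfl | rfl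
      exacts [H.one_mem, hu, hb, hv, hr, hr2]
    · -- b, c ∈ H
      have ha : a ∈ H := by
        have := H.mul_mem (H.mul_mem hu hv) hu
        rwa [show b * c * b = a by decide] at this
      have hr : r ∈ H := by
        have := H.mul_mem hv hu
        rwa [show c * b = r by decide] at this
      have hr2 : r2 ∈ H := by
        have := H.mul_mem hu hv
        rwa [show b * c = r2 by decide] at this
      rw [Subgroup.eq_top_iff']
      intro g
      rcases elems g with rfl | rfl | rfl | rfl | rfl | rfl
      exacts [H.one_mem, ha, hu, hv, hr, hr2]
  by_cases ha : a ∈ H <;> by_cases hb : b ∈ H <;> by_cases hc : c ∈ H <;>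
    by_cases hr : r ∈ H
  -- a b c r
  · exact Or.inr <| Or.inr <| Or.inr <| Or.inr <| Or.inr <|
      htop a b ha hb (Or.inl ⟨rfl, rfl⟩)
  · exact Or.inr <| Or.inr <| Or.inr <| Or.inr <| Or.inr <|
      htop a b ha hb (Or.inl ⟨rfl, rfl⟩)
  · exact Or.inr <| Or.inr <| Or.inr <| Or.inr <| Or.inr <|
      htop a b ha hb (Or.inl ⟨rfl, rfl⟩)
  · exact Or.inr <| Or.inr <| Or.inr <| Or.inr <| Or.inr <|
      htop a b ha hb (Or.inl ⟨rfl, rfl⟩)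
  -- a, ¬b, c
  · exact Or.inr <| Or.inr <| Or.inr <| Or.inr <| Or.inr <|
      htop a c ha hc (Or.inr (Or.inl ⟨rfl, rfl⟩))
  · exact Or.inr <| Or.inr <| Or.inr <| Or.inr <| Or.inr <|
      htop a c ha hc (Or.inr (Or.inl ⟨rfl, rfl⟩))
  -- a, ¬b, ¬c, r : contradiction  (a * r = c)
  · exfalso
    have := H.mul_mem ha hr
    rw [show a * r = c by decide] at this
    exact hc this
  -- a, ¬b, ¬c, ¬r : H = T1
  · refine Or.inr (Or.inl ?_)
    apply le_antisymm
    · intro g hg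
      rcases elems g with rfl | rfl | rfl | rfl | rfl | rfl
      · decide
      · decide
      · exact absurd hg hb
      · exact absurd hg hc
      · exact absurd hg hr
      · exfalso
        have := H.mul_mem hg hg
        rw [show r2 * r2 = r by decide] at this
        exact hr this
    · intro g hg
      rcases (by decide : ∀ u : Perm (Fin 3), u ∈ T1 → u = 1 ∨ u = a) g hg with rfl | rfl
      · exact H.one_mem
      · exact ha
  -- ¬a, b, c
  · exact Or.inr <| Or.inr <| Or.inr <| Or.inr <| Or.inr <|
      htop b c hb hc (Or.inr (Or.inr ⟨rfl, rfl⟩))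
  · exact Or.inr <| Or.inr <| Or.inr <| Or.inr <| Or.inr <|
      htop b c hb hc (Or.inr (Or.inr ⟨rfl, rfl⟩))
  -- ¬a, b, ¬c, r : contradiction (b * r = a)
  · exfalso
    have := H.mul_mem hb hr
    rw [show b * r = a by decide] at this
    exact ha this
  -- ¬a, b, ¬c, ¬r : H = T2
  · refine Or.inr (Or.inr (Or.inl ?_))
    apply le_antisymm
    · intro g hg
      rcases elems g with rfl | rfl | rfl | rfl | rfl | rfl
      · decide
      · exact absurd hg ha
      · decide
      · exact absurd hg hc
      · exact absurd hg hr
      · exfalso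
        have := H.mul_mem hg hg
        rw [show r2 * r2 = r by decide] at this
        exact hr this
    · intro g hg
      rcases (by decide : ∀ u : Perm (Fin 3), u ∈ T2 → u = 1 ∨ u = b) g hg with rfl | rfl
      · exact H.one_mem
      · exact hb
  -- ¬a, ¬b, c, r : contradiction (c * r = b)
  · exfalso
    have := H.mul_mem hc hr
    rw [show c * r = b by decide] at this
    exact hb this
  -- ¬a, ¬b, c, ¬r : H = T3
  · refine Or.inr (Or.inr (Or.inr (Or.inl ?_)))
    apply le_antisymm
    · intro g hg
      rcases elems g with rfl | rfl | rfl | rfl | rfl | rfl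
      · decide
      · exact absurd hg ha
      · exact absurd hg hb
      · decide
      · exact absurd hg hr
      · exfalso
        have := H.mul_mem hg hg
        rw [show r2 * r2 = r by decide] at this
        exact hr this
    · intro g hg
      rcases (by decide : ∀ u : Perm (Fin 3), u ∈ T3 → u = 1 ∨ u = c) g hg with rfl | rfl
      · exact H.one_mem
      · exact hc
  -- ¬a, ¬b, ¬c, r : H = A3
  · refine Or.inr (Or.inr (Or.inr (Or.inr (Or.inl ?_))))
    apply le_antisymm
    · intro g hg
      rcases elems g with rfl | rfl | rfl | rfl | rfl | rfl
      · decide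
      · exact absurd hg ha
      · exact absurd hg hb
      · exact absurd hg hc
      · decide
      · decide
    · intro g hg
      rcases (by decide : ∀ u : Perm (Fin 3), u ∈ A3 → u = 1 ∨ u = r ∨ u = r2) g hg
        with rfl | rfl | rfl
      · exact H.one_mem
      · exact hr
      · have := H.mul_mem hr hr
        rwa [show r * r = r2 by decide] at this
  -- ¬a, ¬b, ¬c, ¬r : H = ⊥
  · refine Or.inl ?_
    refine le_antisymm ?_ bot_le
    intro g hg
    rcases elems g with rfl | rfl | rfl | rfl | rfl | rfl
    · exact Subgroup.mem_bot.mpr rfl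
    · exact absurd hg ha
    · exact absurd hg hb
    · exact absurd hg hc
    · exact absurd hg hr
    · exfalso
      have := H.mul_mem hg hg
      rw [show r2 * r2 = r by decide] at this
      exact hr this

section Lattice3

lemma sup_eq_top' {H K : Subgroup (Perm (Fin 3))}
    (hmax : ∀ M, H ≤ M → K ≤ M → M = ⊤) : H ⊔ K = ⊤ :=
  hmax _ le_sup_left le_sup_right

lemma inf_eq_bot' {H K : Subgroup (Perm (Fin 3))}
    (hmin : ∀ M, M ≤ H → M ≤ K → M = ⊥) : H ⊓ K = ⊥ :=
  hmin _ inf_le_left inf_le_right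

lemma sup_T1_T2 : T1 ⊔ T2 = ⊤ := sup_eq_top' (fun M => by
  rcases classify M with rfl | rfl | rfl | rfl | rfl | rfl <;> decide)
lemma sup_T2_T1 : T2 ⊔ T1 = ⊤ := sup_comm T2 T1 ▸ sup_T1_T2
lemma sup_T1_T3 : T1 ⊔ T3 = ⊤ := sup_eq_top' (fun M => by
  rcases classify M with rfl | rfl | rfl | rfl | rfl | rfl <;> decide)
lemma sup_T3_T1 : T3 ⊔ T1 = ⊤ := sup_comm T3 T1 ▸ sup_T1_T3
lemma sup_T2_T3 : T2 ⊔ T3 = ⊤ := sup_eq_top' (fun M => by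
  rcases classify M with rfl | rfl | rfl | rfl | rfl | rfl <;> decide)
lemma sup_T3_T2 : T3 ⊔ T2 = ⊤ := sup_comm T3 T2 ▸ sup_T2_T3
lemma sup_A3_T1 : A3 ⊔ T1 = ⊤ := sup_eq_top' (fun M => by
  rcases classify M with rfl | rfl | rfl | rfl | rfl | rfl <;> decide)
lemma sup_T1_A3 : T1 ⊔ A3 = ⊤ := sup_comm T1 A3 ▸ sup_A3_T1
lemma sup_A3_T2 : A3 ⊔ T2 = ⊤ := sup_eq_top' (fun M => by
  rcases classify M with rfl | rfl | rfl | rfl | rfl | rfl <;> decide)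
lemma sup_T2_A3 : T2 ⊔ A3 = ⊤ := sup_comm T2 A3 ▸ sup_A3_T2
lemma sup_A3_T3 : A3 ⊔ T3 = ⊤ := sup_eq_top' (fun M => by
  rcases classify M with rfl | rfl | rfl | rfl | rfl | rfl <;> decide)
lemma sup_T3_A3 : T3 ⊔ A3 = ⊤ := sup_comm T3 A3 ▸ sup_A3_T3

lemma inf_T1_T2 : T1 ⊓ T2 = ⊥ := inf_eq_bot' (fun M => by
  rcases classify M with rfl | rfl | rfl | rfl | rfl | rfl <;> decide)
lemma inf_T2_T1 : T2 ⊓ T1 = ⊥ := inf_comm T2 T1 ▸ inf_T1_T2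
lemma inf_T1_T3 : T1 ⊓ T3 = ⊥ := inf_eq_bot' (fun M => by
  rcases classify M with rfl | rfl | rfl | rfl | rfl | rfl <;> decide)
lemma inf_T3_T1 : T3 ⊓ T1 = ⊥ := inf_comm T3 T1 ▸ inf_T1_T3
lemma inf_T2_T3 : T2 ⊓ T3 = ⊥ := inf_eq_bot' (fun M => by
  rcases classify M with rfl | rfl | rfl | rfl | rfl | rfl <;> decide)
lemma inf_T3_T2 : T3 ⊓ T2 = ⊥ := inf_comm T3 T2 ▸ inf_T2_T3
lemma inf_A3_T1 : A3 ⊓ T1 = ⊥ := inf_eq_bot' (fun M => by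
  rcases classify M with rfl | rfl | rfl | rfl | rfl | rfl <;> decide)
lemma inf_T1_A3 : T1 ⊓ A3 = ⊥ := inf_comm T1 A3 ▸ inf_A3_T1
lemma inf_A3_T2 : A3 ⊓ T2 = ⊥ := inf_eq_bot' (fun M => by
  rcases classify M with rfl | rfl | rfl | rfl | rfl | rfl <;> decide)
lemma inf_T2_A3 : T2 ⊓ A3 = ⊥ := inf_comm T2 A3 ▸ inf_A3_T2
lemma inf_A3_T3 : A3 ⊓ T3 = ⊥ := inf_eq_bot' (fun M => by
  rcases classify M with rfl | rfl | rfl | rfl | rfl | rfl <;> decide)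
lemma inf_T3_A3 : T3 ⊓ A3 = ⊥ := inf_comm T3 A3 ▸ inf_A3_T3

lemma distinct :
    (⊥ : Subgroup (Perm (Fin 3))) ≠ T1 ∧ (⊥ : Subgroup (Perm (Fin 3))) ≠ T2 ∧
    (⊥ : Subgroup (Perm (Fin 3))) ≠ T3 ∧ (⊥ : Subgroup (Perm (Fin 3))) ≠ A3 ∧
    (⊥ : Subgroup (Perm (Fin 3))) ≠ ⊤ ∧ T1 ≠ T2 ∧ T1 ≠ T3 ∧ T1 ≠ A3 ∧
    (T1 : Subgroup (Perm (Fin 3))) ≠ ⊤ ∧ T2 ≠ T3 ∧ T2 ≠ A3 ∧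
    (T2 : Subgroup (Perm (Fin 3))) ≠ ⊤ ∧ T3 ≠ A3 ∧ (T3 : Subgroup (Perm (Fin 3))) ≠ ⊤ ∧
    (A3 : Subgroup (Perm (Fin 3))) ≠ ⊤ := by
  refine ⟨?_, ?_, ?_, ?_, ?_, ?_, ?_, ?_, ?_, ?_, ?_, ?_, ?_, ?_, ?_⟩ <;> decide

lemma univ_eq : (Set.univ : Set (Subgroup (Perm (Fin 3)))) = {⊤, ⊥, A3, T1, T2, T3} :=
  (Set.eq_univ_iff_forall.mpr (fun H => by
    rcases classify H with rfl | rfl | rfl | rfl | rfl | rfl <;> simp)).symm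

lemma card_eq : Nat.card (Subgroup (Perm (Fin 3))) = 6 := by
  obtain ⟨d1, d2, d3, d4, d5, d6, d7, d8, d9, d10, d11, d12, d13, d14, d15⟩ := distinct
  rw [← Set.ncard_univ, univ_eq]
  rw [Set.ncard_insert_of_notMem (by
      simp only [Set.mem_insert_iff, Set.mem_singleton_iff]
      push_neg
      exact ⟨d5.symm, d15.symm, d9.symm, d12.symm, d14.symm⟩) (Set.toFinite _),
    Set.ncard_insert_of_notMem (by
      simp only [Set.mem_insert_iff, Set.mem_singleton_iff]
      push_neg
      exact ⟨d4, d1, d2, d3⟩) (Set.toFinite _),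
    Set.ncard_insert_of_notMem (by
      simp only [Set.mem_insert_iff, Set.mem_singleton_iff]
      push_neg
      exact ⟨d8.symm, d11.symm, d13.symm⟩) (Set.toFinite _),
    Set.ncard_insert_of_notMem (by
      simp only [Set.mem_insert_iff, Set.mem_singleton_iff]
      push_neg
      exact ⟨d6, d7⟩) (Set.toFinite _),
    Set.ncard_insert_of_notMem (by
      simp only [Set.mem_singleton_iff]
      exact d10) (Set.toFinite _),
    Set.ncard_singleton]

def cc3 : ℕ → Set (Subgroup (Perm (Fin 3)))
  | 1 => {⊤}
  | 2 => {⊤, ⊥}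
  | 3 => {⊤, ⊥, A3}
  | 4 => {⊤, ⊥, A3, T1}
  | 5 => {⊤, ⊥, A3, T1, T2}
  | _ => Set.univ

theorem dismantlable : Dismantlable (Subgroup (Perm (Fin 3))) := by
  obtain ⟨d1, d2, d3, d4, d5, d6, d7, d8, d9, d10, d11, d12, d13, d14, d15⟩ := distinct
  have hmemtac : ∀ s : Set (Subgroup (Perm (Fin 3))), s = s := fun _ => rfl
  refine ⟨cc3, ?_, ?_, ?_⟩
  · intro i h1 h2
    rw [card_eq] at h2
    interval_cases i
    · exact ⟨isSublattice_singleton, by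
        rw [show cc3 1 = {(⊤ : Subgroup (Perm (Fin 3)))} from rfl,
          Nat.card_coe_set_eq, Set.ncard_singleton]⟩
    · refine ⟨?_, ?_⟩
      · constructor <;> intro u hu v hv <;>
          rcases hu with rfl | rfl <;> rcases hv with rfl | rfl <;>
          simp [cc3, Set.mem_insert_iff]
      · rw [show cc3 2 = {(⊤ : Subgroup (Perm (Fin 3))), ⊥} from rfl,
          Nat.card_coe_set_eq, Set.ncard_pair d5.symm]
    · refine ⟨?_, ?_⟩
      · constructor <;> intro u hu v hv <;>
          rcases hu with rfl | rfl | rfl <;> rcases hv with rfl | rfl | rfl <;>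
          simp [cc3, Set.mem_insert_iff]
      · rw [show cc3 3 = {(⊤ : Subgroup (Perm (Fin 3))), ⊥, A3} from rfl,
          Nat.card_coe_set_eq,
          Set.ncard_insert_of_notMem (by
            simp only [Set.mem_insert_iff, Set.mem_singleton_iff]
            push_neg
            exact ⟨d5.symm, d15.symm⟩) (Set.toFinite _),
          Set.ncard_pair d4]
    · refine ⟨?_, ?_⟩
      · constructor <;> intro u hu v hv <;>
          rcases hu with rfl | rfl | rfl | rfl <;> rcases hv with rfl | rfl | rfl | rfl <;>
          simp [cc3, Set.mem_insert_iff, sup_A3_T1, sup_T1_A3, inf_A3_T1, inf_T1_A3]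
      · rw [show cc3 4 = {(⊤ : Subgroup (Perm (Fin 3))), ⊥, A3, T1} from rfl,
          Nat.card_coe_set_eq,
          Set.ncard_insert_of_notMem (by
            simp only [Set.mem_insert_iff, Set.mem_singleton_iff]
            push_neg
            exact ⟨d5.symm, d15.symm, d9.symm⟩) (Set.toFinite _),
          Set.ncard_insert_of_notMem (by
            simp only [Set.mem_insert_iff, Set.mem_singleton_iff]
            push_neg
            exact ⟨d4, d1⟩) (Set.toFinite _),
          Set.ncard_pair d8.symm]
    · refine ⟨?_, ?_⟩
      · constructor <;> intro u hu v hv <;>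
          rcases hu with rfl | rfl | rfl | rfl | rfl <;>
          rcases hv with rfl | rfl | rfl | rfl | rfl <;>
          simp [cc3, Set.mem_insert_iff, sup_A3_T1, sup_T1_A3, inf_A3_T1, inf_T1_A3,
            sup_A3_T2, sup_T2_A3, inf_A3_T2, inf_T2_A3, sup_T1_T2, sup_T2_T1,
            inf_T1_T2, inf_T2_T1]
      · rw [show cc3 5 = {(⊤ : Subgroup (Perm (Fin 3))), ⊥, A3, T1, T2} from rfl,
          Nat.card_coe_set_eq,
          Set.ncard_insert_of_notMem (by
            simp only [Set.mem_insert_iff, Set.mem_singleton_iff]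
            push_neg
            exact ⟨d5.symm, d15.symm, d9.symm, d12.symm⟩) (Set.toFinite _),
          Set.ncard_insert_of_notMem (by
            simp only [Set.mem_insert_iff, Set.mem_singleton_iff]
            push_neg
            exact ⟨d4, d1, d2⟩) (Set.toFinite _),
          Set.ncard_insert_of_notMem (by
            simp only [Set.mem_insert_iff, Set.mem_singleton_iff]
            push_neg
            exact ⟨d8.symm, d11.symm⟩) (Set.toFinite _),
          Set.ncard_pair d6]
    · refine ⟨isSublattice_univ, ?_⟩
      rw [show cc3 6 = (Set.univ : Set (Subgroup (Perm (Fin 3)))) from rfl,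
        card_coe_univ, card_eq]
  · intro i h1 h2
    rw [card_eq] at h2
    interval_cases i <;> intro u hu
    · rcases hu with rfl
      simp [cc3, Set.mem_insert_iff]
    · rcases hu with rfl | rfl <;> simp [cc3, Set.mem_insert_iff]
    · rcases hu with rfl | rfl | rfl <;> simp [cc3, Set.mem_insert_iff]
    · rcases hu with rfl | rfl | rfl | rfl <;> simp [cc3, Set.mem_insert_iff]
    · exact Set.mem_univ u
  · rw [card_eq]
    rfl

end Lattice3

end S3


namespace S4

abbrev s01 : Perm (Fin 4) := swap 0 1
abbrev s02 : Perm (Fin 4) := swap 0 2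
abbrev s03 : Perm (Fin 4) := swap 0 3
abbrev s12 : Perm (Fin 4) := swap 1 2
abbrev s13 : Perm (Fin 4) := swap 1 3
abbrev s23 : Perm (Fin 4) := swap 2 3

abbrev X0 : Subgroup (Perm (Fin 4)) := sg {1, s02} (by decide) (by decide) (by decide)
abbrev X1 : Subgroup (Perm (Fin 4)) := sg {1, s01} (by decide) (by decide) (by decide)
abbrev X2 : Subgroup (Perm (Fin 4)) := sg {1, s03} (by decide) (by decide) (by decide)
abbrev Y0 : Subgroup (Perm (Fin 4)) := sg {1, s01, s02, s12, s01*s12, s12*s01} (by decide) (by decide) (by decide)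
abbrev Y1 : Subgroup (Perm (Fin 4)) := sg {1, s01, s03, s13, s01*s13, s13*s01} (by decide) (by decide) (by decide)
abbrev Y2 : Subgroup (Perm (Fin 4)) := sg {1, s02, s03, s23, s02*s23, s23*s02} (by decide) (by decide) (by decide)


def xs : Fin 3 → Subgroup (Perm (Fin 4)) := ![X0, X1, X2]
def ys : Fin 3 → Subgroup (Perm (Fin 4)) := ![Y0, Y1, Y2]

instance (i : Fin 3) (g : Perm (Fin 4)) : Decidable (g ∈ xs i) :=
  match i with
  | 0 => inferInstanceAs (Decidable (g ∈ X0))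
  | 1 => inferInstanceAs (Decidable (g ∈ X1))
  | 2 => inferInstanceAs (Decidable (g ∈ X2))

instance (i : Fin 3) (g : Perm (Fin 4)) : Decidable (g ∈ ys i) :=
  match i with
  | 0 => inferInstanceAs (Decidable (g ∈ Y0))
  | 1 => inferInstanceAs (Decidable (g ∈ Y1))
  | 2 => inferInstanceAs (Decidable (g ∈ Y2))

theorem crown4 : IsCrown xs ys := by
  unfold IsCrown
  refine ⟨by norm_num, fun a b => ?_, fun a b => ?_, ?_, ?_, ?_, ?_, ?_⟩
  · fin_cases a <;> fin_cases b <;> intro h <;> first | rfl | exact absurd h (by decide)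
  · fin_cases a <;> fin_cases b <;> intro h <;> first | rfl | exact absurd h (by decide)
  all_goals decide
end S4


lemma crown_map {G H : Type*} [Group G] [Group H] (f : G →* H) (hf : Function.Injective f)
    {m : ℕ} {x y : Fin m → Subgroup G} (h : IsCrown x y) :
    IsCrown (fun i => (x i).map f) (fun i => (y i).map f) := by
  obtain ⟨h1, h2, h3, h4, h5, h6, h7, h8⟩ := h
  have hmle : ∀ {A B : Subgroup G}, A.map f ≤ B.map f ↔ A ≤ B :=
    fun {A B} => Subgroup.map_le_map_iff_of_injective hf
  have hminj : Function.Injective (Subgroup.map f) := Subgroup.map_injective hf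
  refine ⟨h1, fun a b hab => h2 (hminj hab), fun a b hab => h3 (hminj hab),
    fun i j hij => h4 i j (hminj hij),
    fun i j hij => h5 i j (hmle.mp hij),
    fun i j hij => h6 i j (hmle.mp hij),
    fun i j hij => h7 i j (hmle.mp hij),
    fun i j => by rw [hmle]; exact h8 i j⟩

lemma perm_hom (n : ℕ) (h : 4 ≤ n) :
    ∃ f : Equiv.Perm (Fin 4) →* Equiv.Perm (Fin n), Function.Injective f :=
  ⟨Equiv.Perm.viaEmbeddingHom (Fin.castLEEmb h),
   Equiv.Perm.viaEmbeddingHom_injective (Fin.castLEEmb h)⟩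

/-! ### Main theorem -/

/-- The subgroup lattice of the symmetric group `Sₙ` is dismantlable iff `n ≤ 3`. -/
theorem stmt8 (n : ℕ) :
    Dismantlable (Subgroup (Equiv.Perm (Fin n))) ↔ n ≤ 3 := by
  constructor
  · intro hd
    by_contra hn
    push_neg at hn
    have h4 : 4 ≤ n := hn
    obtain ⟨f, hf⟩ := perm_hom n h4
    have hcrown : CrownIn (Set.univ : Set (Subgroup (Equiv.Perm (Fin n)))) :=
      ⟨3, _, _, crown_map f hf S4.crown4, fun _ => Set.mem_univ _, fun _ => Set.mem_univ _⟩
    exact not_dismantlable_of_crown hcrown hd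
  · intro hn
    interval_cases n
    · haveI : Nonempty (Subgroup (Equiv.Perm (Fin 0))) := ⟨⊥⟩
      exact dismantlable_of_subsingleton (subgroup_subsingleton (by decide))
    · haveI : Nonempty (Subgroup (Equiv.Perm (Fin 1))) := ⟨⊥⟩
      exact dismantlable_of_subsingleton (subgroup_subsingleton (by decide))
    · exact S2.dismantlable
    · exact S3.dismantlable
end
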